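/- arXiv:2403.03365 — 8 statements merged into one kernel-verified Lean document; each statement's English description precedes it below -/
import Mathlib

section
/- Let A, B be finite sets and λ ⊆ 𝒫(A) × 𝒫(B) a relation. Then λ satisfies the relational exchange axiom if and only if the associated collection α_λ := { (A \ X) ∪ Y | (X,Y) ∈ λ } of subsets of the disjoint union A ⊔ B is either empty or a matroid on A ⊔ B. -/
open Finset

def Exchangeable {A B : Type*} [DecidableEq A] [DecidableEq B]
    (r : Finset A → Finset B → Prop) (X : Finset A) (Y : Finset B) :
    A ⊕ B → A ⊕ B → Prop
  | Sum.inl a, Sum.inl a' =>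
      a = a' ∨
      (a ∈ X ∧ a' ∉ X ∧ r (insert a' (X.erase a)) Y) ∨
      (a ∉ X ∧ a' ∈ X ∧ r (insert a (X.erase a')) Y)
  | Sum.inl a, Sum.inr b =>
      (a ∈ X ∧ b ∈ Y ∧ r (X.erase a) (Y.erase b)) ∨
      (a ∉ X ∧ b ∉ Y ∧ r (insert a X) (insert b Y))
  | Sum.inr b, Sum.inl a =>
      (b ∈ Y ∧ a ∈ X ∧ r (X.erase a) (Y.erase b)) ∨
      (b ∉ Y ∧ a ∉ X ∧ r (insert a X) (insert b Y))
  | Sum.inr b, Sum.inr b' =>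
      b = b' ∨
      (b ∈ Y ∧ b' ∉ Y ∧ r X (insert b' (Y.erase b))) ∨
      (b ∉ Y ∧ b' ∈ Y ∧ r X (insert b (Y.erase b')))

def InBar {A B : Type*} (X : Finset A) (Y : Finset B) : A ⊕ B → Prop
  | Sum.inl a => a ∉ X
  | Sum.inr b => b ∈ Y

def ExchAxiom {A B : Type*} [DecidableEq A] [DecidableEq B]
    (r : Finset A → Finset B → Prop) : Prop :=
  ∀ X Y X' Y', r X Y → r X' Y' → ∀ u, InBar X Y u →
    ∃ v, InBar X' Y' v ∧ Exchangeable r X Y u v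


def IsMatroid {E : Type*} [DecidableEq E] (α : Finset E → Prop) : Prop :=
  (∃ X, α X) ∧
  ∀ X X', α X → α X' → ∀ x ∈ X, x ∉ X' →
    ∃ x', x' ∈ X' ∧ x' ∉ X ∧ α (insert x' (X.erase x))

section
variable {A B : Type*} [DecidableEq A] [DecidableEq B] [Fintype A]

def assocSet (X : Finset A) (Y : Finset B) : Finset (A ⊕ B) :=
  Xᶜ.map Function.Embedding.inl ∪ Y.map Function.Embedding.inr

lemma inl_mem_assocSet {X : Finset A} {Y : Finset B} {a : A} :
    Sum.inl a ∈ assocSet X Y ↔ a ∉ X := by simp [assocSet]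

lemma inr_mem_assocSet {X : Finset A} {Y : Finset B} {b : B} :
    Sum.inr b ∈ assocSet X Y ↔ b ∈ Y := by simp [assocSet]

lemma assocSet_inj {X X' : Finset A} {Y Y' : Finset B}
    (h : assocSet X Y = assocSet X' Y') : X = X' ∧ Y = Y' := by
  constructor
  · ext a
    have := Finset.ext_iff.mp h (Sum.inl a)
    rw [inl_mem_assocSet, inl_mem_assocSet] at this
    tauto
  · ext b
    have := Finset.ext_iff.mp h (Sum.inr b)
    rwa [inr_mem_assocSet, inr_mem_assocSet] at this

lemma swap1 {X : Finset A} {Y : Finset B} {a a' : A} (ha : a ∉ X) (ha' : a' ∈ X) :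
    assocSet (insert a (X.erase a')) Y
      = insert (Sum.inl a') ((assocSet X Y).erase (Sum.inl a)) := by
  ext x
  cases x <;> simp [inl_mem_assocSet, inr_mem_assocSet]
  rename_i c
  by_cases h1 : c = a <;> by_cases h2 : c = a' <;> subst_vars <;> tauto

lemma swap2 {X : Finset A} {Y : Finset B} {a : A} {b : B} :
    assocSet (insert a X) (insert b Y)
      = insert (Sum.inr b) ((assocSet X Y).erase (Sum.inl a)) := by
  ext x
  cases x <;> simp [inl_mem_assocSet, inr_mem_assocSet] <;> tauto

lemma swap3 {X : Finset A} {Y : Finset B} {a : A} {b : B} :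
    assocSet (X.erase a) (Y.erase b)
      = insert (Sum.inl a) ((assocSet X Y).erase (Sum.inr b)) := by
  ext x
  cases x <;> simp [inl_mem_assocSet, inr_mem_assocSet] <;> tauto

lemma swap4 {X : Finset A} {Y : Finset B} {b b' : B} :
    assocSet X (insert b' (Y.erase b))
      = insert (Sum.inr b') ((assocSet X Y).erase (Sum.inr b)) := by
  ext x
  cases x <;> simp [inl_mem_assocSet, inr_mem_assocSet]
end

/-- A relation on `𝒫(A) × 𝒫(B)` satisfies the relational exchange axiom iff
its associated collection `α_λ = {(A \ X) ∪ Y | (X,Y) ∈ λ}` of subsets of `A ⊔ B`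
is empty or a matroid. -/
theorem exchAxiom_iff_associated_matroid {A B : Type*}
    [DecidableEq A] [DecidableEq B] [Fintype A]
    (r : Finset A → Finset B → Prop) :
    ExchAxiom r ↔
      ((∀ S : Finset (A ⊕ B),
          ¬ (∃ X Y, r X Y ∧
              S = Xᶜ.map Function.Embedding.inl ∪ Y.map Function.Embedding.inr)) ∨
        IsMatroid (fun S : Finset (A ⊕ B) => ∃ X Y, r X Y ∧
          S = Xᶜ.map Function.Embedding.inl ∪ Y.map Function.Embedding.inr)) := by
  have hS : ∀ (X : Finset A) (Y : Finset B),
      Xᶜ.map Function.Embedding.inl ∪ Y.map Function.Embedding.inr = assocSet X Y :=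
    fun _ _ => rfl
  constructor
  · intro hex
    by_cases hne : ∃ X Y, r X Y
    · right
      obtain ⟨X₁, Y₁, h₁⟩ := hne
      refine ⟨⟨assocSet X₁ Y₁, X₁, Y₁, h₁, rfl⟩, ?_⟩
      rintro S S' ⟨X, Y, hXY, rfl⟩ ⟨X', Y', hX'Y', rfl⟩ x hx hx'
      simp only [hS] at hx hx' ⊢
      cases x with
      | inl a =>
        rw [inl_mem_assocSet] at hx hx'
        push_neg at hx'
        obtain ⟨v, hv, hxv⟩ := hex X Y X' Y' hXY hX'Y' (Sum.inl a) hx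
        cases v with
        | inl a' =>
          simp only [InBar] at hv
          rcases hxv with rfl | ⟨h, _⟩ | ⟨_, ha', hr⟩
          · exact absurd hx' hv
          · exact absurd h hx
          · refine ⟨Sum.inl a', ?_, ?_, insert a (X.erase a'), Y, hr, ?_⟩
            · rw [inl_mem_assocSet]; exact hv
            · rw [inl_mem_assocSet]; simpa using ha'
            · exact (swap1 hx ha').symm
        | inr b =>
          simp only [InBar] at hv
          rcases hxv with ⟨h, _⟩ | ⟨_, hb, hr⟩
          · exact absurd h hx
          · refine ⟨Sum.inr b, ?_, ?_, insert a X, insert b Y, hr, ?_⟩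
            · rw [inr_mem_assocSet]; exact hv
            · rw [inr_mem_assocSet]; simpa using hb
            · exact swap2.symm
      | inr b =>
        rw [inr_mem_assocSet] at hx hx'
        obtain ⟨v, hv, hxv⟩ := hex X Y X' Y' hXY hX'Y' (Sum.inr b) hx
        cases v with
        | inl a =>
          simp only [InBar] at hv
          rcases hxv with ⟨_, ha, hr⟩ | ⟨h, _⟩
          · refine ⟨Sum.inl a, ?_, ?_, X.erase a, Y.erase b, hr, ?_⟩
            · rw [inl_mem_assocSet]; exact hv
            · rw [inl_mem_assocSet]; simpa using ha
            · exact swap3.symm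
          · exact absurd hx h
        | inr b' =>
          simp only [InBar] at hv
          rcases hxv with rfl | ⟨_, hb', hr⟩ | ⟨h, _⟩
          · exact absurd hv hx'
          · refine ⟨Sum.inr b', ?_, ?_, X, insert b' (Y.erase b), hr, ?_⟩
            · rw [inr_mem_assocSet]; exact hv
            · rw [inr_mem_assocSet]; simpa using hb'
            · exact swap4.symm
          · exact absurd hx h
    · left
      rintro S ⟨X, Y, hXY, _⟩
      exact hne ⟨X, Y, hXY⟩
  · rintro (hemp | ⟨_, hmat⟩) X Y X' Y' hXY hX'Y' u hu
    · exact absurd ⟨X, Y, hXY, rfl⟩ (hemp _)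
    · by_cases hu' : InBar X' Y' u
      · refine ⟨u, hu', ?_⟩
        cases u with
        | inl a => exact Or.inl rfl
        | inr b => exact Or.inl rfl
      · have hmem : u ∈ assocSet X Y := by
          cases u with
          | inl a => rw [inl_mem_assocSet]; exact hu
          | inr b => rw [inr_mem_assocSet]; exact hu
        have hnmem : u ∉ assocSet X' Y' := by
          cases u with
          | inl a =>
            rw [inl_mem_assocSet]
            simpa [InBar, not_not] using hu'
          | inr b =>
            rw [inr_mem_assocSet]
            simpa [InBar] using hu'
        obtain ⟨x', hx'mem, hx'nmem, X₀, Y₀, h₀, heq⟩ :=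
          hmat (assocSet X Y) (assocSet X' Y') ⟨X, Y, hXY, rfl⟩ ⟨X', Y', hX'Y', rfl⟩ u hmem hnmem
        rw [hS] at heq
        cases u with
        | inl a =>
          have ha : a ∉ X := by rwa [inl_mem_assocSet] at hmem
          cases x' with
          | inl a' =>
            have ha'1 : a' ∉ X' := by rwa [inl_mem_assocSet] at hx'mem
            have ha'2 : a' ∈ X := by
              by_contra h
              exact hx'nmem (inl_mem_assocSet.mpr h)
            have : assocSet (insert a (X.erase a')) Y = assocSet X₀ Y₀ := by
              rw [swap1 ha ha'2]; exact heq
            obtain ⟨e1, e2⟩ := assocSet_inj this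
            exact ⟨Sum.inl a', ha'1, Or.inr (Or.inr ⟨ha, ha'2, e1 ▸ e2 ▸ h₀⟩)⟩
          | inr b =>
            have hb1 : b ∈ Y' := by rwa [inr_mem_assocSet] at hx'mem
            have hb2 : b ∉ Y := fun h => hx'nmem (inr_mem_assocSet.mpr h)
            have : assocSet (insert a X) (insert b Y) = assocSet X₀ Y₀ := by
              rw [swap2]; exact heq
            obtain ⟨e1, e2⟩ := assocSet_inj this
            exact ⟨Sum.inr b, hb1, Or.inr ⟨ha, hb2, e1 ▸ e2 ▸ h₀⟩⟩
        | inr b =>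
          have hb : b ∈ Y := by rwa [inr_mem_assocSet] at hmem
          cases x' with
          | inl a =>
            have ha1 : a ∉ X' := by rwa [inl_mem_assocSet] at hx'mem
            have ha2 : a ∈ X := by
              by_contra h
              exact hx'nmem (inl_mem_assocSet.mpr h)
            have : assocSet (X.erase a) (Y.erase b) = assocSet X₀ Y₀ := by
              rw [swap3]; exact heq
            obtain ⟨e1, e2⟩ := assocSet_inj this
            exact ⟨Sum.inl a, ha1, Or.inl ⟨hb, ha2, e1 ▸ e2 ▸ h₀⟩⟩
          | inr b' =>
            have hb'1 : b' ∈ Y' := by rwa [inr_mem_assocSet] at hx'mem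
            have hb'2 : b' ∉ Y := fun h => hx'nmem (inr_mem_assocSet.mpr h)
            have : assocSet X (insert b' (Y.erase b)) = assocSet X₀ Y₀ := by
              rw [swap4]; exact heq
            obtain ⟨e1, e2⟩ := assocSet_inj this
            exact ⟨Sum.inr b', hb'1, Or.inr (Or.inl ⟨hb, hb'2, e1 ▸ e2 ▸ h₀⟩)⟩
end

section
/- Let A, B, C be finite sets and let λ ⊆ 𝒫(A) × 𝒫(B), μ ⊆ 𝒫(B) × 𝒫(C) be relations satisfying the exchange axiom. Then the composition λ ∘ μ, defined by (X,Z) ∈ λ ∘ μ iff there exists Y ⊆ B with (X,Y) ∈ λ and (Y,Z) ∈ μ, also satisfies the exchange axiom. -/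
open Finset

def RelComp {A B C : Type*} (r : Finset A → Finset B → Prop)
    (s : Finset B → Finset C → Prop) : Finset A → Finset C → Prop :=
  fun X Z => ∃ Y, r X Y ∧ s Y Z

lemma sd_erase {B : Type*} [DecidableEq B] {W Y' : Finset B} {b : B}
    (h1 : b ∈ W) (h2 : b ∉ Y') :
    symmDiff (W.erase b) Y' = (symmDiff W Y').erase b := by
  ext x
  simp only [mem_symmDiff, mem_erase]
  by_cases hx : x = b
  · subst hx; simp [h1, h2]
  · simp [hx]

lemma sd_insert {B : Type*} [DecidableEq B] {Y Y' : Finset B} {b : B}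
    (h1 : b ∉ Y) (h2 : b ∈ Y') :
    symmDiff (insert b Y) Y' = (symmDiff Y Y').erase b := by
  ext x
  simp only [mem_symmDiff, mem_erase, mem_insert]
  by_cases hx : x = b
  · subst hx; simp [h1, h2]
  · simp [hx]

lemma auxA {A B C : Type*} [DecidableEq A] [DecidableEq B] [DecidableEq C]
    (r : Finset A → Finset B → Prop) (s : Finset B → Finset C → Prop)
    (hr : ExchAxiom r) (hs : ExchAxiom s)
    (X X' : Finset A) (Y' : Finset B) (Z Z' : Finset C) (a : A)
    (hX'Y' : r X' Y') (hY'Z' : s Y' Z') (ha : a ∉ X) :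
    ∀ k : ℕ,
      (∀ Y, r X Y → s Y Z → (symmDiff Y Y').card < k →
        ∃ v, InBar X' Z' v ∧ Exchangeable (RelComp r s) X Z (Sum.inl a) v) ∧
      (∀ W b, b ∈ W → b ∈ Y' → r (insert a X) W → s (W.erase b) Z →
        (symmDiff W Y').card < k →
        ∃ v, InBar X' Z' v ∧ Exchangeable (RelComp r s) X Z (Sum.inl a) v) := by
  intro k
  induction k using Nat.strong_induction_on with
  | _ k IH =>
  constructor
  · -- Outer
    intro Y hXY hYZ hcard
    obtain ⟨v, hvb, hex⟩ := hr X Y X' Y' hXY hX'Y' (Sum.inl a) ha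
    cases v with
    | inl a' =>
      have hvb' : a' ∉ X' := hvb
      rcases hex with h | h | h
      · exact ⟨Sum.inl a', hvb', Or.inl h⟩
      · exact absurd h.1 ha
      · exact ⟨Sum.inl a', hvb', Or.inr (Or.inr ⟨ha, h.2.1, Y, h.2.2, hYZ⟩)⟩
    | inr b =>
      have hbY' : b ∈ Y' := hvb
      rcases hex with h | h
      · exact absurd h.1 ha
      obtain ⟨-, hbY, hrab⟩ := h
      have hmem : b ∈ symmDiff Y Y' := mem_symmDiff.mpr (Or.inr ⟨hbY', hbY⟩)
      have hpos : 0 < (symmDiff Y Y').card := card_pos.mpr ⟨b, hmem⟩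
      refine (IH (k - 1) (by omega)).2 (insert b Y) b (mem_insert_self _ _) hbY' hrab ?_ ?_
      · rw [erase_insert hbY]; exact hYZ
      · rw [sd_insert hbY hbY', card_erase_of_mem hmem]; omega
  · -- Inner
    intro W b hbW hbY' hrW hsW hcard
    obtain ⟨w, hwb, hex⟩ := hs (W.erase b) Z Y' Z' hsW hY'Z' (Sum.inl b) (notMem_erase b W)
    cases w with
    | inr c =>
      have hcZ' : c ∈ Z' := hwb
      rcases hex with h | h
      · exact absurd h.1 (notMem_erase b W)
      obtain ⟨-, hcZ, hs'⟩ := h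
      rw [insert_erase hbW] at hs'
      exact ⟨Sum.inr c, hcZ', Or.inr ⟨ha, hcZ, W, hrW, hs'⟩⟩
    | inl b' =>
      have hb'Y' : b' ∉ Y' := hwb
      rcases hex with h | h | h
      · exact absurd (h ▸ hbY') hb'Y'
      · exact absurd h.1 (notMem_erase b W)
      obtain ⟨-, hb'e, hs2⟩ := h
      have hb'W : b' ∈ W := mem_of_mem_erase hb'e
      have hb'b : b' ≠ b := ne_of_mem_erase hb'e
      have heq : insert b ((W.erase b).erase b') = W.erase b' := by
        rw [erase_right_comm]
        exact insert_erase (mem_erase.mpr ⟨Ne.symm hb'b, hbW⟩)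
      rw [heq] at hs2
      obtain ⟨w', hw'b, hex'⟩ := hr (insert a X) W X' Y' hrW hX'Y' (Sum.inr b') hb'W
      have hm1 : b' ∈ symmDiff W Y' := mem_symmDiff.mpr (Or.inl ⟨hb'W, hb'Y'⟩)
      have hpos : 0 < (symmDiff W Y').card := card_pos.mpr ⟨b', hm1⟩
      cases w' with
      | inl a'' =>
        have ha'' : a'' ∉ X' := hw'b
        rcases hex' with h' | h'
        · obtain ⟨-, haix, hr2⟩ := h'
          by_cases haa : a'' = a
          · subst haa
            rw [erase_insert ha] at hr2
            refine (IH (k - 1) (by omega)).1 (W.erase b') hr2 ?_ ?_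
            · exact hs2
            · rw [sd_erase hb'W hb'Y', card_erase_of_mem hm1]; omega
          · have haX : a'' ∈ X := (mem_insert.mp haix).resolve_left haa
            rw [erase_insert_of_ne (fun h => haa h.symm)] at hr2
            exact ⟨Sum.inl a'', ha'', Or.inr (Or.inr ⟨ha, haX, W.erase b', hr2, hs2⟩)⟩
        · exact absurd hb'W h'.1
      | inr b'' =>
        have hb'' : b'' ∈ Y' := hw'b
        rcases hex' with h' | h' | h'
        · exact absurd hb'' (h' ▸ hb'Y')
        · obtain ⟨-, hb''W, hr3⟩ := h'
          have hb''e : b'' ∉ W.erase b' := fun h => hb''W (mem_of_mem_erase h)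
          have hm2 : b'' ∈ (symmDiff W Y').erase b' :=
            mem_erase.mpr ⟨fun h => hb''W (h ▸ hb'W), mem_symmDiff.mpr (Or.inr ⟨hb'', hb''W⟩)⟩
          have hpos2 : 0 < ((symmDiff W Y').erase b').card := card_pos.mpr ⟨b'', hm2⟩
          rw [card_erase_of_mem hm1] at hpos2
          refine (IH (k - 2) (by omega)).2 (insert b'' (W.erase b')) b'' (mem_insert_self _ _)
            hb'' hr3 ?_ ?_
          · rw [erase_insert hb''e]; exact hs2
          · rw [sd_insert hb''e hb'', sd_erase hb'W hb'Y', card_erase_of_mem hm2,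
              card_erase_of_mem hm1]
            omega
        · exact absurd hb'W h'.1

lemma auxC {A B C : Type*} [DecidableEq A] [DecidableEq B] [DecidableEq C]
    (r : Finset A → Finset B → Prop) (s : Finset B → Finset C → Prop)
    (hr : ExchAxiom r) (hs : ExchAxiom s)
    (X X' : Finset A) (Y' : Finset B) (Z Z' : Finset C) (c : C)
    (hX'Y' : r X' Y') (hY'Z' : s Y' Z') (hc : c ∈ Z) :
    ∀ k : ℕ,
      (∀ Y, r X Y → s Y Z → (symmDiff Y Y').card < k →
        ∃ v, InBar X' Z' v ∧ Exchangeable (RelComp r s) X Z (Sum.inr c) v) ∧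
      (∀ W b, b ∈ W → b ∈ Y' → r X W → s (W.erase b) (Z.erase c) →
        (symmDiff W Y').card < k →
        ∃ v, InBar X' Z' v ∧ Exchangeable (RelComp r s) X Z (Sum.inr c) v) := by
  intro k
  induction k using Nat.strong_induction_on with
  | _ k IH =>
  have houter : ∀ Y, r X Y → s Y Z → (symmDiff Y Y').card < k →
      ∃ v, InBar X' Z' v ∧ Exchangeable (RelComp r s) X Z (Sum.inr c) v := by
    intro Y hXY hYZ hcard
    obtain ⟨w, hwb, hex⟩ := hs Y Z Y' Z' hYZ hY'Z' (Sum.inr c) hc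
    cases w with
    | inr c' =>
      have hc'Z' : c' ∈ Z' := hwb
      rcases hex with h | h | h
      · exact ⟨Sum.inr c', hc'Z', Or.inl h⟩
      · exact ⟨Sum.inr c', hc'Z', Or.inr (Or.inl ⟨h.1, h.2.1, Y, hXY, h.2.2⟩)⟩
      · exact absurd hc h.1
    | inl b =>
      have hbY' : b ∉ Y' := hwb
      rcases hex with h | h
      · obtain ⟨-, hbY, hs1⟩ := h
        obtain ⟨w', hw'b, hex'⟩ := hr X Y X' Y' hXY hX'Y' (Sum.inr b) hbY
        cases w' with
        | inl a' =>
          have ha' : a' ∉ X' := hw'b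
          rcases hex' with h' | h'
          · exact ⟨Sum.inl a', ha', Or.inl ⟨hc, h'.2.1, Y.erase b, h'.2.2, hs1⟩⟩
          · exact absurd hbY h'.1
        | inr b' =>
          have hb'Y' : b' ∈ Y' := hw'b
          rcases hex' with h' | h' | h'
          · exact absurd hb'Y' (h' ▸ hbY')
          · obtain ⟨-, hb'Y, hr1⟩ := h'
            have hbm : b ∈ symmDiff Y Y' := mem_symmDiff.mpr (Or.inl ⟨hbY, hbY'⟩)
            have hb'e : b' ∉ Y.erase b := fun h => hb'Y (mem_of_mem_erase h)
            have hb'm : b' ∈ (symmDiff Y Y').erase b :=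
              mem_erase.mpr ⟨fun h => hbY' (h ▸ hb'Y'), mem_symmDiff.mpr (Or.inr ⟨hb'Y', hb'Y⟩)⟩
            have hpos : 0 < (symmDiff Y Y').card := card_pos.mpr ⟨b, hbm⟩
            have hpos2 : 0 < ((symmDiff Y Y').erase b).card := card_pos.mpr ⟨b', hb'm⟩
            rw [card_erase_of_mem hbm] at hpos2
            refine (IH (k - 2) (by omega)).2 (insert b' (Y.erase b)) b' (mem_insert_self _ _)
              hb'Y' hr1 ?_ ?_
            · rw [erase_insert hb'e]; exact hs1
            · rw [sd_insert hb'e hb'Y', sd_erase hbY hbY', card_erase_of_mem hb'm,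
                card_erase_of_mem hbm]
              omega
          · exact absurd hbY h'.1
      · exact absurd hc h.1
  refine ⟨houter, ?_⟩
  intro W b hbW hbY' hrW hsW hcard
  obtain ⟨w, hwb, hex⟩ := hs (W.erase b) (Z.erase c) Y' Z' hsW hY'Z' (Sum.inl b) (notMem_erase b W)
  cases w with
  | inr c' =>
    have hc'Z' : c' ∈ Z' := hwb
    rcases hex with h | h
    · exact absurd h.1 (notMem_erase b W)
    obtain ⟨-, hc'e, hs2⟩ := h
    rw [insert_erase hbW] at hs2
    by_cases hcc : c' = c
    · subst hcc
      rw [insert_erase hc] at hs2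
      exact houter W hrW hs2 hcard
    · have hc'Z : c' ∉ Z := fun h => hc'e (mem_erase.mpr ⟨hcc, h⟩)
      exact ⟨Sum.inr c', hc'Z', Or.inr (Or.inl ⟨hc, hc'Z, W, hrW, hs2⟩)⟩
  | inl b₂ =>
    have hb₂Y' : b₂ ∉ Y' := hwb
    rcases hex with h | h | h
    · exact absurd (h ▸ hbY') hb₂Y'
    · exact absurd h.1 (notMem_erase b W)
    obtain ⟨-, hb₂e, hs3⟩ := h
    have hb₂W : b₂ ∈ W := mem_of_mem_erase hb₂e
    have hb₂b : b₂ ≠ b := ne_of_mem_erase hb₂e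
    have heq : insert b ((W.erase b).erase b₂) = W.erase b₂ := by
      rw [erase_right_comm]
      exact insert_erase (mem_erase.mpr ⟨Ne.symm hb₂b, hbW⟩)
    rw [heq] at hs3
    obtain ⟨w', hw'b, hex'⟩ := hr X W X' Y' hrW hX'Y' (Sum.inr b₂) hb₂W
    have hm1 : b₂ ∈ symmDiff W Y' := mem_symmDiff.mpr (Or.inl ⟨hb₂W, hb₂Y'⟩)
    have hpos : 0 < (symmDiff W Y').card := card_pos.mpr ⟨b₂, hm1⟩
    cases w' with
    | inl a' =>
      have ha' : a' ∉ X' := hw'b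
      rcases hex' with h' | h'
      · exact ⟨Sum.inl a', ha', Or.inl ⟨hc, h'.2.1, W.erase b₂, h'.2.2, hs3⟩⟩
      · exact absurd hb₂W h'.1
    | inr b₃ =>
      have hb₃Y' : b₃ ∈ Y' := hw'b
      rcases hex' with h' | h' | h'
      · exact absurd hb₃Y' (h' ▸ hb₂Y')
      · obtain ⟨-, hb₃W, hr3⟩ := h'
        have hb₃e : b₃ ∉ W.erase b₂ := fun h => hb₃W (mem_of_mem_erase h)
        have hm2 : b₃ ∈ (symmDiff W Y').erase b₂ :=
          mem_erase.mpr ⟨fun h => hb₃W (h ▸ hb₂W), mem_symmDiff.mpr (Or.inr ⟨hb₃Y', hb₃W⟩)⟩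
        have hpos2 : 0 < ((symmDiff W Y').erase b₂).card := card_pos.mpr ⟨b₃, hm2⟩
        rw [card_erase_of_mem hm1] at hpos2
        refine (IH (k - 2) (by omega)).2 (insert b₃ (W.erase b₂)) b₃ (mem_insert_self _ _)
          hb₃Y' hr3 ?_ ?_
        · rw [erase_insert hb₃e]; exact hs3
        · rw [sd_insert hb₃e hb₃Y', sd_erase hb₂W hb₂Y', card_erase_of_mem hm2,
            card_erase_of_mem hm1]
          omega
      · exact absurd hb₂W h'.1

/-- The composition of two relations satisfying the exchange axiom satisfies
the exchange axiom. -/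
theorem exchAxiom_relComp {A B C : Type*} [DecidableEq A] [DecidableEq B] [DecidableEq C]
    (r : Finset A → Finset B → Prop) (s : Finset B → Finset C → Prop)
    (hr : ExchAxiom r) (hs : ExchAxiom s) :
    ExchAxiom (RelComp r s) := by
  intro X Z X' Z' hXZ hX'Z' u hu
  obtain ⟨Y, hXY, hYZ⟩ := hXZ
  obtain ⟨Y', hX'Y', hY'Z'⟩ := hX'Z'
  cases u with
  | inl a =>
    exact (auxA r s hr hs X X' Y' Z Z' a hX'Y' hY'Z' hu ((symmDiff Y Y').card + 1)).1
      Y hXY hYZ (Nat.lt_succ_self _)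
  | inr c =>
    exact (auxC r s hr hs X X' Y' Z Z' c hX'Y' hY'Z' hu ((symmDiff Y Y').card + 1)).1
      Y hXY hYZ (Nat.lt_succ_self _)
end

section
/- Let A, B, C, D be pairwise disjoint finite sets. If λ on 𝒫(A) × 𝒫(B) and μ on 𝒫(C) × 𝒫(D) both satisfy the exchange axiom, then the product relation λ × μ on 𝒫(A ⊔ C) × 𝒫(B ⊔ D), defined by ((X ∪ X'), (Y ∪ Y')) ∈ λ × μ iff (X,Y) ∈ λ and (X',Y') ∈ μ (where X ⊆ A, X' ⊆ C, Y ⊆ B, Y' ⊆ D), also satisfies the exchange axiom. -/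
open Finset

def ProdRel {A B C D : Type*} [DecidableEq A] [DecidableEq B] [DecidableEq C] [DecidableEq D]
    (r : Finset A → Finset B → Prop) (s : Finset C → Finset D → Prop) :
    Finset (A ⊕ C) → Finset (B ⊕ D) → Prop :=
  fun X Y => ∃ X₁ Y₁ X₂ Y₂, r X₁ Y₁ ∧ s X₂ Y₂ ∧
    X = X₁.map Function.Embedding.inl ∪ X₂.map Function.Embedding.inr ∧
    Y = Y₁.map Function.Embedding.inl ∪ Y₂.map Function.Embedding.inr

section Helpers
variable {A C : Type*} [DecidableEq A] [DecidableEq C]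

lemma mem_mu_inl (X₁ : Finset A) (X₂ : Finset C) (a : A) :
    Sum.inl a ∈ X₁.map Function.Embedding.inl ∪ X₂.map Function.Embedding.inr ↔ a ∈ X₁ := by
  simp

lemma mem_mu_inr (X₁ : Finset A) (X₂ : Finset C) (c : C) :
    Sum.inr c ∈ X₁.map Function.Embedding.inl ∪ X₂.map Function.Embedding.inr ↔ c ∈ X₂ := by
  simp

lemma erase_mu_inl (X₁ : Finset A) (X₂ : Finset C) (a : A) :
    (X₁.map Function.Embedding.inl ∪ X₂.map Function.Embedding.inr).erase (Sum.inl a) =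
      (X₁.erase a).map Function.Embedding.inl ∪ X₂.map Function.Embedding.inr := by
  ext x; cases x <;> simp [and_comm]

lemma erase_mu_inr (X₁ : Finset A) (X₂ : Finset C) (c : C) :
    (X₁.map Function.Embedding.inl ∪ X₂.map Function.Embedding.inr).erase (Sum.inr c) =
      X₁.map Function.Embedding.inl ∪ (X₂.erase c).map Function.Embedding.inr := by
  ext x; cases x <;> simp [and_comm]

lemma insert_mu_inl (X₁ : Finset A) (X₂ : Finset C) (a : A) :
    insert (Sum.inl a) (X₁.map Function.Embedding.inl ∪ X₂.map Function.Embedding.inr) =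
      (insert a X₁).map Function.Embedding.inl ∪ X₂.map Function.Embedding.inr := by
  ext x; cases x <;> simp

lemma insert_mu_inr (X₁ : Finset A) (X₂ : Finset C) (c : C) :
    insert (Sum.inr c) (X₁.map Function.Embedding.inl ∪ X₂.map Function.Embedding.inr) =
      X₁.map Function.Embedding.inl ∪ (insert c X₂).map Function.Embedding.inr := by
  ext x; cases x <;> simp

end Helpers


section Lift
variable {A B C D : Type*} [DecidableEq A] [DecidableEq B] [DecidableEq C] [DecidableEq D]
  {r : Finset A → Finset B → Prop} {s : Finset C → Finset D → Prop}
  {X₁ : Finset A} {Y₁ : Finset B} {X₂ : Finset C} {Y₂ : Finset D}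

lemma inBar_lift_left {u : A ⊕ B} (h : InBar X₁ Y₁ u) :
    InBar (X₁.map Function.Embedding.inl ∪ X₂.map Function.Embedding.inr)
      (Y₁.map Function.Embedding.inl ∪ Y₂.map Function.Embedding.inr)
      (Sum.map Sum.inl Sum.inl u) := by
  cases u <;> simpa [InBar, mem_mu_inl] using h

lemma inBar_lift_right {u : C ⊕ D} (h : InBar X₂ Y₂ u) :
    InBar (X₁.map Function.Embedding.inl ∪ X₂.map Function.Embedding.inr)
      (Y₁.map Function.Embedding.inl ∪ Y₂.map Function.Embedding.inr)
      (Sum.map Sum.inr Sum.inr u) := by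
  cases u <;> simpa [InBar, mem_mu_inr] using h

lemma exch_lift_left (hs : s X₂ Y₂) {u v : A ⊕ B} (h : Exchangeable r X₁ Y₁ u v) :
    Exchangeable (ProdRel r s)
      (X₁.map Function.Embedding.inl ∪ X₂.map Function.Embedding.inr)
      (Y₁.map Function.Embedding.inl ∪ Y₂.map Function.Embedding.inr)
      (Sum.map Sum.inl Sum.inl u) (Sum.map Sum.inl Sum.inl v) := by
  cases u with
  | inl a => cases v with
    | inl a' =>
      rcases h with rfl | ⟨h1, h2, h3⟩ | ⟨h1, h2, h3⟩
      · exact Or.inl rfl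
      · refine Or.inr (Or.inl ⟨(mem_mu_inl ..).mpr h1, by simpa [mem_mu_inl] using h2, ?_⟩)
        rw [erase_mu_inl, insert_mu_inl]
        exact ⟨_, _, _, _, h3, hs, rfl, rfl⟩
      · refine Or.inr (Or.inr ⟨by simpa [mem_mu_inl] using h1, (mem_mu_inl ..).mpr h2, ?_⟩)
        rw [erase_mu_inl, insert_mu_inl]
        exact ⟨_, _, _, _, h3, hs, rfl, rfl⟩
    | inr b =>
      rcases h with ⟨h1, h2, h3⟩ | ⟨h1, h2, h3⟩
      · refine Or.inl ⟨(mem_mu_inl ..).mpr h1, (mem_mu_inl ..).mpr h2, ?_⟩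
        rw [erase_mu_inl, erase_mu_inl]
        exact ⟨_, _, _, _, h3, hs, rfl, rfl⟩
      · refine Or.inr ⟨by simpa [mem_mu_inl] using h1, by simpa [mem_mu_inl] using h2, ?_⟩
        rw [insert_mu_inl, insert_mu_inl]
        exact ⟨_, _, _, _, h3, hs, rfl, rfl⟩
  | inr b => cases v with
    | inl a =>
      rcases h with ⟨h1, h2, h3⟩ | ⟨h1, h2, h3⟩
      · refine Or.inl ⟨(mem_mu_inl ..).mpr h1, (mem_mu_inl ..).mpr h2, ?_⟩
        rw [erase_mu_inl, erase_mu_inl]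
        exact ⟨_, _, _, _, h3, hs, rfl, rfl⟩
      · refine Or.inr ⟨by simpa [mem_mu_inl] using h1, by simpa [mem_mu_inl] using h2, ?_⟩
        rw [insert_mu_inl, insert_mu_inl]
        exact ⟨_, _, _, _, h3, hs, rfl, rfl⟩
    | inr b' =>
      rcases h with rfl | ⟨h1, h2, h3⟩ | ⟨h1, h2, h3⟩
      · exact Or.inl rfl
      · refine Or.inr (Or.inl ⟨(mem_mu_inl ..).mpr h1, by simpa [mem_mu_inl] using h2, ?_⟩)
        rw [erase_mu_inl, insert_mu_inl]
        exact ⟨_, _, _, _, h3, hs, rfl, rfl⟩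
      · refine Or.inr (Or.inr ⟨by simpa [mem_mu_inl] using h1, (mem_mu_inl ..).mpr h2, ?_⟩)
        rw [erase_mu_inl, insert_mu_inl]
        exact ⟨_, _, _, _, h3, hs, rfl, rfl⟩

lemma exch_lift_right (hrr : r X₁ Y₁) {u v : C ⊕ D} (h : Exchangeable s X₂ Y₂ u v) :
    Exchangeable (ProdRel r s)
      (X₁.map Function.Embedding.inl ∪ X₂.map Function.Embedding.inr)
      (Y₁.map Function.Embedding.inl ∪ Y₂.map Function.Embedding.inr)
      (Sum.map Sum.inr Sum.inr u) (Sum.map Sum.inr Sum.inr v) := by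
  cases u with
  | inl c => cases v with
    | inl c' =>
      rcases h with rfl | ⟨h1, h2, h3⟩ | ⟨h1, h2, h3⟩
      · exact Or.inl rfl
      · refine Or.inr (Or.inl ⟨(mem_mu_inr ..).mpr h1, by simpa [mem_mu_inr] using h2, ?_⟩)
        rw [erase_mu_inr, insert_mu_inr]
        exact ⟨_, _, _, _, hrr, h3, rfl, rfl⟩
      · refine Or.inr (Or.inr ⟨by simpa [mem_mu_inr] using h1, (mem_mu_inr ..).mpr h2, ?_⟩)
        rw [erase_mu_inr, insert_mu_inr]
        exact ⟨_, _, _, _, hrr, h3, rfl, rfl⟩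
    | inr d =>
      rcases h with ⟨h1, h2, h3⟩ | ⟨h1, h2, h3⟩
      · refine Or.inl ⟨(mem_mu_inr ..).mpr h1, (mem_mu_inr ..).mpr h2, ?_⟩
        rw [erase_mu_inr, erase_mu_inr]
        exact ⟨_, _, _, _, hrr, h3, rfl, rfl⟩
      · refine Or.inr ⟨by simpa [mem_mu_inr] using h1, by simpa [mem_mu_inr] using h2, ?_⟩
        rw [insert_mu_inr, insert_mu_inr]
        exact ⟨_, _, _, _, hrr, h3, rfl, rfl⟩
  | inr d => cases v with
    | inl c =>
      rcases h with ⟨h1, h2, h3⟩ | ⟨h1, h2, h3⟩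
      · refine Or.inl ⟨(mem_mu_inr ..).mpr h1, (mem_mu_inr ..).mpr h2, ?_⟩
        rw [erase_mu_inr, erase_mu_inr]
        exact ⟨_, _, _, _, hrr, h3, rfl, rfl⟩
      · refine Or.inr ⟨by simpa [mem_mu_inr] using h1, by simpa [mem_mu_inr] using h2, ?_⟩
        rw [insert_mu_inr, insert_mu_inr]
        exact ⟨_, _, _, _, hrr, h3, rfl, rfl⟩
    | inr d' =>
      rcases h with rfl | ⟨h1, h2, h3⟩ | ⟨h1, h2, h3⟩
      · exact Or.inl rfl
      · refine Or.inr (Or.inl ⟨(mem_mu_inr ..).mpr h1, by simpa [mem_mu_inr] using h2, ?_⟩)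
        rw [erase_mu_inr, insert_mu_inr]
        exact ⟨_, _, _, _, hrr, h3, rfl, rfl⟩
      · refine Or.inr (Or.inr ⟨by simpa [mem_mu_inr] using h1, (mem_mu_inr ..).mpr h2, ?_⟩)
        rw [erase_mu_inr, insert_mu_inr]
        exact ⟨_, _, _, _, hrr, h3, rfl, rfl⟩

end Lift


/-- The product of two relations satisfying the exchange axiom satisfies
the exchange axiom. -/
theorem prodRel_exchAxiom {A B C D : Type*}
    [DecidableEq A] [DecidableEq B] [DecidableEq C] [DecidableEq D]
    (r : Finset A → Finset B → Prop) (s : Finset C → Finset D → Prop)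
    (hr : ExchAxiom r) (hs : ExchAxiom s) :
    ExchAxiom (ProdRel r s) := by
  rintro X Y X' Y' ⟨X₁, Y₁, X₂, Y₂, h1, h2, rfl, rfl⟩ ⟨X₁', Y₁', X₂', Y₂', h1', h2', rfl, rfl⟩ u hu
  rcases u with (a | c) | (b | d)
  · obtain ⟨v, hv1, hv2⟩ := hr X₁ Y₁ X₁' Y₁' h1 h1' (Sum.inl a)
      (by simpa [InBar, mem_mu_inl] using hu)
    exact ⟨Sum.map Sum.inl Sum.inl v, inBar_lift_left hv1, exch_lift_left h2 hv2⟩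
  · obtain ⟨v, hv1, hv2⟩ := hs X₂ Y₂ X₂' Y₂' h2 h2' (Sum.inl c)
      (by simpa [InBar, mem_mu_inr] using hu)
    exact ⟨Sum.map Sum.inr Sum.inr v, inBar_lift_right hv1, exch_lift_right h1 hv2⟩
  · obtain ⟨v, hv1, hv2⟩ := hr X₁ Y₁ X₁' Y₁' h1 h1' (Sum.inr b)
      (by simpa [InBar, mem_mu_inl] using hu)
    exact ⟨Sum.map Sum.inl Sum.inl v, inBar_lift_left hv1, exch_lift_left h2 hv2⟩
  · obtain ⟨v, hv1, hv2⟩ := hs X₂ Y₂ X₂' Y₂' h2 h2' (Sum.inr d)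
      (by simpa [InBar, mem_mu_inr] using hu)
    exact ⟨Sum.map Sum.inr Sum.inr v, inBar_lift_right hv1, exch_lift_right h1 hv2⟩
end

section
/- If λ is a nonempty relation on 𝒫(A) × 𝒫(B) satisfying the exchange axiom, then the difference |Y| - |X| is the same for all (X,Y) ∈ λ (so λ has a well-defined degree). -/
open Finset

lemma exch_step {A B : Type*} [DecidableEq A] [DecidableEq B]
    (r : Finset A → Finset B → Prop) (hr : ExchAxiom r)
    {X : Finset A} {Y : Finset B} {X' : Finset A} {Y' : Finset B}
    (h : r X Y) (h' : r X' Y') (u : A ⊕ B)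
    (hu : InBar X Y u) (hu' : ¬ InBar X' Y' u) :
    ∃ X₂ Y₂, r X₂ Y₂ ∧ (Y₂.card : ℤ) - X₂.card = (Y.card : ℤ) - X.card ∧
      (X₂ \ X').card + (X' \ X₂).card + (Y₂ \ Y').card + (Y' \ Y₂).card
        < (X \ X').card + (X' \ X).card + (Y \ Y').card + (Y' \ Y).card := by
  obtain ⟨v, hv, hex⟩ := hr X Y X' Y' h h' u hu
  rcases u with a | b <;> rcases v with a' | b'
  · -- u = inl a (a ∉ X, a ∈ X'), v = inl a' (a' ∉ X')
    simp only [InBar, not_not] at hu hu' hv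
    rcases hex with rfl | ⟨haX, _, _⟩ | ⟨_, ha'X, hr2⟩
    · exact absurd hu' hv
    · exact absurd haX hu
    · refine ⟨insert a (X.erase a'), Y, hr2, ?_, ?_⟩
      · have hne : a ≠ a' := fun e => hu (e ▸ ha'X)
        rw [Finset.card_insert_of_notMem (fun hm => hu (Finset.mem_of_mem_erase hm)),
          Finset.card_erase_of_mem ha'X]
        have : 1 ≤ X.card := Finset.card_pos.2 ⟨a', ha'X⟩
        push_cast [Nat.sub_add_cancel this]; ring
      · have e1 : insert a (X.erase a') \ X' = (X \ X').erase a' := by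
          ext x; simp only [Finset.mem_sdiff, Finset.mem_insert, Finset.mem_erase]
          constructor
          · rintro ⟨rfl | ⟨hx1, hx2⟩, hx3⟩
            · exact absurd hu' hx3
            · exact ⟨hx1, hx2, hx3⟩
          · rintro ⟨hx1, hx2, hx3⟩; exact ⟨Or.inr ⟨hx1, hx2⟩, hx3⟩
        have e2 : X' \ insert a (X.erase a') = (X' \ X).erase a := by
          ext x
          by_cases hxa : x = a <;> by_cases hxa' : x = a' <;>
            simp_all [Finset.mem_sdiff, Finset.mem_insert, Finset.mem_erase]
        rw [e1, e2, Finset.card_erase_of_mem (Finset.mem_sdiff.2 ⟨ha'X, hv⟩),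
          Finset.card_erase_of_mem (Finset.mem_sdiff.2 ⟨hu', hu⟩)]
        have h1 : 1 ≤ (X \ X').card := Finset.card_pos.2 ⟨a', Finset.mem_sdiff.2 ⟨ha'X, hv⟩⟩
        have h2 : 1 ≤ (X' \ X).card := Finset.card_pos.2 ⟨a, Finset.mem_sdiff.2 ⟨hu', hu⟩⟩
        omega
  · -- u = inl a (a ∉ X, a ∈ X'), v = inr b' (b' ∈ Y')
    simp only [InBar, not_not] at hu hu' hv
    rcases hex with ⟨haX, _, _⟩ | ⟨_, hb'Y, hr2⟩
    · exact absurd haX hu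
    refine ⟨insert a X, insert b' Y, hr2, ?_, ?_⟩
    · rw [Finset.card_insert_of_notMem hu, Finset.card_insert_of_notMem hb'Y]
      push_cast; ring
    · have e1 : insert a X \ X' = X \ X' := by
        ext x; simp only [Finset.mem_sdiff, Finset.mem_insert]
        constructor
        · rintro ⟨rfl | hx, hx'⟩
          · exact absurd hu' hx'
          · exact ⟨hx, hx'⟩
        · rintro ⟨hx, hx'⟩; exact ⟨Or.inr hx, hx'⟩
      have e2 : X' \ insert a X = (X' \ X).erase a := by
        ext x; simp only [Finset.mem_sdiff, Finset.mem_insert, not_or, Finset.mem_erase]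
        tauto
      have e3 : insert b' Y \ Y' = Y \ Y' := by
        ext x; simp only [Finset.mem_sdiff, Finset.mem_insert]
        constructor
        · rintro ⟨rfl | hx, hx'⟩
          · exact absurd hv hx'
          · exact ⟨hx, hx'⟩
        · rintro ⟨hx, hx'⟩; exact ⟨Or.inr hx, hx'⟩
      have e4 : Y' \ insert b' Y = (Y' \ Y).erase b' := by
        ext x; simp only [Finset.mem_sdiff, Finset.mem_insert, not_or, Finset.mem_erase]
        tauto
      rw [e1, e2, e3, e4, Finset.card_erase_of_mem (Finset.mem_sdiff.2 ⟨hu', hu⟩),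
        Finset.card_erase_of_mem (Finset.mem_sdiff.2 ⟨hv, hb'Y⟩)]
      have h1 : 1 ≤ (X' \ X).card := Finset.card_pos.2 ⟨a, Finset.mem_sdiff.2 ⟨hu', hu⟩⟩
      omega
  · -- u = inr b (b ∈ Y, b ∉ Y'), v = inl a' (a' ∉ X')
    simp only [InBar] at hu hu' hv
    rcases hex with ⟨_, ha'X, hr2⟩ | ⟨hbY, _, _⟩
    swap
    · exact absurd hu hbY
    refine ⟨X.erase a', Y.erase b, hr2, ?_, ?_⟩
    · rw [Finset.card_erase_of_mem ha'X, Finset.card_erase_of_mem hu]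
      have h1 : 1 ≤ X.card := Finset.card_pos.2 ⟨a', ha'X⟩
      have h2 : 1 ≤ Y.card := Finset.card_pos.2 ⟨b, hu⟩
      omega
    · have e1 : X.erase a' \ X' = (X \ X').erase a' := by
        ext x; simp only [Finset.mem_sdiff, Finset.mem_erase]; tauto
      have e2 : X' \ X.erase a' = X' \ X := by
        ext x; simp only [Finset.mem_sdiff, Finset.mem_erase, not_and]
        constructor
        · rintro ⟨hx1, hx2⟩
          refine ⟨hx1, fun hxX => ?_⟩
          by_cases hxa : x = a'
          · subst hxa; exact hv hx1
          · exact (hx2 hxa) hxX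
        · rintro ⟨hx1, hx2⟩; exact ⟨hx1, fun _ => hx2⟩
      have e3 : Y.erase b \ Y' = (Y \ Y').erase b := by
        ext x; simp only [Finset.mem_sdiff, Finset.mem_erase]; tauto
      have e4 : Y' \ Y.erase b = Y' \ Y := by
        ext x; simp only [Finset.mem_sdiff, Finset.mem_erase, not_and]
        constructor
        · rintro ⟨hx1, hx2⟩
          refine ⟨hx1, fun hxY => ?_⟩
          by_cases hxb : x = b
          · subst hxb; exact hu' hx1
          · exact (hx2 hxb) hxY
        · rintro ⟨hx1, hx2⟩; exact ⟨hx1, fun _ => hx2⟩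
      rw [e1, e2, e3, e4, Finset.card_erase_of_mem (Finset.mem_sdiff.2 ⟨ha'X, hv⟩),
        Finset.card_erase_of_mem (Finset.mem_sdiff.2 ⟨hu, hu'⟩)]
      have h1 : 1 ≤ (X \ X').card := Finset.card_pos.2 ⟨a', Finset.mem_sdiff.2 ⟨ha'X, hv⟩⟩
      omega
  · -- u = inr b (b ∈ Y, b ∉ Y'), v = inr b' (b' ∈ Y')
    simp only [InBar] at hu hu' hv
    rcases hex with rfl | ⟨_, hb'Y, hr2⟩ | ⟨hbY, _, _⟩
    · exact absurd hv hu'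
    swap
    · exact absurd hu hbY
    refine ⟨X, insert b' (Y.erase b), hr2, ?_, ?_⟩
    · have hne : b ≠ b' := fun e => hb'Y (e ▸ hu)
      rw [Finset.card_insert_of_notMem (fun hm => hb'Y (Finset.mem_of_mem_erase hm)),
        Finset.card_erase_of_mem hu]
      have : 1 ≤ Y.card := Finset.card_pos.2 ⟨b, hu⟩
      push_cast [Nat.sub_add_cancel this]; ring
    · have e1 : insert b' (Y.erase b) \ Y' = (Y \ Y').erase b := by
        ext x; simp only [Finset.mem_sdiff, Finset.mem_insert, Finset.mem_erase]
        constructor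
        · rintro ⟨rfl | ⟨hx1, hx2⟩, hx3⟩
          · exact absurd hv hx3
          · exact ⟨hx1, hx2, hx3⟩
        · rintro ⟨hx1, hx2, hx3⟩; exact ⟨Or.inr ⟨hx1, hx2⟩, hx3⟩
      have e2 : Y' \ insert b' (Y.erase b) = (Y' \ Y).erase b' := by
        ext x
        by_cases hxb : x = b <;> by_cases hxb' : x = b' <;>
          simp_all [Finset.mem_sdiff, Finset.mem_insert, Finset.mem_erase]
      rw [e1, e2, Finset.card_erase_of_mem (Finset.mem_sdiff.2 ⟨hu, hu'⟩),
        Finset.card_erase_of_mem (Finset.mem_sdiff.2 ⟨hv, hb'Y⟩)]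
      have h1 : 1 ≤ (Y \ Y').card := Finset.card_pos.2 ⟨b, Finset.mem_sdiff.2 ⟨hu, hu'⟩⟩
      have h2 : 1 ≤ (Y' \ Y).card := Finset.card_pos.2 ⟨b', Finset.mem_sdiff.2 ⟨hv, hb'Y⟩⟩
      omega

/-- A nonempty exchange relation has a well-defined degree: `|Y| - |X|` is the same
for all related pairs `(X,Y)`. -/
theorem exchAxiom_degree_welldefined {A B : Type*} [DecidableEq A] [DecidableEq B]
    (r : Finset A → Finset B → Prop) (hr : ExchAxiom r) :
    ∀ X Y X' Y', r X Y → r X' Y' →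
      (Y.card : ℤ) - (X.card : ℤ) = (Y'.card : ℤ) - (X'.card : ℤ) := by
  suffices H : ∀ n : ℕ, ∀ (X : Finset A) (Y : Finset B) (X' : Finset A) (Y' : Finset B),
      (X \ X').card + (X' \ X).card + (Y \ Y').card + (Y' \ Y).card = n →
      r X Y → r X' Y' →
      (Y.card : ℤ) - (X.card : ℤ) = (Y'.card : ℤ) - (X'.card : ℤ) by
    intro X Y X' Y' h h'
    exact H _ X Y X' Y' rfl h h'
  intro n
  induction n using Nat.strong_induction_on with
  | _ n ih =>
    intro X Y X' Y' hn h h'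
    by_cases h1 : ∃ u, InBar X Y u ∧ ¬ InBar X' Y' u
    · obtain ⟨u, hu, hu'⟩ := h1
      obtain ⟨X₂, Y₂, h₂, hd, hlt⟩ := exch_step r hr h h' u hu hu'
      rw [hn] at hlt
      rw [← hd]
      exact ih _ hlt X₂ Y₂ X' Y' rfl h₂ h'
    · by_cases h2 : ∃ u, InBar X' Y' u ∧ ¬ InBar X Y u
      · obtain ⟨u, hu, hu'⟩ := h2
        obtain ⟨X₂, Y₂, h₂, hd, hlt⟩ := exch_step r hr h' h u hu hu'
        have hlt' : (X \ X₂).card + (X₂ \ X).card + (Y \ Y₂).card + (Y₂ \ Y).card < n := by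
          omega
        rw [← hd]
        exact ih _ hlt' X Y X₂ Y₂ rfl h h₂
      · push_neg at h1 h2
        have hXX' : X = X' := by
          apply Finset.ext
          intro a
          constructor
          · intro ha
            by_contra ha'
            exact (h2 (Sum.inl a) ha') ha
          · intro ha
            by_contra ha'
            exact (h1 (Sum.inl a) ha') ha
        have hYY' : Y = Y' := by
          apply Finset.ext
          intro b
          constructor
          · intro hb
            exact h1 (Sum.inr b) hb
          · intro hb
            exact h2 (Sum.inr b) hb
        rw [hXX', hYY']
end

section
/- If λ on 𝒫(A) × 𝒫(B) is a bimatroid (a relation satisfying the exchange axiom with (∅,∅) ∈ λ), then the range of λ, i.e. {Y ⊆ B | ∃X, (X,Y) ∈ λ}, is the collection of independent sets of a matroid on B; that is, the range is nonempty, downward closed under taking subsets, and satisfies the independence augmentation axiom. -/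
open Finset

private lemma bm_down {A B : Type*} [DecidableEq A] [DecidableEq B]
    (r : Finset A → Finset B → Prop) (hr : ExchAxiom r) (hbi : r ∅ ∅) :
    ∀ (n : ℕ) (Y : Finset B) (X : Finset A), Y.card = n → r X Y →
      ∀ Y', Y' ⊆ Y → ∃ X', r X' Y' := by
  intro n
  induction n using Nat.strong_induction_on with
  | _ n ih =>
    intro Y X hcard hXY Y' hsub
    rcases hsub.eq_or_ssubset with rfl | hss
    · exact ⟨X, hXY⟩
    · obtain ⟨b, hbY, hbY'⟩ := Finset.exists_of_ssubset hss
      obtain ⟨v, hv, hex⟩ := hr X Y ∅ ∅ hXY hbi (Sum.inr b) hbY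
      cases v with
      | inl a =>
        rcases hex with ⟨_, _, hdel⟩ | ⟨hb, _⟩
        · exact ih (Y.erase b).card
            (by rw [← hcard]; exact Finset.card_erase_lt_of_mem hbY)
            (Y.erase b) (X.erase a) rfl hdel Y'
            (fun x hx => Finset.mem_erase.2 ⟨fun h => hbY' (h ▸ hx), hsub hx⟩)
        · exact absurd hbY hb
      | inr b' => exact absurd (hv : b' ∈ (∅ : Finset B)) (Finset.notMem_empty b')

private lemma bm_aug_inner {A B : Type*} [DecidableEq A] [DecidableEq B]
    (r : Finset A → Finset B → Prop) (hr : ExchAxiom r) (hbi : r ∅ ∅)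
    (Y₁ Y₂ : Finset B) (X₁ X₂ : Finset A) (hX₁ : r X₁ Y₁) (hsub : X₂ ⊆ X₁) :
    ∀ (n : ℕ) (Y : Finset B), (Y \ Y₁).card = n → r X₂ Y → Y ⊆ Y₁ ∪ Y₂ →
      Y₁.card < Y.card →
      ∃ x, x ∈ Y₂ ∧ x ∉ Y₁ ∧ ∃ X, r X (insert x Y₁) := by
  intro n
  induction n using Nat.strong_induction_on with
  | _ n ih =>
    intro Y hn hXY hYsub hcard
    have hne : (Y \ Y₁).Nonempty := by
      rw [← Finset.card_pos]
      by_contra h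
      push_neg at h
      have : Y ⊆ Y₁ := by
        intro x hx
        by_contra hx'
        have : x ∈ Y \ Y₁ := Finset.mem_sdiff.2 ⟨hx, hx'⟩
        have := Finset.card_pos.2 ⟨x, this⟩
        omega
      have := Finset.card_le_card this
      omega
    obtain ⟨b, hb⟩ := hne
    have hbY : b ∈ Y := (Finset.mem_sdiff.1 hb).1
    have hbY₁ : b ∉ Y₁ := (Finset.mem_sdiff.1 hb).2
    by_cases hY₁Y : Y₁ ⊆ Y
    · -- insert b Y₁ ⊆ Y, use downward closure
      have hsub' : insert b Y₁ ⊆ Y := Finset.insert_subset hbY hY₁Y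
      obtain ⟨X', hX'⟩ := bm_down r hr hbi Y.card Y X₂ rfl hXY (insert b Y₁) hsub'
      have hbY₂ : b ∈ Y₂ := by
        rcases Finset.mem_union.1 (hYsub hbY) with h | h
        · exact absurd h hbY₁
        · exact h
      exact ⟨b, hbY₂, hbY₁, X', hX'⟩
    · obtain ⟨v, hv, hex⟩ := hr X₂ Y X₁ Y₁ hXY hX₁ (Sum.inr b) hbY
      cases v with
      | inl a =>
        have haX₁ : a ∉ X₁ := hv
        rcases hex with ⟨_, haX₂, _⟩ | ⟨hb', _⟩
        · exact absurd (hsub haX₂) haX₁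
        · exact absurd hbY hb'
      | inr b' =>
        have hb'Y₁ : b' ∈ Y₁ := hv
        rcases hex with rfl | ⟨_, hb'Y, hswap⟩ | ⟨hbY', _, _⟩
        · exact absurd hb'Y₁ hbY₁
        · -- recurse with Y'' = insert b' (Y.erase b)
          have hset : (insert b' (Y.erase b)) \ Y₁ = (Y \ Y₁).erase b := by
            ext x
            simp only [Finset.mem_sdiff, Finset.mem_insert, Finset.mem_erase]
            constructor
            · rintro ⟨h1 | ⟨h1, h2⟩, h3⟩
              · exact absurd (h1 ▸ hb'Y₁) h3
              · exact ⟨h1, h2, h3⟩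
            · rintro ⟨h1, h2, h3⟩
              exact ⟨Or.inr ⟨h1, h2⟩, h3⟩
          have hbmem : b ∈ Y \ Y₁ := Finset.mem_sdiff.2 ⟨hbY, hbY₁⟩
          have hpos : 0 < n := hn ▸ Finset.card_pos.2 ⟨b, hbmem⟩
          have hcard' : (insert b' (Y.erase b)).card = Y.card := by
            rw [Finset.card_insert_of_notMem
              (fun h => hb'Y (Finset.mem_of_mem_erase h)),
              Finset.card_erase_of_mem hbY]
            omega
          refine ih (n - 1) (by omega) (insert b' (Y.erase b)) ?_ hswap ?_ ?_
          · rw [hset, Finset.card_erase_of_mem hbmem, hn]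
          · intro x hx
            rcases Finset.mem_insert.1 hx with rfl | h
            · exact Finset.mem_union_left _ hb'Y₁
            · exact hYsub (Finset.mem_of_mem_erase h)
          · omega
        · exact absurd hbY hbY'

private lemma bm_aug_outer {A B : Type*} [DecidableEq A] [DecidableEq B]
    (r : Finset A → Finset B → Prop) (hr : ExchAxiom r) (hbi : r ∅ ∅)
    (Y₁ Y₂ : Finset B) (X₂ : Finset A) (hX₂ : r X₂ Y₂) (hcard : Y₁.card < Y₂.card) :
    ∀ (n : ℕ) (X₁ : Finset A), (X₂ \ X₁).card = n → r X₁ Y₁ →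
      ∃ x, x ∈ Y₂ ∧ x ∉ Y₁ ∧ ∃ X, r X (insert x Y₁) := by
  intro n
  induction n using Nat.strong_induction_on with
  | _ n ih =>
    intro X₁ hn hX₁
    by_cases hss : X₂ ⊆ X₁
    · exact bm_aug_inner r hr hbi Y₁ Y₂ X₁ X₂ hX₁ hss (Y₂ \ Y₁).card Y₂ rfl hX₂
        Finset.subset_union_right hcard
    · obtain ⟨a, haX₂, haX₁⟩ := Finset.not_subset.1 hss
      obtain ⟨v, hv, hex⟩ := hr X₁ Y₁ X₂ Y₂ hX₁ hX₂ (Sum.inl a) haX₁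
      cases v with
      | inl a' =>
        have ha'X₂ : a' ∉ X₂ := hv
        rcases hex with rfl | ⟨haX₁', _⟩ | ⟨_, ha'X₁, hswap⟩
        · exact absurd haX₂ ha'X₂
        · exact absurd haX₁' haX₁
        · have hset : X₂ \ (insert a (X₁.erase a')) = (X₂ \ X₁).erase a := by
            ext x
            have hxa : x = a' → x ∉ X₂ := fun h => h ▸ ha'X₂
            simp only [Finset.mem_sdiff, Finset.mem_insert, Finset.mem_erase]
            tauto
          have hamem : a ∈ X₂ \ X₁ := Finset.mem_sdiff.2 ⟨haX₂, haX₁⟩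
          have hpos : 0 < n := hn ▸ Finset.card_pos.2 ⟨a, hamem⟩
          refine ih (n - 1) (by omega) (insert a (X₁.erase a')) ?_ hswap
          rw [hset, Finset.card_erase_of_mem hamem, hn]
      | inr b' =>
        have hb'Y₂ : b' ∈ Y₂ := hv
        rcases hex with ⟨haX₁', _⟩ | ⟨_, hb'Y₁, hgrow⟩
        · exact absurd haX₁' haX₁
        · exact ⟨b', hb'Y₂, hb'Y₁, _, hgrow⟩

/-- The range of a bimatroid is the collection of independent sets of a matroid on `B`:
it contains the empty set, is downward closed, and satisfies the augmentation axiom. -/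
theorem bimatroid_range_independent_sets {A B : Type*} [DecidableEq A] [DecidableEq B]
    (r : Finset A → Finset B → Prop) (hr : ExchAxiom r) (hbi : r ∅ ∅) :
    (∃ X : Finset A, r X ∅) ∧
    (∀ Y Y' : Finset B, Y' ⊆ Y → (∃ X, r X Y) → (∃ X, r X Y')) ∧
    (∀ Y₁ Y₂ : Finset B, (∃ X, r X Y₁) → (∃ X, r X Y₂) → Y₁.card < Y₂.card →
      ∃ x, x ∈ Y₂ ∧ x ∉ Y₁ ∧ ∃ X, r X (insert x Y₁)) := by
  refine ⟨⟨∅, hbi⟩, ?_, ?_⟩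
  · rintro Y Y' hsub ⟨X, hXY⟩
    exact bm_down r hr hbi Y.card Y X rfl hXY Y' hsub
  · rintro Y₁ Y₂ ⟨X₁, hX₁⟩ ⟨X₂, hX₂⟩ hc
    exact bm_aug_outer r hr hbi Y₁ Y₂ X₂ hX₂ hc (X₂ \ X₁).card X₁ rfl hX₁
end

section
/- Let λ be a nonempty relation on 𝒫(A) × 𝒫(B) and μ a nonempty relation on 𝒫(B) × 𝒫(C), both satisfying the exchange axiom. Define λ •_{k,l} μ by: (X,Z) ∈ λ •_{k,l} μ iff there exist Y, Y' ⊆ B with (X,Y') ∈ λ, (Y,Z) ∈ μ, |Y \ Y'| = k, |Y' \ Y| = l. Let m₀ be minimal such that λ •_m μ := ⋃_{k+l=m} λ •_{k,l} μ is nonempty. Then there is a unique pair (k₀,l₀) with k₀ + l₀ = m₀ and λ •_{k₀,l₀} μ nonempty (the lax composition has a definite type), and λ • μ := λ •_{k₀,l₀} μ satisfies the exchange axiom. -/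
open Finset

def BComp {A B C : Type*} [DecidableEq B] (r : Finset A → Finset B → Prop)
    (s : Finset B → Finset C → Prop) (k l : ℕ) : Finset A → Finset C → Prop :=
  fun X Z => ∃ Y Y', r X Y' ∧ s Y Z ∧ (Y \ Y').card = k ∧ (Y' \ Y).card = l

noncomputable def totalType {A B C : Type*} [DecidableEq B]
    (r : Finset A → Finset B → Prop) (s : Finset B → Finset C → Prop) : ℕ :=
  sInf {m | ∃ k l, k + l = m ∧ ∃ X Z, BComp r s k l X Z}

noncomputable def LaxComp {A B C : Type*} [DecidableEq B]
    (r : Finset A → Finset B → Prop) (s : Finset B → Finset C → Prop) :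
    Finset A → Finset C → Prop :=
  fun X Z => ∃ k l, k + l = totalType r s ∧ BComp r s k l X Z

set_option linter.unusedSectionVars false

section helpers
variable {α : Type*} [DecidableEq α] {U V : Finset α} {x y : α}

lemma sd1 (h : x ∈ V) : insert x U \ V = U \ V := by
  ext z; simp only [mem_sdiff, mem_insert]
  constructor
  · rintro ⟨h1 | h1, h2⟩
    · exact absurd (h1 ▸ h) h2
    · exact ⟨h1, h2⟩
  · tauto

lemma sd5 (h : x ∉ V) : insert x U \ V = insert x (U \ V) := by
  ext z; simp only [mem_sdiff, mem_insert]
  constructor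
  · rintro ⟨h1 | h1, h2⟩ <;> tauto
  · rintro (rfl | ⟨h1, h2⟩) <;> tauto

lemma sd2 : V \ insert x U = (V \ U).erase x := by
  ext z; simp only [mem_sdiff, mem_insert, mem_erase]; tauto

lemma sd3 : U.erase y \ V = (U \ V).erase y := by
  ext z; simp only [mem_sdiff, mem_erase]; tauto

lemma sd4 (h : y ∈ V) : V \ U.erase y = insert y (V \ U) := by
  ext z; simp only [mem_sdiff, mem_erase, mem_insert]
  constructor
  · rintro ⟨h1, h2⟩
    by_cases hz : z = y
    · tauto
    · tauto
  · rintro (rfl | ⟨h1, h2⟩) <;> tauto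

lemma sd4' (h : y ∉ V) : V \ U.erase y = V \ U := by
  ext z; simp only [mem_sdiff, mem_erase]
  constructor
  · rintro ⟨h1, h2⟩
    refine ⟨h1, fun hz => h2 ⟨fun he => h (he ▸ h1), hz⟩⟩
  · rintro ⟨h1, h2⟩; exact ⟨h1, fun hz => h2 hz.2⟩

lemma sdA2 (h : x ∈ V) : insert x (U.erase y) \ V = (U \ V).erase y := by
  rw [sd1 h, sd3]

lemma sdA3 (h : x ∉ V) : insert x (U.erase y) \ V = insert x ((U \ V).erase y) := by
  rw [sd5 h, sd3]

lemma sdB1 (h : y ∉ V) : V \ insert x (U.erase y) = (V \ U).erase x := by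
  rw [sd2, sd4' h]

lemma sdB2 (h : y ∈ V) (hne : y ≠ x) : V \ insert x (U.erase y) = insert y ((V \ U).erase x) := by
  rw [sd2, sd4 h]
  ext z; simp only [mem_erase, mem_insert, mem_sdiff]
  constructor
  · rintro ⟨h1, rfl | h2⟩ <;> tauto
  · rintro (rfl | h1) <;> tauto

end helpers

section main
variable {A B C : Type*} [DecidableEq A] [DecidableEq B] [DecidableEq C]
variable {r : Finset A → Finset B → Prop} {s : Finset B → Finset C → Prop}

/-- Across an exchange relation, `|Y| - |X|` is invariant. -/
lemma exch_inv (hr : ExchAxiom r) :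
    ∀ n (X : Finset A) (Y : Finset B) (X' : Finset A) (Y' : Finset B), r X Y → r X' Y' →
      (X \ X').card + (X' \ X).card + (Y \ Y').card + (Y' \ Y).card ≤ n →
      X.card + Y'.card = X'.card + Y.card := by
  intro n
  induction n using Nat.strong_induction_on with
  | _ n ih =>
  intro X Y X' Y' hXY hXY' hμ
  by_cases h1 : (X' \ X).Nonempty
  · obtain ⟨a, ha⟩ := h1
    rw [mem_sdiff] at ha
    obtain ⟨haX', haX⟩ := ha
    obtain ⟨v, hv, hex⟩ := hr X Y X' Y' hXY hXY' (Sum.inl a) haX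
    have hmem : a ∈ X' \ X := mem_sdiff.mpr ⟨haX', haX⟩
    cases v with
    | inl a' =>
      simp only [InBar] at hv
      simp only [Exchangeable] at hex
      rcases hex with rfl | ⟨haX2, -, -⟩ | ⟨-, ha'X, hnew⟩
      · exact absurd haX' hv
      · exact absurd haX2 haX
      · have hmem' : a' ∈ X \ X' := mem_sdiff.mpr ⟨ha'X, hv⟩
        have e1 : insert a (X.erase a') \ X' = (X \ X').erase a' := sdA2 haX'
        have e2 : X' \ insert a (X.erase a') = (X' \ X).erase a := sdB1 hv
        have hc1 : ((X \ X').erase a').card = (X \ X').card - 1 := card_erase_of_mem hmem'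
        have hc2 : ((X' \ X).erase a).card = (X' \ X).card - 1 := card_erase_of_mem hmem
        have hp1 : 1 ≤ (X \ X').card := card_pos.mpr ⟨a', hmem'⟩
        have hp2 : 1 ≤ (X' \ X).card := card_pos.mpr ⟨a, hmem⟩
        have keq := ih ((X \ X').card - 1 + ((X' \ X).card - 1) + (Y \ Y').card + (Y' \ Y).card)
          (by omega) _ _ _ _ hnew hXY' (by rw [e1, e2]; omega)
        have hni : a ∉ X.erase a' := fun h => haX (mem_of_mem_erase h)
        have hcX : (insert a (X.erase a')).card = X.card - 1 + 1 := by
          rw [card_insert_of_notMem hni, card_erase_of_mem ha'X]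
        have hpx : 1 ≤ X.card := card_pos.mpr ⟨a', ha'X⟩
        omega
    | inr b =>
      simp only [InBar] at hv
      simp only [Exchangeable] at hex
      rcases hex with ⟨haX2, -, -⟩ | ⟨-, hbY, hnew⟩
      · exact absurd haX2 haX
      · have hmem' : b ∈ Y' \ Y := mem_sdiff.mpr ⟨hv, hbY⟩
        have e1 : insert a X \ X' = X \ X' := sd1 haX'
        have e2 : X' \ insert a X = (X' \ X).erase a := sd2
        have e3 : insert b Y \ Y' = Y \ Y' := sd1 hv
        have e4 : Y' \ insert b Y = (Y' \ Y).erase b := sd2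
        have hc2 : ((X' \ X).erase a).card = (X' \ X).card - 1 := card_erase_of_mem hmem
        have hc4 : ((Y' \ Y).erase b).card = (Y' \ Y).card - 1 := card_erase_of_mem hmem'
        have hp2 : 1 ≤ (X' \ X).card := card_pos.mpr ⟨a, hmem⟩
        have hp4 : 1 ≤ (Y' \ Y).card := card_pos.mpr ⟨b, hmem'⟩
        have keq := ih ((X \ X').card + ((X' \ X).card - 1) + (Y \ Y').card + ((Y' \ Y).card - 1))
          (by omega) _ _ _ _ hnew hXY' (by rw [e1, e2, e3, e4]; omega)
        have hca : (insert a X).card = X.card + 1 := card_insert_of_notMem haX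
        have hcb : (insert b Y).card = Y.card + 1 := card_insert_of_notMem hbY
        omega
  · by_cases h2 : (Y \ Y').Nonempty
    · obtain ⟨b, hb⟩ := h2
      rw [mem_sdiff] at hb
      obtain ⟨hbY, hbY'⟩ := hb
      obtain ⟨v, hv, hex⟩ := hr X Y X' Y' hXY hXY' (Sum.inr b) hbY
      have hmem : b ∈ Y \ Y' := mem_sdiff.mpr ⟨hbY, hbY'⟩
      cases v with
      | inl a' =>
        simp only [InBar] at hv
        simp only [Exchangeable] at hex
        rcases hex with ⟨-, ha'X, hnew⟩ | ⟨hbY2, -, -⟩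
        · have hmem' : a' ∈ X \ X' := mem_sdiff.mpr ⟨ha'X, hv⟩
          have e1 : X.erase a' \ X' = (X \ X').erase a' := sd3
          have e2 : X' \ X.erase a' = X' \ X := sd4' hv
          have e3 : Y.erase b \ Y' = (Y \ Y').erase b := sd3
          have e4 : Y' \ Y.erase b = Y' \ Y := sd4' hbY'
          have hc1 : ((X \ X').erase a').card = (X \ X').card - 1 := card_erase_of_mem hmem'
          have hc3 : ((Y \ Y').erase b).card = (Y \ Y').card - 1 := card_erase_of_mem hmem
          have hp1 : 1 ≤ (X \ X').card := card_pos.mpr ⟨a', hmem'⟩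
          have hp3 : 1 ≤ (Y \ Y').card := card_pos.mpr ⟨b, hmem⟩
          have keq := ih ((X \ X').card - 1 + (X' \ X).card + ((Y \ Y').card - 1) + (Y' \ Y).card)
            (by omega) _ _ _ _ hnew hXY' (by rw [e1, e2, e3, e4]; omega)
          have hca : (X.erase a').card = X.card - 1 := card_erase_of_mem ha'X
          have hcb : (Y.erase b).card = Y.card - 1 := card_erase_of_mem hbY
          have hpx : 1 ≤ X.card := card_pos.mpr ⟨a', ha'X⟩
          have hpy : 1 ≤ Y.card := card_pos.mpr ⟨b, hbY⟩
          omega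
        · exact absurd hbY hbY2
      | inr b' =>
        simp only [InBar] at hv
        simp only [Exchangeable] at hex
        rcases hex with rfl | ⟨-, hb'Y, hnew⟩ | ⟨hbY2, -, -⟩
        · exact absurd hv hbY'
        · have hmem' : b' ∈ Y' \ Y := mem_sdiff.mpr ⟨hv, hb'Y⟩
          have e3 : insert b' (Y.erase b) \ Y' = (Y \ Y').erase b := sdA2 hv
          have e4 : Y' \ insert b' (Y.erase b) = (Y' \ Y).erase b' := sdB1 hbY'
          have hc3 : ((Y \ Y').erase b).card = (Y \ Y').card - 1 := card_erase_of_mem hmem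
          have hc4 : ((Y' \ Y).erase b').card = (Y' \ Y).card - 1 := card_erase_of_mem hmem'
          have hp3 : 1 ≤ (Y \ Y').card := card_pos.mpr ⟨b, hmem⟩
          have hp4 : 1 ≤ (Y' \ Y).card := card_pos.mpr ⟨b', hmem'⟩
          have keq := ih ((X \ X').card + (X' \ X).card + ((Y \ Y').card - 1) + ((Y' \ Y).card - 1))
            (by omega) _ _ _ _ hnew hXY' (by rw [e3, e4]; omega)
          have hni : b' ∉ Y.erase b := fun h => hb'Y (mem_of_mem_erase h)
          have hcY : (insert b' (Y.erase b)).card = Y.card - 1 + 1 := by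
            rw [card_insert_of_notMem hni, card_erase_of_mem hbY]
          have hpy : 1 ≤ Y.card := card_pos.mpr ⟨b, hbY⟩
          omega
        · exact absurd hbY hbY2
    · by_cases h3 : (X \ X').Nonempty
      · obtain ⟨a, ha⟩ := h3
        rw [mem_sdiff] at ha
        obtain ⟨haX, haX'⟩ := ha
        obtain ⟨v, hv, hex⟩ := hr X' Y' X Y hXY' hXY (Sum.inl a) haX'
        have hmem : a ∈ X \ X' := mem_sdiff.mpr ⟨haX, haX'⟩
        cases v with
        | inl a' =>
          simp only [InBar] at hv
          simp only [Exchangeable] at hex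
          rcases hex with rfl | ⟨haX2, -, -⟩ | ⟨-, ha'X', hnew⟩
          · exact absurd haX hv
          · exact absurd haX2 haX'
          · have hmem' : a' ∈ X' \ X := mem_sdiff.mpr ⟨ha'X', hv⟩
            have e1 : X \ insert a (X'.erase a') = (X \ X').erase a := sdB1 hv
            have e2 : insert a (X'.erase a') \ X = (X' \ X).erase a' := sdA2 haX
            have hc1 : ((X \ X').erase a).card = (X \ X').card - 1 := card_erase_of_mem hmem
            have hc2 : ((X' \ X).erase a').card = (X' \ X).card - 1 := card_erase_of_mem hmem'
            have hp1 : 1 ≤ (X \ X').card := card_pos.mpr ⟨a, hmem⟩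
            have hp2 : 1 ≤ (X' \ X).card := card_pos.mpr ⟨a', hmem'⟩
            have keq := ih ((X \ X').card - 1 + ((X' \ X).card - 1) + (Y \ Y').card + (Y' \ Y).card)
              (by omega) _ _ _ _ hXY hnew (by rw [e1, e2]; omega)
            have hni : a ∉ X'.erase a' := fun h => haX' (mem_of_mem_erase h)
            have hcX : (insert a (X'.erase a')).card = X'.card - 1 + 1 := by
              rw [card_insert_of_notMem hni, card_erase_of_mem ha'X']
            have hpx : 1 ≤ X'.card := card_pos.mpr ⟨a', ha'X'⟩
            omega
        | inr b =>
          simp only [InBar] at hv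
          simp only [Exchangeable] at hex
          rcases hex with ⟨haX2, -, -⟩ | ⟨-, hbY', hnew⟩
          · exact absurd haX2 haX'
          · have hmem' : b ∈ Y \ Y' := mem_sdiff.mpr ⟨hv, hbY'⟩
            exact absurd hmem' (by simp [not_nonempty_iff_eq_empty.mp h2] )
      · by_cases h4 : (Y' \ Y).Nonempty
        · obtain ⟨b, hb⟩ := h4
          rw [mem_sdiff] at hb
          obtain ⟨hbY', hbY⟩ := hb
          obtain ⟨v, hv, hex⟩ := hr X' Y' X Y hXY' hXY (Sum.inr b) hbY'
          have hmem : b ∈ Y' \ Y := mem_sdiff.mpr ⟨hbY', hbY⟩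
          cases v with
          | inl a' =>
            simp only [InBar] at hv
            simp only [Exchangeable] at hex
            rcases hex with ⟨-, ha'X', hnew⟩ | ⟨hbY2, -, -⟩
            · have hmem' : a' ∈ X' \ X := mem_sdiff.mpr ⟨ha'X', hv⟩
              have e1 : X \ X'.erase a' = X \ X' := sd4' hv
              have e2 : X'.erase a' \ X = (X' \ X).erase a' := sd3
              have e3 : Y \ Y'.erase b = Y \ Y' := sd4' hbY
              have e4 : Y'.erase b \ Y = (Y' \ Y).erase b := sd3
              have hc2 : ((X' \ X).erase a').card = (X' \ X).card - 1 := card_erase_of_mem hmem'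
              have hc4 : ((Y' \ Y).erase b).card = (Y' \ Y).card - 1 := card_erase_of_mem hmem
              have hp2 : 1 ≤ (X' \ X).card := card_pos.mpr ⟨a', hmem'⟩
              have hp4 : 1 ≤ (Y' \ Y).card := card_pos.mpr ⟨b, hmem⟩
              have keq := ih ((X \ X').card + ((X' \ X).card - 1) + (Y \ Y').card + ((Y' \ Y).card - 1))
                (by omega) _ _ _ _ hXY hnew (by rw [e1, e2, e3, e4]; omega)
              have hca : (X'.erase a').card = X'.card - 1 := card_erase_of_mem ha'X'
              have hcb : (Y'.erase b).card = Y'.card - 1 := card_erase_of_mem hbY'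
              have hpx : 1 ≤ X'.card := card_pos.mpr ⟨a', ha'X'⟩
              have hpy : 1 ≤ Y'.card := card_pos.mpr ⟨b, hbY'⟩
              omega
            · exact absurd hbY' hbY2
          | inr b' =>
            simp only [InBar] at hv
            simp only [Exchangeable] at hex
            rcases hex with rfl | ⟨-, hb'Y', hnew⟩ | ⟨hbY2, -, -⟩
            · exact absurd hv hbY
            · have hmem' : b' ∈ Y \ Y' := mem_sdiff.mpr ⟨hv, hb'Y'⟩
              exact absurd hmem' (by simp [not_nonempty_iff_eq_empty.mp h2])
            · exact absurd hbY' hbY2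
        · have hX : X = X' := by
            have e1 := not_nonempty_iff_eq_empty.mp h1
            have e3 := not_nonempty_iff_eq_empty.mp h3
            exact Subset.antisymm (sdiff_eq_empty_iff_subset.mp e3) (sdiff_eq_empty_iff_subset.mp e1)
          have hY : Y = Y' := by
            have e2 := not_nonempty_iff_eq_empty.mp h2
            have e4 := not_nonempty_iff_eq_empty.mp h4
            exact Subset.antisymm (sdiff_eq_empty_iff_subset.mp e2) (sdiff_eq_empty_iff_subset.mp e4)
          rw [hX, hY]


lemma min_wit {X : Finset A} {Z : Finset C} {Y Y' : Finset B}
    (h1 : r X Y') (h2 : s Y Z) :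
    totalType r s ≤ (Y \ Y').card + (Y' \ Y).card :=
  Nat.sInf_le ⟨(Y \ Y').card, (Y' \ Y).card, rfl, X, Z, Y, Y', h1, h2, rfl, rfl⟩

lemma laxOf {X : Finset A} {Z : Finset C} {Y Y' : Finset B}
    (h1 : r X Y') (h2 : s Y Z)
    (h3 : (Y \ Y').card + (Y' \ Y).card = totalType r s) :
    LaxComp r s X Z :=
  ⟨(Y \ Y').card, (Y' \ Y).card, h3, Y, Y', h1, h2, rfl, rfl⟩

lemma lax_elim {X : Finset A} {Z : Finset C} (h : LaxComp r s X Z) :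
    ∃ Y Y', r X Y' ∧ s Y Z ∧ (Y \ Y').card + (Y' \ Y).card = totalType r s := by
  obtain ⟨k, l, hkl, Y, Y', h1, h2, hk, hl⟩ := h
  exact ⟨Y, Y', h1, h2, by omega⟩

/-- The chain lemma: discharging a single excess element. -/
lemma CL (hr : ExchAxiom r) (hs : ExchAxiom s) :
    ∀ n (Xt : Finset A) (Zt : Finset C) (Yt Yt' : Finset B)
      (X : Finset A) (Z : Finset C) (Y Y' : Finset B)
      (X₁ : Finset A) (Z₁ : Finset C) (Y₁ Y₁' : Finset B) (β : B),
      (Yt \ Y₁).card + (Y₁ \ Yt).card + (Yt' \ Y₁').card + (Y₁' \ Yt').card ≤ n →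
      r Xt Yt' → s Yt Zt → r X Y' → s Y Z → r X₁ Y₁' → s Y₁ Z₁ →
      (Y₁ \ Y₁').card + (Y₁' \ Y₁).card = totalType r s →
      β ∈ Yt' → β ∉ Yt →
      (Yt \ Yt').card + (Yt' \ Yt).card = totalType r s + 1 →
      (β ∈ Y ∨ β ∉ Y') →
      (∀ x ∈ Yt, x ∉ Y → x ∈ Y₁) →
      (∀ x ∈ Y', x ∉ Yt' → x ∉ Y₁') →
      (∃ a₂, a₂ ∈ Xt ∧ a₂ ∉ X₁ ∧ LaxComp r s (Xt.erase a₂) Zt) ∨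
      (∃ c₂, c₂ ∉ Zt ∧ c₂ ∈ Z₁ ∧ LaxComp r s Xt (insert c₂ Zt)) ∨
      (∃ Yn Yn', r X₁ Yn' ∧ s Yn Z₁ ∧ (Yn \ Yn').card + (Yn' \ Yn).card = totalType r s ∧
        (Y \ Yn).card + (Yn \ Y).card + (Y' \ Yn').card + (Yn' \ Y').card + 2 ≤
        (Y \ Y₁).card + (Y₁ \ Y).card + (Y' \ Y₁').card + (Y₁' \ Y').card) := by
  intro n
  induction n using Nat.strong_induction_on with
  | _ n ih =>
  intro Xt Zt Yt Yt' X Z Y Y' X₁ Z₁ Y₁ Y₁' β hμ hrXt hsYt hrX hsY hrX₁ hsY₁ htot₁ hβYt' hβYt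
    hT hI3 hI1 hI4
  have hβd : β ∈ Yt' \ Yt := mem_sdiff.mpr ⟨hβYt', hβYt⟩
  have hlp : 1 ≤ (Yt' \ Yt).card := card_pos.mpr ⟨β, hβd⟩
  by_cases hc1 : β ∈ Y₁
  · -- Case 1 : s-pivot on β from our state against the reference
    obtain ⟨w, hw, hex⟩ := hs Yt Zt Y₁ Z₁ hsYt hsY₁ (Sum.inl β) hβYt
    cases w with
    | inl b' =>
      simp only [InBar] at hw
      simp only [Exchangeable] at hex
      rcases hex with rfl | ⟨hβYt2, -, -⟩ | ⟨-, hb'Yt, hsnew⟩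
      · exact absurd hc1 hw
      · exact absurd hβYt2 hβYt
      · have hbne : b' ≠ β := fun h => hβYt (h ▸ hb'Yt)
        by_cases hb'Yt' : b' ∈ Yt'
        · -- recursion with new excess b'
          have hb'nd : b' ∉ Yt \ Yt' := fun h => (mem_sdiff.mp h).2 hb'Yt'
          have eT1 : insert β (Yt.erase b') \ Yt' = Yt \ Yt' := by
            rw [sdA2 hβYt', erase_eq_of_notMem hb'nd]
          have eT2 : Yt' \ insert β (Yt.erase b') = insert b' ((Yt' \ Yt).erase β) :=
            sdB2 hb'Yt' hbne
          have hb'nd2 : b' ∉ (Yt' \ Yt).erase β := fun h =>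
            (mem_sdiff.mp (mem_of_mem_erase h)).2 hb'Yt
          have hcT2 : (Yt' \ insert β (Yt.erase b')).card = (Yt' \ Yt).card - 1 + 1 := by
            rw [eT2, card_insert_of_notMem hb'nd2, card_erase_of_mem hβd]
          have hTn : (insert β (Yt.erase b') \ Yt').card +
              (Yt' \ insert β (Yt.erase b')).card = totalType r s + 1 := by
            rw [eT1]; omega
          -- measure decrease
          have hb'm : b' ∈ Yt \ Y₁ := mem_sdiff.mpr ⟨hb'Yt, hw⟩
          have hβm : β ∈ Y₁ \ Yt := mem_sdiff.mpr ⟨hc1, hβYt⟩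
          have eM1 : insert β (Yt.erase b') \ Y₁ = (Yt \ Y₁).erase b' := sdA2 hc1
          have eM2 : Y₁ \ insert β (Yt.erase b') = (Y₁ \ Yt).erase β := sdB1 hw
          have hcM1 : ((Yt \ Y₁).erase b').card = (Yt \ Y₁).card - 1 := card_erase_of_mem hb'm
          have hcM2 : ((Y₁ \ Yt).erase β).card = (Y₁ \ Yt).card - 1 := card_erase_of_mem hβm
          have hpM1 : 1 ≤ (Yt \ Y₁).card := card_pos.mpr ⟨b', hb'm⟩
          have hpM2 : 1 ≤ (Y₁ \ Yt).card := card_pos.mpr ⟨β, hβm⟩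
          -- invariants
          have hb'nYtn : b' ∉ insert β (Yt.erase b') := by
            simp only [mem_insert, mem_erase]
            rintro (h | ⟨h, -⟩)
            · exact hbne h
            · exact h rfl
          have hI3n : b' ∈ Y ∨ b' ∉ Y' := by
            by_cases h : b' ∈ Y
            · exact Or.inl h
            · exact absurd (hI1 b' hb'Yt h) hw
          have hI1n : ∀ x ∈ insert β (Yt.erase b'), x ∉ Y → x ∈ Y₁ := by
            intro x hx hxY
            rcases mem_insert.mp hx with rfl | hx'
            · exact hc1
            · exact hI1 x (mem_of_mem_erase hx') hxY
          exact ih ((Yt \ Y₁).card - 1 + ((Y₁ \ Yt).card - 1) +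
              (Yt' \ Y₁').card + (Y₁' \ Yt').card) (by omega)
            Xt Zt (insert β (Yt.erase b')) Yt' X Z Y Y' X₁ Z₁ Y₁ Y₁' b'
            (by rw [eM1, eM2]; omega)
            hrXt hsnew hrX hsY hrX₁ hsY₁ htot₁ hb'Yt' hb'nYtn hTn hI3n hI1n hI4
        · -- contradiction : total would drop below m₀
          have hb'm : b' ∈ Yt \ Yt' := mem_sdiff.mpr ⟨hb'Yt, hb'Yt'⟩
          have eT1 : insert β (Yt.erase b') \ Yt' = (Yt \ Yt').erase b' := sdA2 hβYt'
          have eT2 : Yt' \ insert β (Yt.erase b') = (Yt' \ Yt).erase β := sdB1 hb'Yt'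
          have hc1' : ((Yt \ Yt').erase b').card = (Yt \ Yt').card - 1 := card_erase_of_mem hb'm
          have hc2' : ((Yt' \ Yt).erase β).card = (Yt' \ Yt).card - 1 := card_erase_of_mem hβd
          have hp1 : 1 ≤ (Yt \ Yt').card := card_pos.mpr ⟨b', hb'm⟩
          have hmin := min_wit (r := r) (s := s) hrXt hsnew
          rw [eT1, eT2] at hmin
          omega
    | inr c₂ =>
      simp only [InBar] at hw
      simp only [Exchangeable] at hex
      rcases hex with ⟨hβYt2, -, -⟩ | ⟨-, hc₂Zt, hsnew⟩
      · exact absurd hβYt2 hβYt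
      · -- success C
        refine Or.inr (Or.inl ⟨c₂, hc₂Zt, hw, laxOf hrXt hsnew ?_⟩)
        have e1 : insert β Yt \ Yt' = Yt \ Yt' := sd1 hβYt'
        have e2 : Yt' \ insert β Yt = (Yt' \ Yt).erase β := sd2
        have hc2' : ((Yt' \ Yt).erase β).card = (Yt' \ Yt).card - 1 := card_erase_of_mem hβd
        rw [e1, e2]; omega
  · by_cases hc2 : β ∈ Y₁'
    · -- Case 3 : β ∈ Y₁' \ Y₁ ; improve the reference witness
      rcases hI3 with hβY | hβY'
      · -- β ∈ Y : s-pivot from the reference against the original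
        obtain ⟨w, hw, hex⟩ := hs Y₁ Z₁ Y Z hsY₁ hsY (Sum.inl β) hc1
        cases w with
        | inl b₃ =>
          simp only [InBar] at hw
          simp only [Exchangeable] at hex
          rcases hex with rfl | ⟨hβY₁2, -, -⟩ | ⟨-, hb₃Y₁, hsnew⟩
          · exact absurd hβY hw
          · exact absurd hβY₁2 hc1
          · have hβd₁ : β ∈ Y₁' \ Y₁ := mem_sdiff.mpr ⟨hc2, hc1⟩
            have hl₁p : 1 ≤ (Y₁' \ Y₁).card := card_pos.mpr ⟨β, hβd₁⟩
            have hb₃ne : b₃ ≠ β := fun h => hc1 (h ▸ hb₃Y₁)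
            by_cases hb₃Y₁' : b₃ ∈ Y₁'
            · -- S-R : improved reference witness
              have hb₃nd : b₃ ∉ Y₁ \ Y₁' := fun h => (mem_sdiff.mp h).2 hb₃Y₁'
              have eT1 : insert β (Y₁.erase b₃) \ Y₁' = Y₁ \ Y₁' := by
                rw [sdA2 hc2, erase_eq_of_notMem hb₃nd]
              have eT2 : Y₁' \ insert β (Y₁.erase b₃) = insert b₃ ((Y₁' \ Y₁).erase β) :=
                sdB2 hb₃Y₁' hb₃ne
              have hb₃nd2 : b₃ ∉ (Y₁' \ Y₁).erase β := fun h =>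
                (mem_sdiff.mp (mem_of_mem_erase h)).2 hb₃Y₁
              have hcT2 : (Y₁' \ insert β (Y₁.erase b₃)).card = (Y₁' \ Y₁).card - 1 + 1 := by
                rw [eT2, card_insert_of_notMem hb₃nd2, card_erase_of_mem hβd₁]
              have htotn : (insert β (Y₁.erase b₃) \ Y₁').card +
                  (Y₁' \ insert β (Y₁.erase b₃)).card = totalType r s := by
                rw [eT1]; omega
              -- measure decrease for S-R
              have hβm : β ∈ Y \ Y₁ := mem_sdiff.mpr ⟨hβY, hc1⟩
              have hb₃m : b₃ ∈ Y₁ \ Y := mem_sdiff.mpr ⟨hb₃Y₁, hw⟩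
              have eM1 : Y \ insert β (Y₁.erase b₃) = (Y \ Y₁).erase β := sdB1 hw
              have eM2 : insert β (Y₁.erase b₃) \ Y = (Y₁ \ Y).erase b₃ := sdA2 hβY
              have hcM1 : ((Y \ Y₁).erase β).card = (Y \ Y₁).card - 1 := card_erase_of_mem hβm
              have hcM2 : ((Y₁ \ Y).erase b₃).card = (Y₁ \ Y).card - 1 := card_erase_of_mem hb₃m
              have hpM1 : 1 ≤ (Y \ Y₁).card := card_pos.mpr ⟨β, hβm⟩
              have hpM2 : 1 ≤ (Y₁ \ Y).card := card_pos.mpr ⟨b₃, hb₃m⟩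
              refine Or.inr (Or.inr ⟨insert β (Y₁.erase b₃), Y₁', hrX₁, hsnew, htotn, ?_⟩)
              rw [eM1, eM2]; omega
            · -- contradiction : reference witness of total m₀ - 2
              have hb₃m : b₃ ∈ Y₁ \ Y₁' := mem_sdiff.mpr ⟨hb₃Y₁, hb₃Y₁'⟩
              have eT1 : insert β (Y₁.erase b₃) \ Y₁' = (Y₁ \ Y₁').erase b₃ := sdA2 hc2
              have eT2 : Y₁' \ insert β (Y₁.erase b₃) = (Y₁' \ Y₁).erase β := sdB1 hb₃Y₁'
              have hc1' : ((Y₁ \ Y₁').erase b₃).card = (Y₁ \ Y₁').card - 1 :=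
                card_erase_of_mem hb₃m
              have hc2' : ((Y₁' \ Y₁).erase β).card = (Y₁' \ Y₁).card - 1 :=
                card_erase_of_mem hβd₁
              have hp1 : 1 ≤ (Y₁ \ Y₁').card := card_pos.mpr ⟨b₃, hb₃m⟩
              have hmin := min_wit (r := r) (s := s) hrX₁ hsnew
              rw [eT1, eT2] at hmin
              omega
        | inr c₃ =>
          simp only [InBar] at hw
          simp only [Exchangeable] at hex
          rcases hex with ⟨hβY₁2, -, -⟩ | ⟨-, hc₃Z₁, hsnew⟩
          · exact absurd hβY₁2 hc1
          · -- contradiction : (X₁, Z₁ ∪ c₃) would have a witness of total m₀ - 1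
            have hβd₁ : β ∈ Y₁' \ Y₁ := mem_sdiff.mpr ⟨hc2, hc1⟩
            have hl₁p : 1 ≤ (Y₁' \ Y₁).card := card_pos.mpr ⟨β, hβd₁⟩
            have e1 : insert β Y₁ \ Y₁' = Y₁ \ Y₁' := sd1 hc2
            have e2 : Y₁' \ insert β Y₁ = (Y₁' \ Y₁).erase β := sd2
            have hc2' : ((Y₁' \ Y₁).erase β).card = (Y₁' \ Y₁).card - 1 := card_erase_of_mem hβd₁
            have hmin := min_wit (r := r) (s := s) hrX₁ hsnew
            rw [e1, e2] at hmin
            omega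
      · -- β ∉ Y' : r-pivot from the reference against the original
        obtain ⟨v, hv, hex⟩ := hr X₁ Y₁' X Y' hrX₁ hrX (Sum.inr β) hc2
        cases v with
        | inl a' =>
          simp only [InBar] at hv
          simp only [Exchangeable] at hex
          rcases hex with ⟨-, ha'X₁, hrnew⟩ | ⟨hβn, -, -⟩
          · -- contradiction : (X₁ \ a', Z₁) would have a witness of total m₀ - 1
            have hβd₁ : β ∈ Y₁' \ Y₁ := mem_sdiff.mpr ⟨hc2, hc1⟩
            have hl₁p : 1 ≤ (Y₁' \ Y₁).card := card_pos.mpr ⟨β, hβd₁⟩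
            have e1 : Y₁ \ Y₁'.erase β = Y₁ \ Y₁' := sd4' hc1
            have e2 : Y₁'.erase β \ Y₁ = (Y₁' \ Y₁).erase β := sd3
            have hc2' : ((Y₁' \ Y₁).erase β).card = (Y₁' \ Y₁).card - 1 := card_erase_of_mem hβd₁
            have hmin := min_wit (r := r) (s := s) hrnew hsY₁
            rw [e1, e2] at hmin
            omega
          · exact absurd hc2 hβn
        | inr b₄ =>
          simp only [InBar] at hv
          simp only [Exchangeable] at hex
          rcases hex with rfl | ⟨-, hb₄Y₁', hrnew⟩ | ⟨hβn, -, -⟩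
          · exact absurd hv hβY'
          · have hβd₁ : β ∈ Y₁' \ Y₁ := mem_sdiff.mpr ⟨hc2, hc1⟩
            have hl₁p : 1 ≤ (Y₁' \ Y₁).card := card_pos.mpr ⟨β, hβd₁⟩
            by_cases hb₄Y₁ : b₄ ∈ Y₁
            · -- contradiction : reference witness of total m₀ - 2
              have hb₄m : b₄ ∈ Y₁ \ Y₁' := mem_sdiff.mpr ⟨hb₄Y₁, hb₄Y₁'⟩
              have e1 : Y₁ \ insert b₄ (Y₁'.erase β) = (Y₁ \ Y₁').erase b₄ := sdB1 hc1
              have e2 : insert b₄ (Y₁'.erase β) \ Y₁ = (Y₁' \ Y₁).erase β := sdA2 hb₄Y₁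
              have hc1' : ((Y₁ \ Y₁').erase b₄).card = (Y₁ \ Y₁').card - 1 :=
                card_erase_of_mem hb₄m
              have hc2' : ((Y₁' \ Y₁).erase β).card = (Y₁' \ Y₁).card - 1 :=
                card_erase_of_mem hβd₁
              have hp1 : 1 ≤ (Y₁ \ Y₁').card := card_pos.mpr ⟨b₄, hb₄m⟩
              have hmin := min_wit (r := r) (s := s) hrnew hsY₁
              rw [e1, e2] at hmin
              omega
            · -- S-R : improved reference witness on the Y' side
              have hb₄nd : b₄ ∉ Y₁ \ Y₁' := fun h => hb₄Y₁ (mem_sdiff.mp h).1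
              have eT1 : Y₁ \ insert b₄ (Y₁'.erase β) = Y₁ \ Y₁' := by
                rw [sdB1 hc1, erase_eq_of_notMem hb₄nd]
              have eT2 : insert b₄ (Y₁'.erase β) \ Y₁ = insert b₄ ((Y₁' \ Y₁).erase β) :=
                sdA3 hb₄Y₁
              have hb₄nd2 : b₄ ∉ (Y₁' \ Y₁).erase β := fun h =>
                hb₄Y₁' (mem_sdiff.mp (mem_of_mem_erase h)).1
              have hcT2 : (insert b₄ (Y₁'.erase β) \ Y₁).card = (Y₁' \ Y₁).card - 1 + 1 := by
                rw [eT2, card_insert_of_notMem hb₄nd2, card_erase_of_mem hβd₁]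
              have htotn : (Y₁ \ insert b₄ (Y₁'.erase β)).card +
                  (insert b₄ (Y₁'.erase β) \ Y₁).card = totalType r s := by
                rw [eT1]; omega
              have hβm : β ∈ Y₁' \ Y' := mem_sdiff.mpr ⟨hc2, hβY'⟩
              have hb₄m : b₄ ∈ Y' \ Y₁' := mem_sdiff.mpr ⟨hv, hb₄Y₁'⟩
              have eM1 : Y' \ insert b₄ (Y₁'.erase β) = (Y' \ Y₁').erase b₄ := sdB1 hβY'
              have eM2 : insert b₄ (Y₁'.erase β) \ Y' = (Y₁' \ Y').erase β := sdA2 hv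
              have hcM1 : ((Y' \ Y₁').erase b₄).card = (Y' \ Y₁').card - 1 :=
                card_erase_of_mem hb₄m
              have hcM2 : ((Y₁' \ Y').erase β).card = (Y₁' \ Y').card - 1 :=
                card_erase_of_mem hβm
              have hpM1 : 1 ≤ (Y' \ Y₁').card := card_pos.mpr ⟨b₄, hb₄m⟩
              have hpM2 : 1 ≤ (Y₁' \ Y').card := card_pos.mpr ⟨β, hβm⟩
              refine Or.inr (Or.inr ⟨Y₁, insert b₄ (Y₁'.erase β), hrnew, hsY₁, htotn, ?_⟩)
              rw [eM1, eM2]; omega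
          · exact absurd hc2 hβn
    · -- Case 2 : β ∉ Y₁' ; r-pivot on β from our state against the reference
      obtain ⟨v, hv, hex⟩ := hr Xt Yt' X₁ Y₁' hrXt hrX₁ (Sum.inr β) hβYt'
      cases v with
      | inl a₂ =>
        simp only [InBar] at hv
        simp only [Exchangeable] at hex
        rcases hex with ⟨-, ha₂Xt, hrnew⟩ | ⟨hβn, -, -⟩
        · -- success A
          refine Or.inl ⟨a₂, ha₂Xt, hv, laxOf hrnew hsYt ?_⟩
          have e1 : Yt \ Yt'.erase β = Yt \ Yt' := sd4' hβYt
          have e2 : Yt'.erase β \ Yt = (Yt' \ Yt).erase β := sd3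
          have hc2' : ((Yt' \ Yt).erase β).card = (Yt' \ Yt).card - 1 := card_erase_of_mem hβd
          rw [e1, e2]; omega
        · exact absurd hβYt' hβn
      | inr b₂ =>
        simp only [InBar] at hv
        simp only [Exchangeable] at hex
        rcases hex with rfl | ⟨-, hb₂Yt', hrnew⟩ | ⟨hβn, -, -⟩
        · exact absurd hv hc2
        · by_cases hb₂Yt : b₂ ∈ Yt
          · -- contradiction : total would drop below m₀
            have hb₂m : b₂ ∈ Yt \ Yt' := mem_sdiff.mpr ⟨hb₂Yt, hb₂Yt'⟩
            have e1 : Yt \ insert b₂ (Yt'.erase β) = (Yt \ Yt').erase b₂ := sdB1 hβYt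
            have e2 : insert b₂ (Yt'.erase β) \ Yt = (Yt' \ Yt).erase β := sdA2 hb₂Yt
            have hc1' : ((Yt \ Yt').erase b₂).card = (Yt \ Yt').card - 1 := card_erase_of_mem hb₂m
            have hc2' : ((Yt' \ Yt).erase β).card = (Yt' \ Yt).card - 1 := card_erase_of_mem hβd
            have hp1 : 1 ≤ (Yt \ Yt').card := card_pos.mpr ⟨b₂, hb₂m⟩
            have hmin := min_wit (r := r) (s := s) hrnew hsYt
            rw [e1, e2] at hmin
            omega
          · -- recursion with new excess b₂
            have hb₂nd : b₂ ∉ Yt \ Yt' := fun h => hb₂Yt (mem_sdiff.mp h).1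
            have eT1 : Yt \ insert b₂ (Yt'.erase β) = Yt \ Yt' := by
              rw [sdB1 hβYt, erase_eq_of_notMem hb₂nd]
            have eT2 : insert b₂ (Yt'.erase β) \ Yt = insert b₂ ((Yt' \ Yt).erase β) :=
              sdA3 hb₂Yt
            have hb₂nd2 : b₂ ∉ (Yt' \ Yt).erase β := fun h =>
              hb₂Yt' (mem_sdiff.mp (mem_of_mem_erase h)).1
            have hcT2 : (insert b₂ (Yt'.erase β) \ Yt).card = (Yt' \ Yt).card - 1 + 1 := by
              rw [eT2, card_insert_of_notMem hb₂nd2, card_erase_of_mem hβd]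
            have hTn : (Yt \ insert b₂ (Yt'.erase β)).card +
                (insert b₂ (Yt'.erase β) \ Yt).card = totalType r s + 1 := by
              rw [eT1]; omega
            -- measure decrease
            have hβm : β ∈ Yt' \ Y₁' := mem_sdiff.mpr ⟨hβYt', hc2⟩
            have hb₂m : b₂ ∈ Y₁' \ Yt' := mem_sdiff.mpr ⟨hv, hb₂Yt'⟩
            have eM1 : insert b₂ (Yt'.erase β) \ Y₁' = (Yt' \ Y₁').erase β := sdA2 hv
            have eM2 : Y₁' \ insert b₂ (Yt'.erase β) = (Y₁' \ Yt').erase b₂ := sdB1 hc2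
            have hcM1 : ((Yt' \ Y₁').erase β).card = (Yt' \ Y₁').card - 1 := card_erase_of_mem hβm
            have hcM2 : ((Y₁' \ Yt').erase b₂).card = (Y₁' \ Yt').card - 1 :=
              card_erase_of_mem hb₂m
            have hpM1 : 1 ≤ (Yt' \ Y₁').card := card_pos.mpr ⟨β, hβm⟩
            have hpM2 : 1 ≤ (Y₁' \ Yt').card := card_pos.mpr ⟨b₂, hb₂m⟩
            -- invariants
            have hb₂Ytn' : b₂ ∈ insert b₂ (Yt'.erase β) := mem_insert_self _ _
            have hI3n : b₂ ∈ Y ∨ b₂ ∉ Y' := Or.inr (fun hb₂Y' => (hI4 b₂ hb₂Y' hb₂Yt') hv)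
            have hI4n : ∀ x ∈ Y', x ∉ insert b₂ (Yt'.erase β) → x ∉ Y₁' := by
              intro x hxY' hx
              simp only [mem_insert, mem_erase] at hx
              push_neg at hx
              obtain ⟨hxb₂, hx2⟩ := hx
              by_cases hxβ : x = β
              · exact hxβ ▸ hc2
              · exact hI4 x hxY' (hx2 hxβ)
            exact ih ((Yt \ Y₁).card + (Y₁ \ Yt).card +
                ((Yt' \ Y₁').card - 1) + ((Y₁' \ Yt').card - 1)) (by omega)
              Xt Zt Yt (insert b₂ (Yt'.erase β)) X Z Y Y' X₁ Z₁ Y₁ Y₁' b₂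
              (by rw [eM1, eM2]; omega)
              hrnew hsYt hrX hsY hrX₁ hsY₁ htot₁ hb₂Ytn' hb₂Yt hTn hI3n hI1 hI4n
        · exact absurd hβYt' hβn

/-- Exchange for the lax composition: main lemma. -/
lemma ML (hr : ExchAxiom r) (hs : ExchAxiom s) :
    ∀ n (X : Finset A) (Z : Finset C) (Y Y' : Finset B)
      (X₁ : Finset A) (Z₁ : Finset C) (Y₁ Y₁' : Finset B),
      (Y \ Y₁).card + (Y₁ \ Y).card + (Y' \ Y₁').card + (Y₁' \ Y').card ≤ n →
      r X Y' → s Y Z → (Y \ Y').card + (Y' \ Y).card = totalType r s →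
      r X₁ Y₁' → s Y₁ Z₁ → (Y₁ \ Y₁').card + (Y₁' \ Y₁).card = totalType r s →
      ∀ u, InBar X Z u → ∃ v, InBar X₁ Z₁ v ∧ Exchangeable (LaxComp r s) X Z u v := by
  intro n
  induction n using Nat.strong_induction_on with
  | _ n ih =>
  intro X Z Y Y' X₁ Z₁ Y₁ Y₁' hμ hrX hsY htot hrX₁ hsY₁ htot₁ u hu
  cases u with
  | inl a =>
    simp only [InBar] at hu
    by_cases haX₁ : a ∈ X₁
    · obtain ⟨v, hv, hex⟩ := hr X Y' X₁ Y₁' hrX hrX₁ (Sum.inl a) hu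
      cases v with
      | inl a' =>
        simp only [InBar] at hv
        simp only [Exchangeable] at hex
        rcases hex with rfl | ⟨haX, -, -⟩ | ⟨-, ha'X, hrnew⟩
        · exact absurd haX₁ hv
        · exact absurd haX hu
        · refine ⟨Sum.inl a', hv, ?_⟩
          simp only [Exchangeable]
          exact Or.inr (Or.inr ⟨hu, ha'X, laxOf hrnew hsY htot⟩)
      | inr b =>
        simp only [InBar] at hv
        simp only [Exchangeable] at hex
        rcases hex with ⟨haX, -, -⟩ | ⟨-, hbY', hrnew⟩
        · exact absurd haX hu
        · by_cases hbY : b ∈ Y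
          · -- contradiction with minimality
            have hbm : b ∈ Y \ Y' := mem_sdiff.mpr ⟨hbY, hbY'⟩
            have e1 : Y \ insert b Y' = (Y \ Y').erase b := sd2
            have e2 : insert b Y' \ Y = Y' \ Y := sd1 hbY
            have hc1 : ((Y \ Y').erase b).card = (Y \ Y').card - 1 := card_erase_of_mem hbm
            have hp1 : 1 ≤ (Y \ Y').card := card_pos.mpr ⟨b, hbm⟩
            have hmin := min_wit (r := r) (s := s) hrnew hsY
            rw [e1, e2] at hmin
            omega
          · -- set up the chain with excess b
            have hbnd : b ∉ Y \ Y' := fun h => hbY (mem_sdiff.mp h).1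
            have hbnd2 : b ∉ Y' \ Y := fun h => hbY' (mem_sdiff.mp h).1
            have e1 : Y \ insert b Y' = Y \ Y' := by
              rw [sd2, erase_eq_of_notMem hbnd]
            have e2 : insert b Y' \ Y = insert b (Y' \ Y) := sd5 hbY
            have hTn : (Y \ insert b Y').card + (insert b Y' \ Y).card = totalType r s + 1 := by
              rw [e1, e2, card_insert_of_notMem hbnd2]; omega
            have hI3i : b ∈ Y ∨ b ∉ Y' := Or.inr hbY'
            have hI1i : ∀ x ∈ Y, x ∉ Y → x ∈ Y₁ := fun x hx hnx => absurd hx hnx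
            have hI4i : ∀ x ∈ Y', x ∉ insert b Y' → x ∉ Y₁' :=
              fun x hx hnx => absurd (mem_insert_of_mem hx) hnx
            rcases CL hr hs ((Y \ Y₁).card + (Y₁ \ Y).card +
                (insert b Y' \ Y₁').card + (Y₁' \ insert b Y').card)
                (insert a X) Z Y (insert b Y') X Z Y Y' X₁ Z₁ Y₁ Y₁' b le_rfl
                hrnew hsY hrX hsY hrX₁ hsY₁ htot₁ (mem_insert_self b Y') hbY hTn hI3i hI1i hI4i
              with hSA | hSC | hSR
            · obtain ⟨a₂, ha₂mem, ha₂X₁, hlax⟩ := hSA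
              have ha₂a : a ≠ a₂ := fun h => ha₂X₁ (h ▸ haX₁)
              have ha₂X : a₂ ∈ X := by
                rcases mem_insert.mp ha₂mem with h | h
                · exact absurd h.symm ha₂a
                · exact h
              have heq : (insert a X).erase a₂ = insert a (X.erase a₂) :=
                erase_insert_of_ne ha₂a
              refine ⟨Sum.inl a₂, ha₂X₁, ?_⟩
              simp only [Exchangeable]
              exact Or.inr (Or.inr ⟨hu, ha₂X, heq ▸ hlax⟩)
            · obtain ⟨c₂, hc₂Z, hc₂Z₁, hlax⟩ := hSC
              refine ⟨Sum.inr c₂, hc₂Z₁, ?_⟩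
              simp only [Exchangeable]
              exact Or.inr ⟨hu, hc₂Z, hlax⟩
            · obtain ⟨Yn, Yn', hrn, hsn, htn, hm⟩ := hSR
              exact ih ((Y \ Yn).card + (Yn \ Y).card + (Y' \ Yn').card + (Yn' \ Y').card)
                (by omega) X Z Y Y' X₁ Z₁ Yn Yn' le_rfl hrX hsY htot hrn hsn htn
                (Sum.inl a) hu
    · refine ⟨Sum.inl a, haX₁, ?_⟩
      exact Or.inl rfl
  | inr c =>
    simp only [InBar] at hu
    by_cases hcZ₁ : c ∈ Z₁
    · refine ⟨Sum.inr c, hcZ₁, ?_⟩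
      exact Or.inl rfl
    · obtain ⟨w, hw, hex⟩ := hs Y Z Y₁ Z₁ hsY hsY₁ (Sum.inr c) hu
      cases w with
      | inr c' =>
        simp only [InBar] at hw
        simp only [Exchangeable] at hex
        rcases hex with rfl | ⟨-, hc'Z, hsnew⟩ | ⟨hcZ, -, -⟩
        · exact absurd hw hcZ₁
        · refine ⟨Sum.inr c', hw, ?_⟩
          simp only [Exchangeable]
          exact Or.inr (Or.inl ⟨hu, hc'Z, laxOf hrX hsnew htot⟩)
        · exact absurd hu hcZ
      | inl b =>
        simp only [InBar] at hw
        simp only [Exchangeable] at hex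
        rcases hex with ⟨-, hbY, hsnew⟩ | ⟨hcZ, -, -⟩
        · by_cases hbY' : b ∈ Y'
          · -- set up the chain with excess b
            have hbm : b ∉ Y \ Y' := fun h => (mem_sdiff.mp h).2 hbY'
            have hbm2 : b ∉ Y' \ Y := fun h => (mem_sdiff.mp h).2 hbY
            have e1 : Y.erase b \ Y' = Y \ Y' := by
              rw [sd3, erase_eq_of_notMem hbm]
            have e2 : Y' \ Y.erase b = insert b (Y' \ Y) := sd4 hbY'
            have hTn : (Y.erase b \ Y').card + (Y' \ Y.erase b).card = totalType r s + 1 := by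
              rw [e1, e2, card_insert_of_notMem hbm2]; omega
            have hI3i : b ∈ Y ∨ b ∉ Y' := Or.inl hbY
            have hI1i : ∀ x ∈ Y.erase b, x ∉ Y → x ∈ Y₁ :=
              fun x hx hnx => absurd (mem_of_mem_erase hx) hnx
            have hI4i : ∀ x ∈ Y', x ∉ Y' → x ∉ Y₁' := fun x hx hnx => absurd hx hnx
            rcases CL hr hs ((Y.erase b \ Y₁).card + (Y₁ \ Y.erase b).card +
                (Y' \ Y₁').card + (Y₁' \ Y').card)
                X (Z.erase c) (Y.erase b) Y' X Z Y Y' X₁ Z₁ Y₁ Y₁' b le_rfl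
                hrX hsnew hrX hsY hrX₁ hsY₁ htot₁ hbY' (notMem_erase b Y) hTn hI3i hI1i hI4i
              with hSA | hSC | hSR
            · obtain ⟨a₂, ha₂X, ha₂X₁, hlax⟩ := hSA
              refine ⟨Sum.inl a₂, ha₂X₁, ?_⟩
              simp only [Exchangeable]
              exact Or.inl ⟨hu, ha₂X, hlax⟩
            · obtain ⟨c₂, hc₂nZt, hc₂Z₁, hlax⟩ := hSC
              have hc₂c : c₂ ≠ c := fun h => hcZ₁ (h ▸ hc₂Z₁)
              have hc₂Z : c₂ ∉ Z := fun h => hc₂nZt (mem_erase.mpr ⟨hc₂c, h⟩)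
              refine ⟨Sum.inr c₂, hc₂Z₁, ?_⟩
              simp only [Exchangeable]
              exact Or.inr (Or.inl ⟨hu, hc₂Z, hlax⟩)
            · obtain ⟨Yn, Yn', hrn, hsn, htn, hm⟩ := hSR
              exact ih ((Y \ Yn).card + (Yn \ Y).card + (Y' \ Yn').card + (Yn' \ Y').card)
                (by omega) X Z Y Y' X₁ Z₁ Yn Yn' le_rfl hrX hsY htot hrn hsn htn
                (Sum.inr c) hu
          · -- contradiction with minimality
            have hbm : b ∈ Y \ Y' := mem_sdiff.mpr ⟨hbY, hbY'⟩
            have e1 : Y.erase b \ Y' = (Y \ Y').erase b := sd3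
            have e2 : Y' \ Y.erase b = Y' \ Y := sd4' hbY'
            have hc1 : ((Y \ Y').erase b).card = (Y \ Y').card - 1 := card_erase_of_mem hbm
            have hp1 : 1 ≤ (Y \ Y').card := card_pos.mpr ⟨b, hbm⟩
            have hmin := min_wit (r := r) (s := s) hrX hsnew
            rw [e1, e2] at hmin
            omega
        · exact absurd hu hcZ

/-- The lax composition satisfies the exchange axiom. -/
lemma lax_exch (hr : ExchAxiom r) (hs : ExchAxiom s) : ExchAxiom (LaxComp r s) := by
  intro X Z X₁ Z₁ h1 h2 u hu
  obtain ⟨Y, Y', hrX, hsY, htot⟩ := lax_elim h1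
  obtain ⟨Y₁, Y₁', hrX₁, hsY₁, htot₁⟩ := lax_elim h2
  exact ML hr hs ((Y \ Y₁).card + (Y₁ \ Y).card + (Y' \ Y₁').card + (Y₁' \ Y').card)
    X Z Y Y' X₁ Z₁ Y₁ Y₁' le_rfl hrX hsY htot hrX₁ hsY₁ htot₁ u hu

lemma card_sdiff_exchange {Y Y' : Finset B} :
    (Y \ Y').card + Y'.card = (Y' \ Y).card + Y.card := by
  rw [card_sdiff_add_card, card_sdiff_add_card, union_comm]

/-- At the minimal total type, the type of a composition pair is determined by
the cardinalities. -/
lemma TD (hr : ExchAxiom r) (hs : ExchAxiom s) {k l k' l' : ℕ}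
    {X X' : Finset A} {Z Z' : Finset C}
    (h : BComp r s k l X Z) (h' : BComp r s k' l' X' Z')
    (hk : k + l = totalType r s) (hk' : k' + l' = totalType r s)
    (hcard : X.card + Z'.card = X'.card + Z.card) : k = k' ∧ l = l' := by
  obtain ⟨Y, Y', hry, hsy, hky, hly⟩ := h
  obtain ⟨W, W', hrw, hsw, hkw, hlw⟩ := h'
  have e1 := exch_inv hr ((X \ X').card + (X' \ X).card + (Y' \ W').card + (W' \ Y').card)
    X Y' X' W' hry hrw le_rfl
  have e2 := exch_inv hs ((Y \ W).card + (W \ Y).card + (Z \ Z').card + (Z' \ Z).card)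
    Y Z W Z' hsy hsw le_rfl
  have f1 : (Y \ Y').card + Y'.card = (Y' \ Y).card + Y.card := card_sdiff_exchange
  have f2 : (W \ W').card + W'.card = (W' \ W).card + W.card := card_sdiff_exchange
  omega

lemma convert_exch (hr : ExchAxiom r) (hs : ExchAxiom s) {k₀ l₀ : ℕ}
    (hk₀ : k₀ + l₀ = totalType r s)
    {X : Finset A} {Z : Finset C} (hXZ : BComp r s k₀ l₀ X Z) {u v : A ⊕ C}
    (h : Exchangeable (LaxComp r s) X Z u v) :
    Exchangeable (BComp r s k₀ l₀) X Z u v := by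
  have conv : ∀ (X' : Finset A) (Z' : Finset C), X'.card + Z.card = X.card + Z'.card →
      LaxComp r s X' Z' → BComp r s k₀ l₀ X' Z' := by
    intro X' Z' hcard hlax
    obtain ⟨k, l, hkl, hB⟩ := hlax
    obtain ⟨hk, hl⟩ := TD hr hs hB hXZ hkl hk₀ hcard
    exact hk ▸ hl ▸ hB
  cases u with
  | inl a =>
    cases v with
    | inl a' =>
      simp only [Exchangeable] at h ⊢
      rcases h with heq | ⟨h1, h2, h3⟩ | ⟨h1, h2, h3⟩
      · exact Or.inl heq
      · refine Or.inr (Or.inl ⟨h1, h2, conv _ _ ?_ h3⟩)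
        have hni : a' ∉ X.erase a := fun hh => h2 (mem_of_mem_erase hh)
        have hp : 1 ≤ X.card := card_pos.mpr ⟨a, h1⟩
        rw [card_insert_of_notMem hni, card_erase_of_mem h1]
        omega
      · refine Or.inr (Or.inr ⟨h1, h2, conv _ _ ?_ h3⟩)
        have hni : a ∉ X.erase a' := fun hh => h1 (mem_of_mem_erase hh)
        have hp : 1 ≤ X.card := card_pos.mpr ⟨a', h2⟩
        rw [card_insert_of_notMem hni, card_erase_of_mem h2]
        omega
    | inr c' =>
      simp only [Exchangeable] at h ⊢
      rcases h with ⟨h1, h2, h3⟩ | ⟨h1, h2, h3⟩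
      · refine Or.inl ⟨h1, h2, conv _ _ ?_ h3⟩
        have hpX : 1 ≤ X.card := card_pos.mpr ⟨a, h1⟩
        have hpZ : 1 ≤ Z.card := card_pos.mpr ⟨c', h2⟩
        rw [card_erase_of_mem h1, card_erase_of_mem h2]
        omega
      · refine Or.inr ⟨h1, h2, conv _ _ ?_ h3⟩
        rw [card_insert_of_notMem h1, card_insert_of_notMem h2]
        omega
  | inr c =>
    cases v with
    | inl a' =>
      simp only [Exchangeable] at h ⊢
      rcases h with ⟨h1, h2, h3⟩ | ⟨h1, h2, h3⟩
      · refine Or.inl ⟨h1, h2, conv _ _ ?_ h3⟩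
        have hpX : 1 ≤ X.card := card_pos.mpr ⟨a', h2⟩
        have hpZ : 1 ≤ Z.card := card_pos.mpr ⟨c, h1⟩
        rw [card_erase_of_mem h2, card_erase_of_mem h1]
        omega
      · refine Or.inr ⟨h1, h2, conv _ _ ?_ h3⟩
        rw [card_insert_of_notMem h2, card_insert_of_notMem h1]
        omega
    | inr c' =>
      simp only [Exchangeable] at h ⊢
      rcases h with heq | ⟨h1, h2, h3⟩ | ⟨h1, h2, h3⟩
      · exact Or.inl heq
      · refine Or.inr (Or.inl ⟨h1, h2, conv _ _ ?_ h3⟩)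
        have hni : c' ∉ Z.erase c := fun hh => h2 (mem_of_mem_erase hh)
        have hp : 1 ≤ Z.card := card_pos.mpr ⟨c, h1⟩
        rw [card_insert_of_notMem hni, card_erase_of_mem h1]
        omega
      · refine Or.inr (Or.inr ⟨h1, h2, conv _ _ ?_ h3⟩)
        have hni : c ∉ Z.erase c' := fun hh => h1 (mem_of_mem_erase hh)
        have hp : 1 ≤ Z.card := card_pos.mpr ⟨c', h2⟩
        rw [card_insert_of_notMem hni, card_erase_of_mem h2]
        omega

end main

/-- Lax composition of nonempty exchange relations has a definite type:
there is a minimal total type `m₀`, a unique pair `(k₀,l₀)` with `k₀ + l₀ = m₀`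
and `λ •_{k₀,l₀} μ` nonempty, and the lax composition `λ •_{k₀,l₀} μ` satisfies
the exchange axiom. -/
theorem laxComp_definite_type {A B C : Type*} [DecidableEq A] [DecidableEq B] [DecidableEq C]
    (r : Finset A → Finset B → Prop) (s : Finset B → Finset C → Prop)
    (hr : ExchAxiom r) (hs : ExchAxiom s)
    (hrne : ∃ X Y, r X Y) (hsne : ∃ Y Z, s Y Z) :
    ∃ m₀ k₀ l₀ : ℕ, k₀ + l₀ = m₀ ∧
      (∃ X Z, BComp r s k₀ l₀ X Z) ∧
      (∀ m : ℕ, (∃ k l, k + l = m ∧ ∃ X Z, BComp r s k l X Z) → m₀ ≤ m) ∧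
      (∀ k l : ℕ, k + l = m₀ → (∃ X Z, BComp r s k l X Z) → (k, l) = (k₀, l₀)) ∧
      ExchAxiom (BComp r s k₀ l₀) := by
  have hSne : {m | ∃ k l, k + l = m ∧ ∃ X Z, BComp r s k l X Z}.Nonempty := by
    obtain ⟨X, Y', hXY⟩ := hrne
    obtain ⟨Y, Z, hYZ⟩ := hsne
    exact ⟨(Y \ Y').card + (Y' \ Y).card, (Y \ Y').card, (Y' \ Y).card, rfl, X, Z,
      Y, Y', hXY, hYZ, rfl, rfl⟩
  have hmem : totalType r s ∈ {m | ∃ k l, k + l = m ∧ ∃ X Z, BComp r s k l X Z} :=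
    Nat.sInf_mem hSne
  obtain ⟨k₀, l₀, hsum, X₀, Z₀, hB₀⟩ := hmem
  refine ⟨totalType r s, k₀, l₀, hsum, ⟨X₀, Z₀, hB₀⟩, ?_, ?_, ?_⟩
  · intro m hm
    exact Nat.sInf_le hm
  · rintro k l hkl ⟨X, Z, hB⟩
    have lax1 : LaxComp r s X Z := ⟨k, l, hkl, hB⟩
    have lax0 : LaxComp r s X₀ Z₀ := ⟨k₀, l₀, hsum, hB₀⟩
    have hcard := exch_inv (lax_exch hr hs)
      ((X \ X₀).card + (X₀ \ X).card + (Z \ Z₀).card + (Z₀ \ Z).card)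
      X Z X₀ Z₀ lax1 lax0 le_rfl
    obtain ⟨hk, hl⟩ := TD hr hs hB hB₀ hkl hsum hcard
    simp [hk, hl]
  · intro X Z X₁ Z₁ hXZ hX₁Z₁ u hu
    have lax1 : LaxComp r s X Z := ⟨k₀, l₀, hsum, hXZ⟩
    have lax2 : LaxComp r s X₁ Z₁ := ⟨k₀, l₀, hsum, hX₁Z₁⟩
    obtain ⟨v, hv, hex⟩ := lax_exch hr hs X Z X₁ Z₁ lax1 lax2 u hu
    exact ⟨v, hv, convert_exch hr hs hsum hXZ hex⟩
end

section
/- Let λ on 𝒫(A) × 𝒫(B) and μ on 𝒫(B) × 𝒫(C) be nonempty relations satisfying the exchange axiom, and let η be the covering relation on 𝒫(B) × 𝒫(B) ((X,Y) ∈ η iff X ⊆ Y, |Y| = |X|+1). Then: (i) for all k, l ≥ 0, λ •_{k,l} μ ⊆ λ ∘ η^{∘k} ∘ (η†)^{∘l} ∘ μ (with the k copies of η and l copies of η† composed in any order); (ii) if λ ∘ η^{∘k} ∘ (η†)^{∘l} ∘ μ is nonempty, then the total type of λ • μ is at most k + l. -/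
open Finset

def CompWord {B : Type*} [DecidableEq B] : List Bool → Finset B → Finset B → Prop
  | [] => Eq
  | b :: w =>
      RelComp
        (fun X Y : Finset B =>
          if b then X ⊆ Y ∧ Y.card = X.card + 1 else Y ⊆ X ∧ X.card = Y.card + 1)
        (CompWord w)

lemma compWord_of_counts {B : Type*} [DecidableEq B] :
    ∀ (w : List Bool) (S T : Finset B),
      (T \ S).card = w.count true → (S \ T).card = w.count false → CompWord w S T := by
  intro w
  induction w with
  | nil =>
      intro S T h1 h2
      simp only [List.count_nil, Finset.card_eq_zero, Finset.sdiff_eq_empty_iff_subset] at h1 h2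
      exact (Finset.Subset.antisymm h2 h1)
  | cons b w ih =>
      intro S T h1 h2
      cases b with
      | true =>
          simp only [List.count_cons, beq_self_eq_true, if_true, beq_iff_eq, Bool.true_eq_false,
            Bool.false_eq_true, if_false, add_zero] at h1 h2
          have hne : (T \ S).Nonempty := by
            rw [← Finset.card_pos, h1]; omega
          obtain ⟨x, hx⟩ := hne
          have hxT : x ∈ T := (Finset.mem_sdiff.1 hx).1
          have hxS : x ∉ S := (Finset.mem_sdiff.1 hx).2
          refine ⟨insert x S, ⟨Finset.subset_insert _ _, Finset.card_insert_of_notMem hxS⟩, ?_⟩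
          apply ih
          · rw [Finset.sdiff_insert, Finset.card_erase_of_mem hx, h1]; omega
          · rw [Finset.insert_sdiff_of_mem _ hxT]; exact h2
      | false =>
          simp only [List.count_cons, beq_self_eq_true, if_true, beq_iff_eq, Bool.true_eq_false,
            Bool.false_eq_true, if_false, add_zero] at h1 h2
          have hne : (S \ T).Nonempty := by
            rw [← Finset.card_pos, h2]; omega
          obtain ⟨x, hx⟩ := hne
          have hxS : x ∈ S := (Finset.mem_sdiff.1 hx).1
          have hxT : x ∉ T := (Finset.mem_sdiff.1 hx).2
          refine ⟨S.erase x, ⟨Finset.erase_subset _ _, ?_⟩, ?_⟩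
          · have := Finset.card_pos.2 ⟨x, hxS⟩
            rw [Finset.card_erase_of_mem hxS]; omega
          apply ih
          · have : T \ S.erase x = T \ S := by
              ext a; simp only [Finset.mem_sdiff, Finset.mem_erase]
              constructor
              · rintro ⟨ha, h⟩; exact ⟨ha, fun hS => h ⟨fun he => hxT (he ▸ ha), hS⟩⟩
              · rintro ⟨ha, h⟩; exact ⟨ha, fun ⟨_, hS⟩ => h hS⟩
            rw [this]; exact h1
          · rw [Finset.erase_sdiff_comm, Finset.card_erase_of_mem hx, h2]; omega

lemma compWord_counts {B : Type*} [DecidableEq B] :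
    ∀ (w : List Bool) (S T : Finset B), CompWord w S T →
      (T \ S).card ≤ w.count true ∧ (S \ T).card ≤ w.count false := by
  intro w
  induction w with
  | nil =>
      intro S T h
      cases h
      simp
  | cons b w ih =>
      intro S T h
      obtain ⟨S₁, hstep, hw⟩ := h
      obtain ⟨h1, h2⟩ := ih S₁ T hw
      cases b with
      | true =>
          simp only [if_pos rfl] at hstep
          obtain ⟨hsub, hcard⟩ := hstep
          simp only [List.count_cons, beq_self_eq_true, if_true, beq_iff_eq, Bool.true_eq_false,
            Bool.false_eq_true, if_false, add_zero]
          constructor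
          · have hsub2 : T \ S ⊆ (T \ S₁) ∪ (S₁ \ S) := by
              intro a ha
              simp only [Finset.mem_sdiff, Finset.mem_union] at ha ⊢
              by_cases h : a ∈ S₁ <;> tauto
            calc (T \ S).card ≤ ((T \ S₁) ∪ (S₁ \ S)).card := Finset.card_le_card hsub2
              _ ≤ (T \ S₁).card + (S₁ \ S).card := Finset.card_union_le _ _
              _ ≤ w.count true + 1 := by
                  have : (S₁ \ S).card = 1 := by
                    rw [Finset.card_sdiff_of_subset hsub]; omega
                  omega
          · exact le_trans (Finset.card_le_card (Finset.sdiff_subset_sdiff hsub le_rfl)) h2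
      | false =>
          simp only [reduceCtorEq, if_false] at hstep
          obtain ⟨hsub, hcard⟩ := hstep
          simp only [List.count_cons, beq_self_eq_true, if_true, beq_iff_eq, Bool.true_eq_false,
            Bool.false_eq_true, if_false, add_zero]
          constructor
          · exact le_trans (Finset.card_le_card (Finset.sdiff_subset_sdiff le_rfl hsub)) h1
          · have hsub2 : S \ T ⊆ (S₁ \ T) ∪ (S \ S₁) := by
              intro a ha
              simp only [Finset.mem_sdiff, Finset.mem_union] at ha ⊢
              by_cases h : a ∈ S₁ <;> tauto
            calc (S \ T).card ≤ ((S₁ \ T) ∪ (S \ S₁)).card := Finset.card_le_card hsub2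
              _ ≤ (S₁ \ T).card + (S \ S₁).card := Finset.card_union_le _ _
              _ ≤ w.count false + 1 := by
                  have : (S \ S₁).card = 1 := by
                    rw [Finset.card_sdiff_of_subset hsub]; omega
                  omega

/-- (i) `λ •_{k,l} μ ⊆ λ ∘ η^{∘k} ∘ (η†)^{∘l} ∘ μ` for the `k` copies of the covering
relation `η` and `l` copies of its adjoint `η†` composed in any order; and
(ii) if that strict composite is nonempty then the total type of `λ • μ` is at
most `k + l`. -/
theorem laxComp_vs_covering {A B C : Type*} [DecidableEq A] [DecidableEq B] [DecidableEq C]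
    (r : Finset A → Finset B → Prop) (s : Finset B → Finset C → Prop)
    (hr : ExchAxiom r) (hs : ExchAxiom s)
    (hrne : ∃ X Y, r X Y) (hsne : ∃ Y Z, s Y Z)
    (k l : ℕ) (w : List Bool) (hk : w.count true = k) (hl : w.count false = l) :
    (∀ X Z, BComp r s k l X Z → RelComp (RelComp r (CompWord w)) s X Z) ∧
    ((∃ X Z, RelComp (RelComp r (CompWord w)) s X Z) → totalType r s ≤ k + l) := by
  constructor
  · rintro X Z ⟨Y, Y', hrXY', hsYZ, hkc, hlc⟩
    exact ⟨Y, ⟨Y', hrXY', compWord_of_counts w Y' Y (by rw [hk]; exact hkc)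
      (by rw [hl]; exact hlc)⟩, hsYZ⟩
  · rintro ⟨X, Z, Y₀, ⟨Y', hr', hw⟩, hs'⟩
    obtain ⟨h1, h2⟩ := compWord_counts w Y' Y₀ hw
    have hmem : (Y₀ \ Y').card + (Y' \ Y₀).card ∈
        {m | ∃ k l, k + l = m ∧ ∃ X Z, BComp r s k l X Z} :=
      ⟨(Y₀ \ Y').card, (Y' \ Y₀).card, rfl, X, Z, Y₀, Y', hr', hs', rfl, rfl⟩
    exact le_trans (Nat.sInf_le hmem) (by rw [hk] at h1; rw [hl] at h2; omega)
end

section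
/- Lax composition of exchange relations is associative: if λ on 𝒫(A) × 𝒫(B), μ on 𝒫(B) × 𝒫(C), ν on 𝒫(C) × 𝒫(D) are nonempty relations satisfying the exchange axiom, then (λ • μ) • ν = λ • (μ • ν). -/
open Finset

namespace LaxAssoc

section wgtsec
variable {α β : Type*} [DecidableEq α] [DecidableEq β]

def wgt (Y Y' : Finset β) : ℕ := (Y \ Y').card + (Y' \ Y).card

lemma wgt_comm (Y Y' : Finset β) : wgt Y Y' = wgt Y' Y := by
  simp [wgt, Nat.add_comm]

lemma wgt_insert_mem {Y Y' : Finset β} {b : β} (hb : b ∉ Y) (hb' : b ∈ Y') :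
    wgt (insert b Y) Y' + 1 = wgt Y Y' := by
  unfold wgt
  have h1 : insert b Y \ Y' = Y \ Y' := by
    ext x; rcases eq_or_ne x b with rfl | hxb <;> simp [*] <;> tauto
  have h2 : Y' \ insert b Y = (Y' \ Y).erase b := by
    ext x; rcases eq_or_ne x b with rfl | hxb <;> simp [*] <;> tauto
  rw [h1, h2, card_erase_of_mem (by simp [mem_sdiff, hb', hb])]
  have : 0 < (Y' \ Y).card := card_pos.2 ⟨b, by simp [mem_sdiff, hb', hb]⟩
  omega

lemma wgt_insert_not_mem {Y Y' : Finset β} {b : β} (hb : b ∉ Y) (hb' : b ∉ Y') :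
    wgt (insert b Y) Y' = wgt Y Y' + 1 := by
  unfold wgt
  have h1 : insert b Y \ Y' = insert b (Y \ Y') := by
    ext x; rcases eq_or_ne x b with rfl | hxb <;> simp [*] <;> tauto
  have h2 : Y' \ insert b Y = Y' \ Y := by
    ext x; rcases eq_or_ne x b with rfl | hxb <;> simp [*] <;> tauto
  rw [h1, h2, card_insert_of_notMem (by simp [mem_sdiff, hb])]
  omega

lemma wgt_erase_not_mem {Y Y' : Finset β} {b : β} (hb : b ∈ Y) (hb' : b ∉ Y') :
    wgt (Y.erase b) Y' + 1 = wgt Y Y' := by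
  unfold wgt
  have h1 : Y.erase b \ Y' = (Y \ Y').erase b := by
    ext x; rcases eq_or_ne x b with rfl | hxb <;> simp [*] <;> tauto
  have h2 : Y' \ Y.erase b = Y' \ Y := by
    ext x; rcases eq_or_ne x b with rfl | hxb <;> simp [*] <;> tauto
  rw [h1, h2, card_erase_of_mem (by simp [mem_sdiff, hb, hb'])]
  have : 0 < (Y \ Y').card := card_pos.2 ⟨b, by simp [mem_sdiff, hb, hb']⟩
  omega

lemma wgt_erase_mem {Y Y' : Finset β} {b : β} (hb : b ∈ Y) (hb' : b ∈ Y') :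
    wgt (Y.erase b) Y' = wgt Y Y' + 1 := by
  unfold wgt
  have h1 : Y.erase b \ Y' = Y \ Y' := by
    ext x; rcases eq_or_ne x b with rfl | hxb <;> simp [*] <;> tauto
  have h2 : Y' \ Y.erase b = insert b (Y' \ Y) := by
    ext x; rcases eq_or_ne x b with rfl | hxb <;> simp [*] <;> tauto
  rw [h1, h2, card_insert_of_notMem (by simp [mem_sdiff, hb])]
  omega


def flipRel {α β : Type*} (r : Finset α → Finset β → Prop) :
    Finset β → Finset α → Prop := fun Y X => r X Y

def E1L (r : Finset α → Finset β → Prop) : Prop :=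
  ∀ ⦃X Y' X₀ Y₀' : _⦄, r X Y' → r X₀ Y₀' → ∀ ⦃a⦄, a ∉ X → a ∈ X₀ →
    (∃ a', a' ∈ X ∧ a' ∉ X₀ ∧ r (insert a (X.erase a')) Y') ∨
    (∃ b, b ∈ Y₀' ∧ b ∉ Y' ∧ r (insert a X) (insert b Y'))

def E1R (r : Finset α → Finset β → Prop) : Prop :=
  ∀ ⦃X Y' X₀ Y₀' : _⦄, r X Y' → r X₀ Y₀' → ∀ ⦃b⦄, b ∈ Y' → b ∉ Y₀' →
    (∃ a, a ∈ X ∧ a ∉ X₀ ∧ r (X.erase a) (Y'.erase b)) ∨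
    (∃ b', b' ∈ Y₀' ∧ b' ∉ Y' ∧ r X (insert b' (Y'.erase b)))

def E3L (r : Finset α → Finset β → Prop) : Prop :=
  ∀ ⦃X Y' X₀ Y₀' : _⦄, r X Y' → r X₀ Y₀' → ∀ ⦃a⦄, a ∈ X → a ∉ X₀ →
    (∃ a', a' ∉ X ∧ a' ∈ X₀ ∧ r (insert a' (X.erase a)) Y') ∨
    (∃ b, b ∈ Y' ∧ b ∉ Y₀' ∧ r (X.erase a) (Y'.erase b))

def E3R (r : Finset α → Finset β → Prop) : Prop :=
  ∀ ⦃X Y' X₀ Y₀' : _⦄, r X Y' → r X₀ Y₀' → ∀ ⦃b⦄, b ∉ Y' → b ∈ Y₀' →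
    (∃ a, a ∉ X ∧ a ∈ X₀ ∧ r (insert a X) (insert b Y')) ∨
    (∃ b', b' ∈ Y' ∧ b' ∉ Y₀' ∧ r X (insert b (Y'.erase b')))

section flipglue
variable {r : Finset α → Finset β → Prop}

lemma flip_E1L (h : E3R r) : E1L (flipRel r) := by
  intro Z' Y Z₀' Y₀ h1 h2 a ha ha₀
  rcases h h1 h2 ha ha₀ with ⟨b, hb1, hb2, hb3⟩ | ⟨b', hb1, hb2, hb3⟩
  · exact Or.inr ⟨b, hb2, hb1, hb3⟩
  · exact Or.inl ⟨b', hb1, hb2, hb3⟩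

lemma flip_E1R (h : E3L r) : E1R (flipRel r) := by
  intro Z' Y Z₀' Y₀ h1 h2 b hb hb₀
  rcases h h1 h2 hb hb₀ with ⟨a', ha1, ha2, ha3⟩ | ⟨b', hb1, hb2, hb3⟩
  · exact Or.inr ⟨a', ha2, ha1, ha3⟩
  · exact Or.inl ⟨b', hb1, hb2, hb3⟩

lemma flip_E3L (h : E1R r) : E3L (flipRel r) := by
  intro Z' Y Z₀' Y₀ h1 h2 a ha ha₀
  rcases h h1 h2 ha ha₀ with ⟨a', ha1, ha2, ha3⟩ | ⟨b', hb1, hb2, hb3⟩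
  · exact Or.inr ⟨a', ha1, ha2, ha3⟩
  · exact Or.inl ⟨b', hb2, hb1, hb3⟩

lemma flip_E3R (h : E1L r) : E3R (flipRel r) := by
  intro Z' Y Z₀' Y₀ h1 h2 b hb hb₀
  rcases h h1 h2 hb hb₀ with ⟨a', ha1, ha2, ha3⟩ | ⟨b', hb1, hb2, hb3⟩
  · exact Or.inr ⟨a', ha1, ha2, ha3⟩
  · exact Or.inl ⟨b', hb2, hb1, hb3⟩

end flipglue

lemma recon_insert {X X₀ : Finset α} {a : α} (h1 : X \ X₀ = ∅) (h2 : X₀ \ X = {a}) :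
    X₀ = insert a X := by
  have m1 : ∀ x, x ∈ X ∧ x ∉ X₀ ↔ False := fun x => by
    rw [← mem_sdiff, h1]; simp
  have m2 : ∀ x, x ∈ X₀ ∧ x ∉ X ↔ x = a := fun x => by
    rw [← mem_sdiff, h2, mem_singleton]
  ext x
  specialize m1 x; specialize m2 x
  simp only [mem_insert]
  by_cases hx : x = a <;> tauto

lemma recon_eq {X X₀ : Finset α} (h1 : X \ X₀ = ∅) (h2 : X₀ \ X = ∅) : X₀ = X := by
  have m1 : ∀ x, x ∈ X ∧ x ∉ X₀ ↔ False := fun x => by rw [← mem_sdiff, h1]; simp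
  have m2 : ∀ x, x ∈ X₀ ∧ x ∉ X ↔ False := fun x => by rw [← mem_sdiff, h2]; simp
  ext x; specialize m1 x; specialize m2 x; tauto

lemma recon_swap {X X₀ : Finset α} {a a₂ : α} (h1 : X \ X₀ = {a}) (h2 : X₀ \ X = {a₂}) :
    X₀ = insert a₂ (X.erase a) := by
  have m1 : ∀ x, x ∈ X ∧ x ∉ X₀ ↔ x = a := fun x => by rw [← mem_sdiff, h1, mem_singleton]
  have m2 : ∀ x, x ∈ X₀ ∧ x ∉ X ↔ x = a₂ := fun x => by rw [← mem_sdiff, h2, mem_singleton]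
  have hne : a ≠ a₂ := by
    intro h
    have := (m1 a).2 rfl
    have := (m2 a₂).2 rfl
    rw [← h] at this
    tauto
  ext x
  simp only [mem_insert, mem_erase]
  by_cases hx : x = a
  · subst hx
    have := (m1 x).2 rfl
    tauto
  · by_cases hx2 : x = a₂
    · subst hx2
      have := (m2 x).2 rfl
      tauto
    · specialize m1 x; specialize m2 x; tauto

lemma recon_erase {X X₀ : Finset α} {a : α} (h1 : X \ X₀ = {a}) (h2 : X₀ \ X = ∅) :
    X₀ = X.erase a := by
  have m1 : ∀ x, x ∈ X ∧ x ∉ X₀ ↔ x = a := fun x => by rw [← mem_sdiff, h1, mem_singleton]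
  have m2 : ∀ x, x ∈ X₀ ∧ x ∉ X ↔ False := fun x => by rw [← mem_sdiff, h2]; simp
  ext x
  simp only [mem_erase]
  by_cases hx : x = a
  · subst hx; have := (m1 x).2 rfl; tauto
  · specialize m1 x; specialize m2 x; tauto


section Ederive
variable {r : Finset α → Finset β → Prop}

lemma exch_E1L (hr : ExchAxiom r) : E1L r := by
  intro X Y' X₀ Y₀' h h₀ a ha ha₀
  obtain ⟨v, hv, hex⟩ := hr X Y' X₀ Y₀' h h₀ (Sum.inl a) ha
  cases v with
  | inl a' =>
    rcases hex with rfl | ⟨h1, _⟩ | ⟨_, h2, h3⟩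
    · exact absurd ha₀ hv
    · exact absurd h1 ha
    · exact Or.inl ⟨a', h2, hv, h3⟩
  | inr b =>
    rcases hex with ⟨h1, _⟩ | ⟨_, h2, h3⟩
    · exact absurd h1 ha
    · exact Or.inr ⟨b, hv, h2, h3⟩

lemma exch_E1R (hr : ExchAxiom r) : E1R r := by
  intro X Y' X₀ Y₀' h h₀ b hb hb₀
  obtain ⟨v, hv, hex⟩ := hr X Y' X₀ Y₀' h h₀ (Sum.inr b) hb
  cases v with
  | inl a =>
    rcases hex with ⟨_, h2, h3⟩ | ⟨h1, _⟩
    · exact Or.inl ⟨a, h2, hv, h3⟩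
    · exact absurd hb h1
  | inr b' =>
    rcases hex with rfl | ⟨_, h2, h3⟩ | ⟨h1, _⟩
    · exact absurd hv hb₀
    · exact Or.inr ⟨b', hv, h2, h3⟩
    · exact absurd hb h1

/-- if F(p)\F(p') is empty then so is F(p')\F(p) -/
lemma dc_zero (h1L : E1L r) (h1R : E1R r) {X Y' X₀ Y₀'} (h : r X Y') (h₀ : r X₀ Y₀')
    (hd : (X₀ \ X).card + (Y' \ Y₀').card = 0) :
    (X \ X₀).card + (Y₀' \ Y').card = 0 := by
  have hX : X₀ \ X = ∅ := card_eq_zero.1 (by omega)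
  have hY : Y' \ Y₀' = ∅ := card_eq_zero.1 (by omega)
  by_contra hne
  have : (X \ X₀).Nonempty ∨ (Y₀' \ Y').Nonempty := by
    rcases Nat.eq_zero_or_pos (X \ X₀).card with h1 | h1
    · exact Or.inr (card_pos.1 (by omega))
    · exact Or.inl (card_pos.1 h1)
  rcases this with ⟨a, ha⟩ | ⟨b, hb⟩
  · rw [mem_sdiff] at ha
    rcases h1L h₀ h ha.2 ha.1 with ⟨a', ha1, ha2, _⟩ | ⟨b, hb1, hb2, _⟩
    · exact (eq_empty_iff_forall_notMem.1 hX a') (mem_sdiff.2 ⟨ha1, ha2⟩)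
    · exact (eq_empty_iff_forall_notMem.1 hY b) (mem_sdiff.2 ⟨hb1, hb2⟩)
  · rw [mem_sdiff] at hb
    rcases h1R h₀ h hb.1 hb.2 with ⟨a, ha1, ha2, _⟩ | ⟨b', hb1, hb2, _⟩
    · exact (eq_empty_iff_forall_notMem.1 hX a) (mem_sdiff.2 ⟨ha1, ha2⟩)
    · exact (eq_empty_iff_forall_notMem.1 hY b') (mem_sdiff.2 ⟨hb1, hb2⟩)

lemma dc_symm (h1L : E1L r) (h1R : E1R r) :
    ∀ n : ℕ, ∀ X Y' X₀ Y₀', r X Y' → r X₀ Y₀' →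
    (X₀ \ X).card + (Y' \ Y₀').card = n → (X \ X₀).card + (Y₀' \ Y').card = n := by
  intro n
  induction n using Nat.strong_induction_on with
  | _ n IH =>
  intro X Y' X₀ Y₀' h h₀ hd
  rcases Nat.eq_zero_or_pos n with rfl | hn
  · exact dc_zero h1L h1R h h₀ hd
  have : (X₀ \ X).Nonempty ∨ (Y' \ Y₀').Nonempty := by
    rcases Nat.eq_zero_or_pos (X₀ \ X).card with h1 | h1
    · exact Or.inr (card_pos.1 (by omega))
    · exact Or.inl (card_pos.1 h1)
  rcases this with ⟨a, ha⟩ | ⟨b, hb⟩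
  · rw [mem_sdiff] at ha
    obtain ⟨ha₀, haX⟩ := ha
    rcases h1L h h₀ haX ha₀ with ⟨a', ha1, ha2, hq⟩ | ⟨b, hb1, hb2, hq⟩
    · -- q = (insert a (X.erase a'), Y'), a' ∈ X \ X₀
      set X₁ := insert a (X.erase a') with hX₁
      have e1 : X₀ \ X₁ = (X₀ \ X).erase a := by
        ext x
        rcases eq_or_ne x a with rfl | hxa
        · simp [hX₁]
        rcases eq_or_ne x a' with rfl | hxa'
        · simp [hX₁, ha1, ha2, hxa]
        · simp [hX₁, hxa, hxa']
      have haa' : a ≠ a' := by rintro rfl; exact haX ha1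
      have e2 : X₁ \ X₀ = (X \ X₀).erase a' := by
        ext x
        rcases eq_or_ne x a with rfl | hxa
        · simp [hX₁, ha₀, haa']
        rcases eq_or_ne x a' with rfl | hxa'
        · simp [hX₁, hxa]
        · simp [hX₁, hxa, hxa']
      have hpos0 : 0 < (X₀ \ X).card := card_pos.2 ⟨a, mem_sdiff.2 ⟨ha₀, haX⟩⟩
      have c1 : (X₀ \ X₁).card + (Y' \ Y₀').card = n - 1 := by
        rw [e1, card_erase_of_mem (mem_sdiff.2 ⟨ha₀, haX⟩)]
        omega
      have := IH (n-1) (by omega) X₁ Y' X₀ Y₀' hq h₀ c1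
      rw [e2, card_erase_of_mem (mem_sdiff.2 ⟨ha1, ha2⟩)] at this
      have hpos : 0 < (X \ X₀).card := card_pos.2 ⟨a', mem_sdiff.2 ⟨ha1, ha2⟩⟩
      omega
    · -- q = (insert a X, insert b Y'), b ∈ Y₀' \ Y'
      have e1 : X₀ \ insert a X = (X₀ \ X).erase a := by
        ext x; rcases eq_or_ne x a with rfl | hxa <;> simp [*]
      have e2 : insert b Y' \ Y₀' = Y' \ Y₀' := by
        ext x; rcases eq_or_ne x b with rfl | hxb <;> simp [*]
      have e3 : insert a X \ X₀ = X \ X₀ := by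
        ext x; rcases eq_or_ne x a with rfl | hxa <;> simp [*]
      have e4 : Y₀' \ insert b Y' = (Y₀' \ Y').erase b := by
        ext x; rcases eq_or_ne x b with rfl | hxb <;> simp [*]
      have hpos0 : 0 < (X₀ \ X).card := card_pos.2 ⟨a, mem_sdiff.2 ⟨ha₀, haX⟩⟩
      have c1 : (X₀ \ insert a X).card + (insert b Y' \ Y₀').card = n - 1 := by
        rw [e1, e2, card_erase_of_mem (mem_sdiff.2 ⟨ha₀, haX⟩)]; omega
      have := IH (n-1) (by omega) _ _ X₀ Y₀' hq h₀ c1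
      rw [e3, e4, card_erase_of_mem (mem_sdiff.2 ⟨hb1, hb2⟩)] at this
      have hpos : 0 < (Y₀' \ Y').card := card_pos.2 ⟨b, mem_sdiff.2 ⟨hb1, hb2⟩⟩
      omega
  · rw [mem_sdiff] at hb
    rcases h1R h h₀ hb.1 hb.2 with ⟨a, ha1, ha2, hq⟩ | ⟨b', hb1, hb2, hq⟩
    · -- q = (X.erase a, Y'.erase b), a ∈ X \ X₀
      have e1 : X₀ \ X.erase a = X₀ \ X := by
        ext x; rcases eq_or_ne x a with rfl | hxa <;> simp [*]
      have e2 : Y'.erase b \ Y₀' = (Y' \ Y₀').erase b := by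
        ext x; rcases eq_or_ne x b with rfl | hxb <;> simp [*]
      have e3 : X.erase a \ X₀ = (X \ X₀).erase a := by
        ext x; rcases eq_or_ne x a with rfl | hxa <;> simp [*]
      have e4 : Y₀' \ Y'.erase b = Y₀' \ Y' := by
        ext x; rcases eq_or_ne x b with rfl | hxb <;> simp [*, hb.2]
      have hpos0 : 0 < (Y' \ Y₀').card := card_pos.2 ⟨b, mem_sdiff.2 hb⟩
      have c1 : (X₀ \ X.erase a).card + (Y'.erase b \ Y₀').card = n - 1 := by
        rw [e1, e2, card_erase_of_mem (mem_sdiff.2 hb)]; omega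
      have := IH (n-1) (by omega) _ _ X₀ Y₀' hq h₀ c1
      rw [e3, e4, card_erase_of_mem (mem_sdiff.2 ⟨ha1, ha2⟩)] at this
      have hpos : 0 < (X \ X₀).card := card_pos.2 ⟨a, mem_sdiff.2 ⟨ha1, ha2⟩⟩
      omega
    · -- q = (X, insert b' (Y'.erase b)), b' ∈ Y₀' \ Y'
      set Y₁ := insert b' (Y'.erase b) with hY₁
      have hbb' : b ≠ b' := by rintro rfl; exact hb.2 hb1
      have e1 : Y₁ \ Y₀' = (Y' \ Y₀').erase b := by
        ext x
        rcases eq_or_ne x b with rfl | hxb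
        · simp [hY₁, hbb']
        rcases eq_or_ne x b' with rfl | hxb'
        · simp [hY₁, hb1]
        · simp [hY₁, hxb, hxb']
      have e2 : Y₀' \ Y₁ = (Y₀' \ Y').erase b' := by
        ext x
        rcases eq_or_ne x b with rfl | hxb
        · simp [hY₁, hb.1, hb.2]
        rcases eq_or_ne x b' with rfl | hxb'
        · simp [hY₁]
        · simp [hY₁, hxb, hxb']
      have hpos0 : 0 < (Y' \ Y₀').card := card_pos.2 ⟨b, mem_sdiff.2 hb⟩
      have c1 : (X₀ \ X).card + (Y₁ \ Y₀').card = n - 1 := by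
        rw [e1, card_erase_of_mem (mem_sdiff.2 hb)]; omega
      have := IH (n-1) (by omega) _ _ X₀ Y₀' hq h₀ c1
      rw [e2, card_erase_of_mem (mem_sdiff.2 ⟨hb1, hb2⟩)] at this
      have hpos : 0 < (Y₀' \ Y').card := card_pos.2 ⟨b', mem_sdiff.2 ⟨hb1, hb2⟩⟩
      omega
/-- mirror exchange, right side -/
lemma E3R_of (h1L : E1L r) (h1R : E1R r) :
    ∀ n : ℕ, ∀ X Y' X₀ Y₀', r X Y' → r X₀ Y₀' →
    (X \ X₀).card + (Y₀' \ Y').card = n → ∀ ⦃b⦄, b ∉ Y' → b ∈ Y₀' →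
    (∃ a, a ∉ X ∧ a ∈ X₀ ∧ r (insert a X) (insert b Y')) ∨
    (∃ b', b' ∈ Y' ∧ b' ∉ Y₀' ∧ r X (insert b (Y'.erase b'))) := by
  intro n
  induction n using Nat.strong_induction_on with
  | _ n IH =>
  intro X Y' X₀ Y₀' h h₀ hd b hb hb₀
  have hbmem : b ∈ Y₀' \ Y' := mem_sdiff.2 ⟨hb₀, hb⟩
  have hpos : 0 < (Y₀' \ Y').card := card_pos.2 ⟨b, hbmem⟩
  rcases Nat.lt_or_ge n 2 with hn | hn
  · -- base case: n = 1
    have hXe : X \ X₀ = ∅ := by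
      apply card_eq_zero.1; omega
    have hYs : Y₀' \ Y' = {b} := by
      apply eq_singleton_iff_unique_mem.2
      refine ⟨hbmem, fun x hx => ?_⟩
      by_contra hxb
      have : 2 ≤ (Y₀' \ Y').card := by
        have := one_lt_card.2 ⟨x, hx, b, hbmem, hxb⟩
        omega
      omega
    have hd' := dc_symm h1L h1R n X₀ Y₀' X Y' h₀ h (by
      rw [hXe, hYs] at hd ⊢
      simpa using hd)
    -- hd' : (X₀ \ X).card + (Y' \ Y₀').card = n, with n = 1
    rcases Nat.eq_zero_or_pos (X₀ \ X).card with hc1 | hc1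
    · -- X₀ = X, Y' \ Y₀' = {b'}
      have hY'c : (Y' \ Y₀').card = 1 := by omega
      obtain ⟨b', hbs⟩ := card_eq_one.1 hY'c
      have hXeq : X₀ = X := recon_eq hXe (card_eq_zero.1 hc1)
      have hYeq : Y₀' = insert b (Y'.erase b') := recon_swap hbs hYs
      have hb'1 : b' ∈ Y' ∧ b' ∉ Y₀' := by
        have := hbs ▸ mem_singleton_self b'
        exact mem_sdiff.1 (this)
      exact Or.inr ⟨b', hb'1.1, hb'1.2, by rw [← hYeq, ← hXeq]; exact h₀⟩
    · -- X₀ \ X = {a}, Y' ⊆ Y₀'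
      have hXc : (X₀ \ X).card = 1 := by omega
      obtain ⟨a, has⟩ := card_eq_one.1 hXc
      have hY'e : Y' \ Y₀' = ∅ := card_eq_zero.1 (by omega)
      have hXeq : X₀ = insert a X := recon_insert hXe has
      have hYeq : Y₀' = insert b Y' := by
        have := recon_insert hY'e hYs
        exact this
      have ha1 : a ∈ X₀ ∧ a ∉ X := mem_sdiff.1 (has ▸ mem_singleton_self a)
      exact Or.inl ⟨a, ha1.2, ha1.1, by rw [← hXeq, ← hYeq]; exact h₀⟩
  · -- step: n ≥ 2, pick z ∈ F(p')\F(p), z ≠ u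
    rcases Nat.eq_zero_or_pos (X \ X₀).card with hc1 | hc1
    · -- pick b₃ ∈ (Y₀' \ Y').erase b
      have : 0 < ((Y₀' \ Y').erase b).card := by
        rw [card_erase_of_mem hbmem]; omega
      obtain ⟨b₃, hb₃⟩ := card_pos.1 this
      have hb₃b : b₃ ≠ b := (mem_erase.1 hb₃).1
      have hb₃m : b₃ ∈ Y₀' ∧ b₃ ∉ Y' := mem_sdiff.1 (mem_erase.1 hb₃).2
      -- E1R on (p₀, p) with b₃
      rcases h1R h₀ h hb₃m.1 hb₃m.2 with ⟨a₂, ha1, ha2, hq⟩ | ⟨b₂, hb1, hb2, hq⟩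
      · -- q = (X₀.erase a₂, Y₀'.erase b₃), a₂ ∈ X₀ \ X
        have e1 : X \ X₀.erase a₂ = X \ X₀ := by
          ext x; rcases eq_or_ne x a₂ with rfl | hx <;> simp [*]
        have e2 : Y₀'.erase b₃ \ Y' = (Y₀' \ Y').erase b₃ := by
          ext x; rcases eq_or_ne x b₃ with rfl | hx <;> simp [*, hb₃m.2]
        have c1 : (X \ X₀.erase a₂).card + (Y₀'.erase b₃ \ Y').card = n - 1 := by
          rw [e1, e2, card_erase_of_mem (mem_sdiff.2 ⟨hb₃m.1, hb₃m.2⟩)]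
          have : 0 < (Y₀' \ Y').card := hpos
          omega
        rcases IH (n-1) (by omega) X Y' _ _ h hq c1 hb (mem_erase.2 ⟨Ne.symm hb₃b, hb₀⟩)
          with ⟨a'', ha''1, ha''2, hw⟩ | ⟨b'', hb''1, hb''2, hw⟩
        · exact Or.inl ⟨a'', ha''1, mem_of_mem_erase ha''2, hw⟩
        · refine Or.inr ⟨b'', hb''1, fun hmem => hb''2 (mem_erase.2 ⟨?_, hmem⟩), hw⟩
          rintro rfl; exact hb₃m.2 hb''1
      · -- q = (X₀, insert b₂ (Y₀'.erase b₃)), b₂ ∈ Y' \ Y₀'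
        have e2 : insert b₂ (Y₀'.erase b₃) \ Y' = (Y₀' \ Y').erase b₃ := by
          ext x
          rcases eq_or_ne x b₂ with rfl | hx1
          · simp [hb1]
          rcases eq_or_ne x b₃ with rfl | hx2 <;> simp [*, hb₃m.2]
        have c1 : (X \ X₀).card + ((insert b₂ (Y₀'.erase b₃)) \ Y').card = n - 1 := by
          rw [e2, card_erase_of_mem (mem_erase.1 hb₃).2]
          omega
        have hbmem2 : b ∈ insert b₂ (Y₀'.erase b₃) :=
          mem_insert_of_mem (mem_erase.2 ⟨Ne.symm hb₃b, hb₀⟩)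
        rcases IH (n-1) (by omega) X Y' _ _ h hq c1 hb hbmem2
          with ⟨a'', ha''1, ha''2, hw⟩ | ⟨b'', hb''1, hb''2, hw⟩
        · exact Or.inl ⟨a'', ha''1, ha''2, hw⟩
        · refine Or.inr ⟨b'', hb''1, fun hmem => hb''2 ?_, hw⟩
          refine mem_insert_of_mem (mem_erase.2 ⟨?_, hmem⟩)
          rintro rfl; exact hb₃m.2 hb''1
    · -- pick a₃ ∈ X \ X₀
      obtain ⟨a₃, ha₃⟩ := card_pos.1 hc1
      have ha₃m : a₃ ∈ X ∧ a₃ ∉ X₀ := mem_sdiff.1 ha₃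
      rcases h1L h₀ h ha₃m.2 ha₃m.1 with ⟨a₂, ha1, ha2, hq⟩ | ⟨b₂, hb1, hb2, hq⟩
      · -- q = (insert a₃ (X₀.erase a₂), Y₀'), a₂ ∈ X₀ \ X
        set X₁ := insert a₃ (X₀.erase a₂) with hX₁
        have e1 : X \ X₁ = (X \ X₀).erase a₃ := by
          ext x
          rcases eq_or_ne x a₃ with rfl | hx1
          · simp [hX₁]
          rcases eq_or_ne x a₂ with rfl | hx2
          · simp [hX₁, ha2, hx1]
          · simp [hX₁, hx1, hx2]
        have c1 : (X \ X₁).card + (Y₀' \ Y').card = n - 1 := by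
          rw [e1, card_erase_of_mem ha₃]
          have : 0 < (X \ X₀).card := hc1
          omega
        rcases IH (n-1) (by omega) X Y' _ _ h hq c1 hb hb₀
          with ⟨a'', ha''1, ha''2, hw⟩ | ⟨b'', hb''1, hb''2, hw⟩
        · refine Or.inl ⟨a'', ha''1, ?_, hw⟩
          have hne : a'' ≠ a₃ := by rintro rfl; exact ha''1 ha₃m.1
          rcases mem_insert.1 ha''2 with h' | h'
          · exact absurd h' hne
          · exact mem_of_mem_erase h'
        · exact Or.inr ⟨b'', hb''1, hb''2, hw⟩
      · -- q = (insert a₃ X₀, insert b₂ Y₀'), b₂ ∈ Y' \ Y₀'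
        have e1 : X \ insert a₃ X₀ = (X \ X₀).erase a₃ := by
          ext x; rcases eq_or_ne x a₃ with rfl | hx <;> simp [*]
        have e2 : insert b₂ Y₀' \ Y' = Y₀' \ Y' := by
          ext x; rcases eq_or_ne x b₂ with rfl | hx <;> simp [*]
        have c1 : (X \ insert a₃ X₀).card + (insert b₂ Y₀' \ Y').card = n - 1 := by
          rw [e1, e2, card_erase_of_mem ha₃]
          have : 0 < (X \ X₀).card := hc1
          omega
        have hbmem2 : b ∈ insert b₂ Y₀' := mem_insert_of_mem hb₀
        rcases IH (n-1) (by omega) X Y' _ _ h hq c1 hb hbmem2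
          with ⟨a'', ha''1, ha''2, hw⟩ | ⟨b'', hb''1, hb''2, hw⟩
        · refine Or.inl ⟨a'', ha''1, ?_, hw⟩
          have hne : a'' ≠ a₃ := by rintro rfl; exact ha''1 ha₃m.1
          rcases mem_insert.1 ha''2 with h' | h'
          · exact absurd h' hne
          · exact h'
        · refine Or.inr ⟨b'', hb''1, fun hmem => hb''2 (mem_insert_of_mem hmem), hw⟩
/-- mirror exchange, left side -/
lemma E3L_of (h1L : E1L r) (h1R : E1R r) :
    ∀ n : ℕ, ∀ X Y' X₀ Y₀', r X Y' → r X₀ Y₀' →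
    (X \ X₀).card + (Y₀' \ Y').card = n → ∀ ⦃a⦄, a ∈ X → a ∉ X₀ →
    (∃ a', a' ∉ X ∧ a' ∈ X₀ ∧ r (insert a' (X.erase a)) Y') ∨
    (∃ b, b ∈ Y' ∧ b ∉ Y₀' ∧ r (X.erase a) (Y'.erase b)) := by
  intro n
  induction n using Nat.strong_induction_on with
  | _ n IH =>
  intro X Y' X₀ Y₀' h h₀ hd a ha ha₀
  have hamem : a ∈ X \ X₀ := mem_sdiff.2 ⟨ha, ha₀⟩
  have hpos : 0 < (X \ X₀).card := card_pos.2 ⟨a, hamem⟩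
  rcases Nat.lt_or_ge n 2 with hn | hn
  · -- base case: n = 1
    have hYe : Y₀' \ Y' = ∅ := card_eq_zero.1 (by omega)
    have hXs : X \ X₀ = {a} := by
      apply eq_singleton_iff_unique_mem.2
      refine ⟨hamem, fun x hx => ?_⟩
      by_contra hxa
      have : 2 ≤ (X \ X₀).card := by
        have := one_lt_card.2 ⟨x, hx, a, hamem, hxa⟩
        omega
      omega
    have hd' := dc_symm h1L h1R n X₀ Y₀' X Y' h₀ h (by
      rw [hXs, hYe] at hd ⊢
      simpa using hd)
    rcases Nat.eq_zero_or_pos (X₀ \ X).card with hc1 | hc1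
    · -- X₀ = X.erase a, Y₀' = Y'.erase b₂
      have hY'c : (Y' \ Y₀').card = 1 := by omega
      obtain ⟨b₂, hbs⟩ := card_eq_one.1 hY'c
      have hXeq : X₀ = X.erase a := recon_erase hXs (card_eq_zero.1 hc1)
      have hYeq : Y₀' = Y'.erase b₂ := recon_erase hbs hYe
      have hb1 : b₂ ∈ Y' ∧ b₂ ∉ Y₀' := mem_sdiff.1 (hbs ▸ mem_singleton_self b₂)
      exact Or.inr ⟨b₂, hb1.1, hb1.2, by rw [← hXeq, ← hYeq]; exact h₀⟩
    · -- X₀ = insert a₂ (X.erase a), Y₀' = Y'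
      have hXc : (X₀ \ X).card = 1 := by omega
      obtain ⟨a₂, has⟩ := card_eq_one.1 hXc
      have hY'e : Y' \ Y₀' = ∅ := card_eq_zero.1 (by omega)
      have hXeq : X₀ = insert a₂ (X.erase a) := recon_swap hXs has
      have hYeq : Y₀' = Y' := recon_eq hY'e hYe
      have ha2 : a₂ ∈ X₀ ∧ a₂ ∉ X := mem_sdiff.1 (has ▸ mem_singleton_self a₂)
      exact Or.inl ⟨a₂, ha2.2, ha2.1, by rw [← hXeq, ← hYeq]; exact h₀⟩
  · -- step
    rcases Nat.eq_zero_or_pos (Y₀' \ Y').card with hc1 | hc1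
    · -- pick a₃ ∈ (X \ X₀).erase a
      have : 0 < ((X \ X₀).erase a).card := by
        rw [card_erase_of_mem hamem]; omega
      obtain ⟨a₃, ha₃⟩ := card_pos.1 this
      have ha₃a : a₃ ≠ a := (mem_erase.1 ha₃).1
      have ha₃m : a₃ ∈ X ∧ a₃ ∉ X₀ := mem_sdiff.1 (mem_erase.1 ha₃).2
      rcases h1L h₀ h ha₃m.2 ha₃m.1 with ⟨a₂, ha1, ha2, hq⟩ | ⟨b₂, hb1, hb2, hq⟩
      · -- q = (insert a₃ (X₀.erase a₂), Y₀'), a₂ ∈ X₀ \ X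
        set X₁ := insert a₃ (X₀.erase a₂) with hX₁
        have e1 : X \ X₁ = (X \ X₀).erase a₃ := by
          ext x
          rcases eq_or_ne x a₃ with rfl | hx1
          · simp [hX₁]
          rcases eq_or_ne x a₂ with rfl | hx2
          · simp [hX₁, ha2, hx1]
          · simp [hX₁, hx1, hx2]
        have c1 : (X \ X₁).card + (Y₀' \ Y').card = n - 1 := by
          rw [e1, card_erase_of_mem (mem_erase.1 ha₃).2]; omega
        have haX₁ : a ∉ X₁ := by
          simp only [hX₁, mem_insert, mem_erase]
          push_neg
          exact ⟨Ne.symm ha₃a, fun _ => ha₀⟩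
        rcases IH (n-1) (by omega) X Y' _ _ h hq c1 ha haX₁
          with ⟨a'', ha''1, ha''2, hw⟩ | ⟨b'', hb''1, hb''2, hw⟩
        · refine Or.inl ⟨a'', ha''1, ?_, hw⟩
          have hne : a'' ≠ a₃ := by rintro rfl; exact ha''1 ha₃m.1
          rcases mem_insert.1 ha''2 with h' | h'
          · exact absurd h' hne
          · exact mem_of_mem_erase h'
        · exact Or.inr ⟨b'', hb''1, hb''2, hw⟩
      · -- q = (insert a₃ X₀, insert b₂ Y₀'), b₂ ∈ Y' \ Y₀'
        have e1 : X \ insert a₃ X₀ = (X \ X₀).erase a₃ := by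
          ext x; rcases eq_or_ne x a₃ with rfl | hx <;> simp [*]
        have e2 : insert b₂ Y₀' \ Y' = Y₀' \ Y' := by
          ext x; rcases eq_or_ne x b₂ with rfl | hx <;> simp [*]
        have c1 : (X \ insert a₃ X₀).card + (insert b₂ Y₀' \ Y').card = n - 1 := by
          rw [e1, e2, card_erase_of_mem (mem_erase.1 ha₃).2]; omega
        have haX₁ : a ∉ insert a₃ X₀ := by
          simp only [mem_insert]
          push_neg
          exact ⟨Ne.symm ha₃a, ha₀⟩
        rcases IH (n-1) (by omega) X Y' _ _ h hq c1 ha haX₁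
          with ⟨a'', ha''1, ha''2, hw⟩ | ⟨b'', hb''1, hb''2, hw⟩
        · refine Or.inl ⟨a'', ha''1, ?_, hw⟩
          have hne : a'' ≠ a₃ := by rintro rfl; exact ha''1 ha₃m.1
          rcases mem_insert.1 ha''2 with h' | h'
          · exact absurd h' hne
          · exact h'
        · exact Or.inr ⟨b'', hb''1, fun hmem => hb''2 (mem_insert_of_mem hmem), hw⟩
    · -- pick b₃ ∈ Y₀' \ Y'
      obtain ⟨b₃, hb₃⟩ := card_pos.1 hc1
      have hb₃m : b₃ ∈ Y₀' ∧ b₃ ∉ Y' := mem_sdiff.1 hb₃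
      rcases h1R h₀ h hb₃m.1 hb₃m.2 with ⟨a₂, ha1, ha2, hq⟩ | ⟨b₂, hb1, hb2, hq⟩
      · -- q = (X₀.erase a₂, Y₀'.erase b₃), a₂ ∈ X₀ \ X
        have e1 : X \ X₀.erase a₂ = X \ X₀ := by
          ext x; rcases eq_or_ne x a₂ with rfl | hx <;> simp [*]
        have e2 : Y₀'.erase b₃ \ Y' = (Y₀' \ Y').erase b₃ := by
          ext x; rcases eq_or_ne x b₃ with rfl | hx <;> simp [*, hb₃m.2]
        have c1 : (X \ X₀.erase a₂).card + (Y₀'.erase b₃ \ Y').card = n - 1 := by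
          rw [e1, e2, card_erase_of_mem hb₃]; omega
        have haX₁ : a ∉ X₀.erase a₂ := fun hmem => ha₀ (mem_of_mem_erase hmem)
        rcases IH (n-1) (by omega) X Y' _ _ h hq c1 ha haX₁
          with ⟨a'', ha''1, ha''2, hw⟩ | ⟨b'', hb''1, hb''2, hw⟩
        · exact Or.inl ⟨a'', ha''1, mem_of_mem_erase ha''2, hw⟩
        · refine Or.inr ⟨b'', hb''1, fun hmem => hb''2 (mem_erase.2 ⟨?_, hmem⟩), hw⟩
          rintro rfl; exact hb₃m.2 hb''1
      · -- q = (X₀, insert b₂ (Y₀'.erase b₃)), b₂ ∈ Y' \ Y₀'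
        have e2 : insert b₂ (Y₀'.erase b₃) \ Y' = (Y₀' \ Y').erase b₃ := by
          ext x
          rcases eq_or_ne x b₂ with rfl | hx1
          · simp [hb1]
          rcases eq_or_ne x b₃ with rfl | hx2 <;> simp [*, hb₃m.2]
        have c1 : (X \ X₀).card + ((insert b₂ (Y₀'.erase b₃)) \ Y').card = n - 1 := by
          rw [e2, card_erase_of_mem hb₃]; omega
        rcases IH (n-1) (by omega) X Y' _ _ h hq c1 ha ha₀
          with ⟨a'', ha''1, ha''2, hw⟩ | ⟨b'', hb''1, hb''2, hw⟩
        · exact Or.inl ⟨a'', ha''1, ha''2, hw⟩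
        · refine Or.inr ⟨b'', hb''1, fun hmem => hb''2 ?_, hw⟩
          refine mem_insert_of_mem (mem_erase.2 ⟨?_, hmem⟩)
          rintro rfl; exact hb₃m.2 hb''1

lemma exch_E3L (hr : ExchAxiom r) : E3L r := by
  intro X Y' X₀ Y₀' h h₀ a ha ha₀
  exact E3L_of (exch_E1L hr) (exch_E1R hr) ((X \ X₀).card + (Y₀' \ Y').card)
    X Y' X₀ Y₀' h h₀ rfl ha ha₀

lemma exch_E3R (hr : ExchAxiom r) : E3R r := by
  intro X Y' X₀ Y₀' h h₀ b hb hb₀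
  exact E3R_of (exch_E1L hr) (exch_E1R hr) ((X \ X₀).card + (Y₀' \ Y').card)
    X Y' X₀ Y₀' h h₀ rfl hb hb₀

end Ederive
end wgtsec

section main
variable {A B C D : Type*} [DecidableEq A] [DecidableEq B] [DecidableEq C] [DecidableEq D]

lemma exists_beta {β : Type*} [DecidableEq β] {Y Y' Y₀ Y₀' : Finset β}
    (h : wgt Y₀ Y₀' < wgt Y Y') :
    ∃ b, ((b ∈ Y ∧ b ∉ Y') ∨ (b ∈ Y' ∧ b ∉ Y)) ∧ (b ∈ Y₀ ↔ b ∈ Y₀') := by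
  by_contra hc
  push_neg at hc
  have hsub : (Y \ Y') ∪ (Y' \ Y) ⊆ (Y₀ \ Y₀') ∪ (Y₀' \ Y₀) := by
    intro x hx
    rw [mem_union, mem_sdiff, mem_sdiff] at hx
    have h2 := hc x hx
    rw [mem_union, mem_sdiff, mem_sdiff]
    rcases h2 with ⟨ha, hb⟩ | ⟨ha, hb⟩
    · exact Or.inl ⟨ha, hb⟩
    · exact Or.inr ⟨hb, ha⟩
  have hle := card_le_card hsub
  rw [card_union_of_disjoint (disjoint_sdiff_sdiff), card_union_of_disjoint (disjoint_sdiff_sdiff)] at hle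
  have h3 : wgt Y Y' ≤ wgt Y₀ Y₀' := hle
  omega

theorem step {r : Finset A → Finset B → Prop} {s : Finset B → Finset C → Prop}
    (h1Rr : E1R r) (h3Rr : E3R r) (h1Ls : E1L s) (h3Ls : E3L s)
    (Z : Finset C) (N T12 : ℕ)
    {X₀ Y₀' Y₀ Z₀' : _} (hm1 : r X₀ Y₀') (hm2 : s Y₀ Z₀') (hmw : wgt Y₀ Y₀' = T12)
    (hNlb : ∀ X' Y₁' Y₁ Z₁', r X' Y₁' → s Y₁ Z₁' → N ≤ wgt Y₁ Y₁' + wgt Z Z₁') :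
    ∀ n : ℕ, ∀ X Y' Y Z', wgt Y Y₀ + wgt Y' Y₀' + wgt Z' Z₀' ≤ n →
      r X Y' → s Y Z' → wgt Y Y' + wgt Z Z' = N → T12 < wgt Y Y' →
      ∃ Y₁' Y₁ Z₁', r X Y₁' ∧ s Y₁ Z₁' ∧ wgt Y₁ Y₁' + wgt Z Z₁' = N ∧
        wgt Y₁ Y₁' < wgt Y Y' := by
  intro n
  induction n using Nat.strong_induction_on with
  | _ n IH =>
  intro X Y' Y Z' hΦ hc1 hc2 htot hw
  have hlt : wgt Y₀ Y₀' < wgt Y Y' := by rw [hmw]; exact hw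
  obtain ⟨β, hβ1, hβ2⟩ := exists_beta hlt
  rcases hβ1 with ⟨hβY, hβY'⟩ | ⟨hβY', hβY⟩
  · -- case 2 : β ∈ Y \ Y'
    by_cases hβ₀ : β ∈ Y₀'
    · -- case 2a : use E3R on r
      have hβ₀Y : β ∈ Y₀ := hβ2.2 hβ₀
      rcases h3Rr hc1 hm1 hβY' hβ₀ with ⟨a, ha1, ha2, hq⟩ | ⟨b'', hb1, hb2, hq⟩
      · -- contra: chain at (insert a X) with total N-1
        exfalso
        have e1 : wgt Y (insert β Y') + 1 = wgt Y Y' := by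
          rw [wgt_comm Y (insert β Y'), wgt_comm Y Y']
          exact wgt_insert_mem hβY' hβY
        have := hNlb _ _ _ _ hq hc2
        omega
      · -- Y₁' := insert β (Y'.erase b'')
        have hberase : β ∉ Y'.erase b'' := fun h => hβY' (mem_of_mem_erase h)
        by_cases hb''Y : b'' ∈ Y
        · -- sideways : w₁ same, Φ drops
          have e1 : wgt (Y'.erase b'') Y = wgt Y' Y + 1 := wgt_erase_mem hb1 hb''Y
          have e2 : wgt (insert β (Y'.erase b'')) Y + 1 = wgt (Y'.erase b'') Y :=
            wgt_insert_mem hberase hβY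
          have e3 : wgt (Y'.erase b'') Y₀' + 1 = wgt Y' Y₀' := wgt_erase_not_mem hb1 hb2
          have e4 : wgt (insert β (Y'.erase b'')) Y₀' + 1 = wgt (Y'.erase b'') Y₀' :=
            wgt_insert_mem hberase hβ₀
          have hw1 : wgt Y (insert β (Y'.erase b'')) = wgt Y Y' := by
            rw [wgt_comm Y _, wgt_comm Y Y']; omega
          obtain ⟨Y₁', Y₁, Z₁', hr1, hr2, hr3, hr4⟩ :=
            IH (n-1) (by omega) X (insert β (Y'.erase b'')) Y Z' (by omega) hq hc2
              (by rw [hw1]; exact htot) (by rw [hw1]; exact hw)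
          exact ⟨Y₁', Y₁, Z₁', hr1, hr2, hr3, by rw [← hw1]; exact hr4⟩
        · -- contra: w₁ drops by 2
          exfalso
          have e1 : wgt (Y'.erase b'') Y + 1 = wgt Y' Y := wgt_erase_not_mem hb1 hb''Y
          have e2 : wgt (insert β (Y'.erase b'')) Y + 1 = wgt (Y'.erase b'') Y :=
            wgt_insert_mem hberase hβY
          have := hNlb _ _ _ _ hq hc2
          rw [wgt_comm] at this
          rw [wgt_comm Y Y'] at htot
          omega
    · -- case 2b : β ∉ Y₀' hence β ∉ Y₀ ; use E3L on s
      have hβ₀Y : β ∉ Y₀ := fun h => hβ₀ (hβ2.1 h)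
      rcases h3Ls hc2 hm2 hβY hβ₀Y with ⟨b', hb1, hb2, hq⟩ | ⟨cc, hc1', hc2', hq⟩
      · -- Y₁ := insert b' (Y.erase β)
        have hberase : b' ∉ Y.erase β := fun h => hb1 (mem_of_mem_erase h)
        by_cases hb'Y' : b' ∈ Y'
        · -- contra : w₁ drops by 2
          exfalso
          have e1 : wgt (Y.erase β) Y' + 1 = wgt Y Y' := wgt_erase_not_mem hβY hβY'
          have e2 : wgt (insert b' (Y.erase β)) Y' + 1 = wgt (Y.erase β) Y' :=
            wgt_insert_mem hberase hb'Y'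
          have := hNlb _ _ _ _ hc1 hq
          omega
        · -- sideways : Φ drops
          have e1 : wgt (Y.erase β) Y' + 1 = wgt Y Y' := wgt_erase_not_mem hβY hβY'
          have e2 : wgt (insert b' (Y.erase β)) Y' = wgt (Y.erase β) Y' + 1 :=
            wgt_insert_not_mem hberase hb'Y'
          have e3 : wgt (Y.erase β) Y₀ + 1 = wgt Y Y₀ := wgt_erase_not_mem hβY hβ₀Y
          have e4 : wgt (insert b' (Y.erase β)) Y₀ + 1 = wgt (Y.erase β) Y₀ :=
            wgt_insert_mem hberase hb2
          have hw1 : wgt (insert b' (Y.erase β)) Y' = wgt Y Y' := by omega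
          obtain ⟨Y₁', Y₁, Z₁', hr1, hr2, hr3, hr4⟩ :=
            IH (n-1) (by omega) X Y' (insert b' (Y.erase β)) Z' (by omega) hc1 hq
              (by rw [hw1]; exact htot) (by rw [hw1]; exact hw)
          exact ⟨Y₁', Y₁, Z₁', hr1, hr2, hr3, by rw [← hw1]; exact hr4⟩
      · -- DONE or contra : (Y.erase β, Z'.erase cc)
        have e1 : wgt (Y.erase β) Y' + 1 = wgt Y Y' := wgt_erase_not_mem hβY hβY'
        by_cases hccZ : cc ∈ Z
        · -- DONE
          have e2 : wgt (Z'.erase cc) Z = wgt Z' Z + 1 := wgt_erase_mem hc1' hccZ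
          refine ⟨Y', Y.erase β, Z'.erase cc, hc1, hq, ?_, by omega⟩
          have e3 : wgt Z (Z'.erase cc) = wgt (Z'.erase cc) Z := wgt_comm _ _
          have e4 : wgt Z Z' = wgt Z' Z := wgt_comm _ _
          omega
        · -- contra : total drops by 2
          exfalso
          have e2 : wgt (Z'.erase cc) Z + 1 = wgt Z' Z := wgt_erase_not_mem hc1' hccZ
          have := hNlb _ _ _ _ hc1 hq
          rw [wgt_comm Z _] at this
          rw [wgt_comm Z Z'] at htot
          omega
  · -- case 1 : β ∈ Y' \ Y
    by_cases hβ₀ : β ∈ Y₀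
    · -- case 1a : use E1L on s
      rcases h1Ls hc2 hm2 hβY hβ₀ with ⟨b', hb1, hb2, hq⟩ | ⟨cc, hc1', hc2', hq⟩
      · -- Y₁ := insert β (Y.erase b')
        have hberase : β ∉ Y.erase b' := fun h => hβY (mem_of_mem_erase h)
        by_cases hb'Y' : b' ∈ Y'
        · -- sideways: Φ drops
          have e1 : wgt (Y.erase b') Y' = wgt Y Y' + 1 := wgt_erase_mem hb1 hb'Y'
          have e2 : wgt (insert β (Y.erase b')) Y' + 1 = wgt (Y.erase b') Y' :=
            wgt_insert_mem hberase hβY'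
          have e3 : wgt (Y.erase b') Y₀ + 1 = wgt Y Y₀ := wgt_erase_not_mem hb1 hb2
          have e4 : wgt (insert β (Y.erase b')) Y₀ + 1 = wgt (Y.erase b') Y₀ :=
            wgt_insert_mem hberase hβ₀
          have hw1 : wgt (insert β (Y.erase b')) Y' = wgt Y Y' := by omega
          obtain ⟨Y₁', Y₁, Z₁', hr1, hr2, hr3, hr4⟩ :=
            IH (n-1) (by omega) X Y' (insert β (Y.erase b')) Z' (by omega) hc1 hq
              (by rw [hw1]; exact htot) (by rw [hw1]; exact hw)
          exact ⟨Y₁', Y₁, Z₁', hr1, hr2, hr3, by rw [← hw1]; exact hr4⟩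
        · -- contra: w₁ drops 2
          exfalso
          have e1 : wgt (Y.erase b') Y' + 1 = wgt Y Y' := wgt_erase_not_mem hb1 hb'Y'
          have e2 : wgt (insert β (Y.erase b')) Y' + 1 = wgt (Y.erase b') Y' :=
            wgt_insert_mem hberase hβY'
          have := hNlb _ _ _ _ hc1 hq
          omega
      · -- DONE or contra : (insert β Y, insert cc Z')
        have e1 : wgt (insert β Y) Y' + 1 = wgt Y Y' := wgt_insert_mem hβY hβY'
        by_cases hccZ : cc ∈ Z
        · -- contra
          exfalso
          have e2 : wgt (insert cc Z') Z + 1 = wgt Z' Z := wgt_insert_mem hc2' hccZ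
          have := hNlb _ _ _ _ hc1 hq
          rw [wgt_comm Z _] at this
          rw [wgt_comm Z Z'] at htot
          omega
        · -- DONE
          have e2 : wgt (insert cc Z') Z = wgt Z' Z + 1 := wgt_insert_not_mem hc2' hccZ
          refine ⟨Y', insert β Y, insert cc Z', hc1, hq, ?_, by omega⟩
          have e3 : wgt Z (insert cc Z') = wgt (insert cc Z') Z := wgt_comm _ _
          have e4 : wgt Z Z' = wgt Z' Z := wgt_comm _ _
          omega
    · -- case 1b : β ∉ Y₀, β ∉ Y₀' ; use E1R on r
      have hβ₀' : β ∉ Y₀' := fun h => hβ₀ (hβ2.2 h)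
      rcases h1Rr hc1 hm1 hβY' hβ₀' with ⟨a, ha1, ha2, hq⟩ | ⟨b'', hb1, hb2, hq⟩
      · -- contra : chain at (X.erase a) with total N-1
        exfalso
        have e1 : wgt (Y'.erase β) Y + 1 = wgt Y' Y := wgt_erase_not_mem hβY' hβY
        have := hNlb _ _ _ _ hq hc2
        rw [wgt_comm Y _] at this
        rw [wgt_comm Y Y'] at htot
        omega
      · -- Y₁' := insert b'' (Y'.erase β)
        have hberase : b'' ∉ Y'.erase β := fun h => hb2 (mem_of_mem_erase h)
        by_cases hb''Y : b'' ∈ Y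
        · -- contra : w₁ drops 2
          exfalso
          have e1 : wgt (Y'.erase β) Y + 1 = wgt Y' Y := wgt_erase_not_mem hβY' hβY
          have e2 : wgt (insert b'' (Y'.erase β)) Y + 1 = wgt (Y'.erase β) Y :=
            wgt_insert_mem hberase hb''Y
          have := hNlb _ _ _ _ hq hc2
          rw [wgt_comm Y _] at this
          rw [wgt_comm Y Y'] at htot
          omega
        · -- sideways : Φ drops
          have e1 : wgt (Y'.erase β) Y + 1 = wgt Y' Y := wgt_erase_not_mem hβY' hβY
          have e2 : wgt (insert b'' (Y'.erase β)) Y = wgt (Y'.erase β) Y + 1 :=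
            wgt_insert_not_mem hberase hb''Y
          have e3 : wgt (Y'.erase β) Y₀' + 1 = wgt Y' Y₀' := wgt_erase_not_mem hβY' hβ₀'
          have e4 : wgt (insert b'' (Y'.erase β)) Y₀' + 1 = wgt (Y'.erase β) Y₀' :=
            wgt_insert_mem hberase hb1
          have hw1 : wgt Y (insert b'' (Y'.erase β)) = wgt Y Y' := by
            rw [wgt_comm Y _, wgt_comm Y Y']; omega
          obtain ⟨Y₁', Y₁, Z₁', hr1, hr2, hr3, hr4⟩ :=
            IH (n-1) (by omega) X (insert b'' (Y'.erase β)) Y Z' (by omega) hq hc2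
              (by rw [hw1]; exact htot) (by rw [hw1]; exact hw)
          exact ⟨Y₁', Y₁, Z₁', hr1, hr2, hr3, by rw [← hw1]; exact hr4⟩
lemma totalType_set_eq (r : Finset A → Finset B → Prop) (s : Finset B → Finset C → Prop) :
    {m | ∃ k l, k + l = m ∧ ∃ X Z, BComp r s k l X Z} =
    {m | ∃ X Y' Y Z, r X Y' ∧ s Y Z ∧ wgt Y Y' = m} := by
  ext m
  constructor
  · rintro ⟨k, l, rfl, X, Z, Y, Y', h1, h2, hk, hl⟩
    exact ⟨X, Y', Y, Z, h1, h2, by simp [wgt, hk, hl]⟩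
  · rintro ⟨X, Y', Y, Z, h1, h2, rfl⟩
    exact ⟨(Y \ Y').card, (Y' \ Y).card, rfl, X, Z, Y, Y', h1, h2, rfl, rfl⟩

lemma tt_le {r : Finset A → Finset B → Prop} {s : Finset B → Finset C → Prop}
    {X Y' Y Z} (h1 : r X Y') (h2 : s Y Z) : totalType r s ≤ wgt Y Y' := by
  rw [totalType, totalType_set_eq]
  exact Nat.sInf_le ⟨X, Y', Y, Z, h1, h2, rfl⟩

lemma tt_att {r : Finset A → Finset B → Prop} {s : Finset B → Finset C → Prop}
    (hrne : ∃ X Y, r X Y) (hsne : ∃ Y Z, s Y Z) :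
    ∃ X Y' Y Z, r X Y' ∧ s Y Z ∧ wgt Y Y' = totalType r s := by
  obtain ⟨X, Y', h1⟩ := hrne
  obtain ⟨Y, Z, h2⟩ := hsne
  have hne : {m | ∃ X Y' Y Z, r X Y' ∧ s Y Z ∧ wgt Y Y' = m}.Nonempty :=
    ⟨wgt Y Y', X, Y', Y, Z, h1, h2, rfl⟩
  have := Nat.sInf_mem hne
  rw [totalType, totalType_set_eq]
  exact this

lemma laxcomp_iff {r : Finset A → Finset B → Prop} {s : Finset B → Finset C → Prop}
    {X Z} : LaxComp r s X Z ↔ ∃ Y Y', r X Y' ∧ s Y Z ∧ wgt Y Y' = totalType r s := by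
  constructor
  · rintro ⟨k, l, hkl, Y, Y', h1, h2, hk, hl⟩
    exact ⟨Y, Y', h1, h2, by simp [wgt, hk, hl, hkl]⟩
  · rintro ⟨Y, Y', h1, h2, hw⟩
    exact ⟨(Y \ Y').card, (Y' \ Y).card, hw, Y, Y', h1, h2, rfl, rfl⟩

lemma flip_lax (r : Finset A → Finset B → Prop) (s : Finset B → Finset C → Prop) :
    flipRel (LaxComp r s) = LaxComp (flipRel s) (flipRel r) := by
  have htt : totalType (flipRel s) (flipRel r) = totalType r s := by
    rw [totalType, totalType, totalType_set_eq, totalType_set_eq]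
    congr 1
    ext m
    constructor
    · rintro ⟨Z, Y', Y, X, h1, h2, rfl⟩
      exact ⟨X, Y, Y', Z, h2, h1, wgt_comm _ _⟩
    · rintro ⟨X, Y', Y, Z, h1, h2, rfl⟩
      exact ⟨Z, Y, Y', X, h2, h1, wgt_comm _ _⟩
  funext Z X
  apply propext
  rw [show flipRel (LaxComp r s) Z X = LaxComp r s X Z from rfl, laxcomp_iff, laxcomp_iff, htt]
  constructor
  · rintro ⟨Y, Y', h1, h2, hw⟩
    exact ⟨Y', Y, h2, h1, by rw [wgt_comm]; exact hw⟩
  · rintro ⟨Y, Y', h1, h2, hw⟩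
    exact ⟨Y', Y, h2, h1, by rw [wgt_comm]; exact hw⟩

/-- the triple-chain minimal total -/
noncomputable def T3 (r : Finset A → Finset B → Prop) (s : Finset B → Finset C → Prop)
    (t : Finset C → Finset D → Prop) : ℕ :=
  sInf {m | ∃ X Y' Y Z' Z W, r X Y' ∧ s Y Z' ∧ t Z W ∧ wgt Y Y' + wgt Z Z' = m}

lemma t3_le {r : Finset A → Finset B → Prop} {s : Finset B → Finset C → Prop}
    {t : Finset C → Finset D → Prop} {X Y' Y Z' Z W}
    (h1 : r X Y') (h2 : s Y Z') (h3 : t Z W) :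
    T3 r s t ≤ wgt Y Y' + wgt Z Z' :=
  Nat.sInf_le ⟨X, Y', Y, Z', Z, W, h1, h2, h3, rfl⟩

lemma t3_att {r : Finset A → Finset B → Prop} {s : Finset B → Finset C → Prop}
    {t : Finset C → Finset D → Prop}
    (hrne : ∃ X Y, r X Y) (hsne : ∃ Y Z, s Y Z) (htne : ∃ Z W, t Z W) :
    ∃ X Y' Y Z' Z W, r X Y' ∧ s Y Z' ∧ t Z W ∧ wgt Y Y' + wgt Z Z' = T3 r s t := by
  obtain ⟨X, Y', h1⟩ := hrne
  obtain ⟨Y, Z', h2⟩ := hsne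
  obtain ⟨Z, W, h3⟩ := htne
  have hne : {m | ∃ X Y' Y Z' Z W, r X Y' ∧ s Y Z' ∧ t Z W ∧ wgt Y Y' + wgt Z Z' = m}.Nonempty :=
    ⟨wgt Y Y' + wgt Z Z', ⟨X, Y', Y, Z', Z, W, h1, h2, h3, rfl⟩⟩
  exact Nat.sInf_mem hne

/-- reduce the B-interface weight of a T3-minimal triple chain down to totalType r s,
keeping X, Z, total. -/
lemma reduce {r : Finset A → Finset B → Prop} {s : Finset B → Finset C → Prop}
    {t : Finset C → Finset D → Prop}
    (h1Rr : E1R r) (h3Rr : E3R r) (h1Ls : E1L s) (h3Ls : E3L s)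
    (hrne : ∃ X Y, r X Y) (hsne : ∃ Y Z, s Y Z) :
    ∀ n : ℕ, ∀ X Y' Y Z' Z W, wgt Y Y' ≤ n →
      r X Y' → s Y Z' → t Z W → wgt Y Y' + wgt Z Z' = T3 r s t →
      ∃ Y₁' Y₁ Z₁', r X Y₁' ∧ s Y₁ Z₁' ∧ wgt Y₁ Y₁' + wgt Z Z₁' = T3 r s t ∧
        wgt Y₁ Y₁' = totalType r s := by
  intro n
  induction n using Nat.strong_induction_on with
  | _ n IH =>
  intro X Y' Y Z' Z W hn h1 h2 h3 htot
  rcases Nat.eq_or_lt_of_le (tt_le h1 h2) with heq | hlt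
  · exact ⟨Y', Y, Z', h1, h2, htot, heq.symm⟩
  · obtain ⟨X₀, Y₀', Y₀, Z₀', hm1, hm2, hmw⟩ := tt_att hrne hsne
    obtain ⟨Y₁', Y₁, Z₁', hr1, hr2, hr3, hr4⟩ :=
      step h1Rr h3Rr h1Ls h3Ls Z (T3 r s t) (totalType r s) hm1 hm2 hmw
        (fun X' Y₁' Y₁ Z₁' hh1 hh2 => t3_le hh1 hh2 h3)
        (wgt Y Y₀ + wgt Y' Y₀' + wgt Z' Z₀') X Y' Y Z' le_rfl h1 h2 htot hlt
    exact IH (wgt Y₁ Y₁') (by omega) X Y₁' Y₁ Z₁' Z W le_rfl hr1 hr2 h3 hr3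

/-- the half theorem -/
theorem halfThm {r : Finset A → Finset B → Prop} {s : Finset B → Finset C → Prop}
    {t : Finset C → Finset D → Prop}
    (h1Rr : E1R r) (h3Rr : E3R r) (h1Ls : E1L s) (h3Ls : E3L s)
    (hrne : ∃ X Y, r X Y) (hsne : ∃ Y Z, s Y Z) (htne : ∃ Z W, t Z W) :
    ∀ X W, LaxComp (LaxComp r s) t X W ↔
      (∃ Y' Y Z' Z, r X Y' ∧ s Y Z' ∧ t Z W ∧ wgt Y Y' + wgt Z Z' = T3 r s t) := by
  have hT12 := tt_att hrne hsne
  -- key : totalType r s + totalType (LaxComp r s) t = T3 r s t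
  have hUlb : ∀ X Z' Z W, LaxComp r s X Z' → t Z W →
      wgt Z Z' + totalType r s ≥ T3 r s t := by
    intro X Z' Z W hU ht
    obtain ⟨Y, Y', h1, h2, hw⟩ := laxcomp_iff.1 hU
    have := t3_le h1 h2 ht
    omega
  have hkey : totalType r s + totalType (LaxComp r s) t = T3 r s t := by
    obtain ⟨X, Y', Y, Z', Z, W, h1, h2, h3, htot⟩ := t3_att hrne hsne htne
    obtain ⟨Y₁', Y₁, Z₁', hr1, hr2, hr3, hr4⟩ :=
      reduce h1Rr h3Rr h1Ls h3Ls hrne hsne (wgt Y Y') X Y' Y Z' Z W le_rfl h1 h2 h3 htot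
    -- U X Z₁' with weight wgt Z Z₁' = T3 - T12
    have hU : LaxComp r s X Z₁' := laxcomp_iff.2 ⟨Y₁, Y₁', hr1, hr2, hr4⟩
    have hle : totalType (LaxComp r s) t ≤ wgt Z Z₁' := tt_le hU h3
    have hge := hUlb X Z₁' Z W hU h3
    -- also lower bound : T3 ≤ T12 + Tl via attained Tl chain
    have hUne : ∃ X Z, LaxComp r s X Z := ⟨X, Z₁', hU⟩
    obtain ⟨X₂, Z₂', Z₂, W₂, hu2, ht2, hw2⟩ := tt_att hUne htne
    obtain ⟨Y₂, Y₂', hs1, hs2, hs3⟩ := laxcomp_iff.1 hu2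
    have := t3_le hs1 hs2 ht2
    omega
  intro X W
  constructor
  · rintro hL
    obtain ⟨Z, Z', hU, ht, hw⟩ := laxcomp_iff.1 hL
    obtain ⟨Y, Y', h1, h2, hYw⟩ := laxcomp_iff.1 hU
    refine ⟨Y', Y, Z', Z, h1, h2, ht, ?_⟩
    omega
  · rintro ⟨Y', Y, Z', Z, h1, h2, h3, htot⟩
    obtain ⟨Y₁', Y₁, Z₁', hr1, hr2, hr3, hr4⟩ :=
      reduce h1Rr h3Rr h1Ls h3Ls hrne hsne (wgt Y Y') X Y' Y Z' Z W le_rfl h1 h2 h3 htot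
    have hU : LaxComp r s X Z₁' := laxcomp_iff.2 ⟨Y₁, Y₁', hr1, hr2, hr4⟩
    refine laxcomp_iff.2 ⟨Z, Z₁', hU, h3, ?_⟩
    have hle : totalType (LaxComp r s) t ≤ wgt Z Z₁' := tt_le hU h3
    have hge := hUlb X Z₁' Z W hU h3
    omega

lemma t3_flip (r : Finset A → Finset B → Prop) (s : Finset B → Finset C → Prop)
    (t : Finset C → Finset D → Prop) :
    T3 (flipRel t) (flipRel s) (flipRel r) = T3 r s t := by
  unfold T3
  congr 1
  ext m
  constructor
  · rintro ⟨W₁, Z₁, Z₂', Y₂, Y₃', X₃, h1, h2, h3, rfl⟩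
    exact ⟨X₃, Y₃', Y₂, Z₂', Z₁, W₁, h3, h2, h1,
      by rw [wgt_comm Y₂ Y₃', wgt_comm Z₁ Z₂', Nat.add_comm]⟩
  · rintro ⟨X₁, Y₁', Y₁, Z₁', Z₁, W₁, h1, h2, h3, rfl⟩
    exact ⟨W₁, Z₁, Z₁', Y₁, Y₁', X₁, h3, h2, h1,
      by rw [wgt_comm Z₁' Z₁, wgt_comm Y₁' Y₁, Nat.add_comm]⟩

end main
end LaxAssoc

/-- Lax composition of nonempty exchange relations is associative. -/
theorem laxComp_assoc {A B C D : Type*}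
    [DecidableEq A] [DecidableEq B] [DecidableEq C] [DecidableEq D]
    (r : Finset A → Finset B → Prop) (s : Finset B → Finset C → Prop)
    (t : Finset C → Finset D → Prop)
    (hr : ExchAxiom r) (hs : ExchAxiom s) (ht : ExchAxiom t)
    (hrne : ∃ X Y, r X Y) (hsne : ∃ Y Z, s Y Z) (htne : ∃ Z W, t Z W) :
    LaxComp (LaxComp r s) t = LaxComp r (LaxComp s t) := by
  have hL := LaxAssoc.halfThm (LaxAssoc.exch_E1R hr) (LaxAssoc.exch_E3R hr)
    (LaxAssoc.exch_E1L hs) (LaxAssoc.exch_E3L hs) hrne hsne htne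
  have hRflip := LaxAssoc.halfThm (t := LaxAssoc.flipRel r)
    (LaxAssoc.flip_E1R (LaxAssoc.exch_E3L ht)) (LaxAssoc.flip_E3R (LaxAssoc.exch_E1L ht))
    (LaxAssoc.flip_E1L (LaxAssoc.exch_E3R hs)) (LaxAssoc.flip_E3L (LaxAssoc.exch_E1R hs))
    (by obtain ⟨Z, W, h⟩ := htne; exact ⟨W, Z, h⟩)
    (by obtain ⟨Y, Z, h⟩ := hsne; exact ⟨Z, Y, h⟩)
    (by obtain ⟨X, Y, h⟩ := hrne; exact ⟨Y, X, h⟩)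
  funext X W
  apply propext
  rw [hL X W]
  have hR : LaxComp r (LaxComp s t) X W ↔
      LaxComp (LaxComp (LaxAssoc.flipRel t) (LaxAssoc.flipRel s)) (LaxAssoc.flipRel r) W X := by
    have h1 : LaxComp r (LaxComp s t) X W =
        LaxAssoc.flipRel (LaxComp r (LaxComp s t)) W X := rfl
    rw [h1, LaxAssoc.flip_lax, LaxAssoc.flip_lax s t]
  rw [hR, hRflip W X]
  constructor
  · rintro ⟨Y', Y, Z', Z, h1, h2, h3, htot⟩
    refine ⟨Z, Z', Y, Y', h3, h2, h1, ?_⟩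
    rw [LaxAssoc.t3_flip, LaxAssoc.wgt_comm Z' Z, LaxAssoc.wgt_comm Y' Y, Nat.add_comm] at *
    omega
  · rintro ⟨Z, Z', Y, Y', h3, h2, h1, htot⟩
    refine ⟨Y', Y, Z', Z, h1, h2, h3, ?_⟩
    rw [LaxAssoc.t3_flip] at htot
    rw [LaxAssoc.wgt_comm Z' Z, LaxAssoc.wgt_comm Y' Y, Nat.add_comm] at htot
    omega
end
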